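/- arXiv:math/9906027 — 8 statements merged into one kernel-verified Lean document; each statement's English description precedes it below -/
import Mathlib

section
/- With d_{n,s} defined by the recurrence d_{n,n} = 1 and d_{n,s} = -(Σ_{j=s+1}^{n} d_{n,j} b_{j,s}) for 1 ≤ s < n (where b_{r,s} is the coefficient of ξ^s + ξ^{-s} in (ξ + ξ^{-1} - 2)^r), one has d_{n,1} = n² for every positive integer n. -/
open LaurentPolynomial Finset

/-- `bCoef r s` is the coefficient of `ξ^s + ξ^{-s}` (constant term when `s = 0`) in
`(ξ + ξ⁻¹ - 2)^r ∈ ℤ[ξ, ξ⁻¹]`. -/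
noncomputable def bCoef (r s : ℕ) : ℤ :=
  ((T 1 + T (-1) - 2 : LaurentPolynomial ℤ) ^ r).coeff (s : ℤ)

/-- `dCoef n s` is defined by `dCoef n n = 1` and, downward for `s < n`,
`dCoef n s = -(∑_{j=s+1}^{n} dCoef n j * bCoef j s)`. -/
noncomputable def dCoef (n : ℕ) : ℕ → ℤ
  | s =>
    if n ≤ s then 1
    else -(∑ j ∈ (Finset.Ioc s n).attach, dCoef n j.1 * bCoef j.1 s)
  termination_by s => n - s
  decreasing_by
    have := Finset.mem_Ioc.mp j.2
    omega

open Polynomial in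
lemma u_eq : (T 1 + T (-1) - 2 : LaurentPolynomial ℤ) = T (-1) * (T 1 - 1)^2 := by
  have h2 : (T (-1) * (T 1 * T 1) : LaurentPolynomial ℤ) = T 1 := by
    rw [← T_add, ← T_add]; norm_num
  have h0 : (T (-1) * T 1 : LaurentPolynomial ℤ) = 1 := by rw [← T_add]; norm_num
  have : (T (-1) * (T 1 - 1)^2 : LaurentPolynomial ℤ)
      = T (-1) * (T 1 * T 1) - 2 * (T (-1) * T 1) + T (-1) := by ring
  rw [this, h0, h2]; ring

open Polynomial in
lemma toLaurent_coeff (p : ℤ[X]) (k : ℕ) : (toLaurent p).coeff (k : ℤ) = p.coeff k := by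
  rw [LaurentPolynomial.coeff_toLaurent]
  exact Finsupp.mapDomain_apply Nat.castEmbedding.injective p.toFinsupp.coeff k

open Polynomial in
lemma bCoef_eq (r s : ℕ) : bCoef r s = (-1)^(r-s) * (Nat.choose (2*r) (r+s)) := by
  unfold bCoef
  rw [u_eq, mul_pow, ← pow_mul, T_pow]
  have hT : ((T 1 - 1 : LaurentPolynomial ℤ))^(2*r) = toLaurent ((X - 1)^(2*r)) := by
    simp [Polynomial.toLaurent_X]
  rw [hT]
  have hsingle : (T ((r:ℤ) * -1) : LaurentPolynomial ℤ)
      = AddMonoidAlgebra.single ((r:ℤ) * -1) 1 := rfl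
  rw [hsingle, AddMonoidAlgebra.coeff_single_mul_apply, one_mul]
  have : (-((r:ℤ) * -1) + (s:ℤ)) = ((r + s : ℕ) : ℤ) := by push_cast; ring
  rw [this, toLaurent_coeff]
  have : ((X : ℤ[X]) - 1)^(2*r) = (X + Polynomial.C (-1))^(2*r) := by
    rw [map_neg, map_one, ← sub_eq_add_neg]
  rw [this, Polynomial.coeff_X_add_C_pow]
  rcases le_or_gt s r with h | h
  · rw [show 2*r - (r+s) = r - s by omega]
  · rw [Nat.choose_eq_zero_of_lt (by omega)]; simp

lemma bCoef_self (s : ℕ) : bCoef s s = 1 := by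
  rw [bCoef_eq]; simp [show s - s = 0 by omega, show s + s = 2*s by ring]

lemma bCoef_eq_zero (r s : ℕ) (h : r < s) : bCoef r s = 0 := by
  rw [bCoef_eq, Nat.choose_eq_zero_of_lt (by omega)]; simp

/-- `Ec n k` is the conjectured value of `dCoef n (k+1)`. -/
noncomputable def Ec (n k : ℕ) : ℤ :=
  (Nat.choose (n+k+1) (2*k+2) : ℤ) + (Nat.choose (n+k) (2*k+2) : ℤ)

lemma pasc2 (a b : ℕ) :
    (Nat.choose (a+2) (b+2) : ℤ) + Nat.choose a (b+2)
      = Nat.choose a b + 2 * Nat.choose (a+1) (b+2) := by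
  have h1 := Nat.choose_succ_succ (a+1) (b+1)
  have h2 := Nat.choose_succ_succ a b
  have h3 := Nat.choose_succ_succ a (b+1)
  push_cast [h1, h2, h3]
  ring

lemma Ec_rec (m k : ℕ) :
    Ec (m+2) (k+1) + Ec m (k+1) = Ec (m+1) k + 2 * Ec (m+1) (k+1) := by
  unfold Ec
  have h1 := pasc2 (m+k+2) (2*k+2)
  have h2 := pasc2 (m+k+1) (2*k+2)
  have e1 : m+2+(k+1) = m+k+2+1 := by ring
  have e2 : m+(k+1) = m+k+1 := by ring
  have e3 : 2*(k+1)+2 = 2*k+2+2 := by ring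
  have e4 : m+1+k = m+k+1 := by ring
  have e5 : m+1+(k+1) = m+k+2 := by ring
  rw [e1, e2, e3, e4, e5] at *
  push_cast at *
  linarith

lemma Ec_zero (n : ℕ) : Ec n 0 = (n:ℤ)^2 := by
  induction n with
  | zero => simp [Ec]
  | succ n ih =>
      unfold Ec at *
      have h1 : n+1+0+1 = (n+0+1)+1 := by ring
      have h2 : n+1+0 = (n+0)+1 := by ring
      rw [h1, h2, Nat.choose_succ_succ (n+0+1) 1, Nat.choose_succ_succ (n+0) 1]
      rw [Nat.choose_succ_succ (n+0) 1] at ih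
      simp only [Nat.add_zero, Nat.choose_one_right, Nat.mul_zero, Nat.zero_add] at *
      push_cast
      push_cast at ih
      linarith

lemma Ec_vanish (n j : ℕ) (h : n ≤ j) : Ec n j = 0 := by
  unfold Ec
  rw [Nat.choose_eq_zero_of_lt (by omega), Nat.choose_eq_zero_of_lt (by omega)]
  simp

/-- Abbreviation for the base Laurent polynomial `ξ + ξ⁻¹ - 2`. -/
noncomputable def uu : LaurentPolynomial ℤ := T 1 + T (-1) - 2

/-- The conjectured expansion `∑_j Ec n j · u^(j+1)`. -/
noncomputable def SF (n : ℕ) : LaurentPolynomial ℤ := ∑ j ∈ range n, Ec n j • uu^(j+1)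

lemma SF_rec (m : ℕ) : SF (m+2) = (uu + 2) * SF (m+1) - SF m + (2:ℤ) • uu := by
  unfold SF
  have hLHS : ∑ j ∈ range (m+2), Ec (m+2) j • uu^(j+1)
      = (∑ j ∈ range (m+1), (Ec (m+1) j + 2 * Ec (m+1) (j+1) - Ec m (j+1)) • uu^(j+2))
        + ((m:ℤ)+2)^2 • uu := by
    rw [Finset.sum_range_succ']
    congr 1
    · apply Finset.sum_congr rfl
      intro j _
      have := Ec_rec m j
      have h : Ec (m+2) (j+1) = Ec (m+1) j + 2 * Ec (m+1) (j+1) - Ec m (j+1) := by linarith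
      rw [h]
    · rw [Ec_zero]
      push_cast
      norm_num
  rw [hLHS]
  have h2sum : ∑ j ∈ range (m+1), (2 * Ec (m+1) j) • uu^(j+1)
      = (∑ j ∈ range (m+1), (2 * Ec (m+1) (j+1)) • uu^(j+2)) + (2*((m:ℤ)+1)^2) • uu := by
    rw [Finset.sum_range_succ']
    congr 1
    · rw [Finset.sum_range_succ, Ec_vanish (m+1) (m+1) le_rfl]
      simp
    · rw [Ec_zero]; push_cast; norm_num
  have hmsum : ∑ j ∈ range m, Ec m j • uu^(j+1)
      = (∑ j ∈ range (m+1), Ec m (j+1) • uu^(j+2)) + ((m:ℤ)^2) • uu := by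
    have hm : ∑ j ∈ range m, Ec m j • uu^(j+1) = ∑ j ∈ range (m+1), Ec m j • uu^(j+1) := by
      rw [Finset.sum_range_succ, Ec_vanish m m le_rfl]; simp
    rw [hm, Finset.sum_range_succ']
    congr 1
    · rw [Finset.sum_range_succ, Ec_vanish m (m+1) (by omega)]
      simp
    · rw [Ec_zero]; norm_num
  have hmul : (uu + 2) * ∑ j ∈ range (m+1), Ec (m+1) j • uu^(j+1)
      = (∑ j ∈ range (m+1), Ec (m+1) j • uu^(j+2))
        + ∑ j ∈ range (m+1), (2 * Ec (m+1) j) • uu^(j+1) := by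
    rw [add_mul, Finset.mul_sum, Finset.mul_sum]
    congr 1
    · apply Finset.sum_congr rfl
      intro j _
      rw [mul_smul_comm]
      congr 1
      ring
    · apply Finset.sum_congr rfl
      intro j _
      rw [mul_smul_comm]
      rw [show (2 : LaurentPolynomial ℤ) * uu^(j+1) = (2:ℤ) • uu^(j+1) by
            rw [zsmul_eq_mul]; norm_num,
          smul_smul, mul_comm]
  rw [hmul, h2sum, hmsum]
  have hsplit : ∑ j ∈ range (m+1), (Ec (m+1) j + 2 * Ec (m+1) (j+1) - Ec m (j+1)) • uu^(j+2)
      = (∑ j ∈ range (m+1), Ec (m+1) j • uu^(j+2))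
        + (∑ j ∈ range (m+1), (2 * Ec (m+1) (j+1)) • uu^(j+2))
        - ∑ j ∈ range (m+1), Ec m (j+1) • uu^(j+2) := by
    rw [← Finset.sum_add_distrib, ← Finset.sum_sub_distrib]
    apply Finset.sum_congr rfl
    intro j _
    rw [sub_smul, add_smul]
  rw [hsplit]
  have hc : (((m:ℤ)+2)^2) • uu = (2*((m:ℤ)+1)^2) • uu - ((m:ℤ)^2) • uu + (2:ℤ) • uu := by
    rw [← sub_smul, ← add_smul]
    congr 1
    ring
  rw [hc]
  abel

lemma cheb (k : ℤ) : (T (k+1) + T (-(k+1)) : LaurentPolynomial ℤ)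
    = (T 1 + T (-1)) * (T k + T (-k)) - (T (k-1) + T (-(k-1))) := by
  have h1 : (T (k+1) : LaurentPolynomial ℤ) = T k * T 1 := by rw [← T_add]
  have h2 : (T (-(k+1)) : LaurentPolynomial ℤ) = T (-k) * T (-1) := by
    rw [← T_add]; ring_nf
  have h3 : (T (k-1) : LaurentPolynomial ℤ) = T k * T (-1) := by
    rw [← T_add]; ring_nf
  have h4 : (T (-(k-1)) : LaurentPolynomial ℤ) = T (-k) * T 1 := by
    rw [← T_add]; ring_nf
  rw [h1, h2, h3, h4]; ring

lemma SF_eq : ∀ n : ℕ, SF n = T (n:ℤ) + T (-(n:ℤ)) - 2 := by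
  intro n
  induction n using Nat.strong_induction_on with
  | _ n ih =>
    match n with
    | 0 => simp [SF, T_zero]; norm_num
    | 1 =>
        simp only [SF, Finset.range_one, Finset.sum_singleton]
        show Ec 1 0 • uu ^ 1 = _
        norm_num [Ec, uu]
    | (m+2) =>
        rw [SF_rec, ih (m+1) (by omega), ih m (by omega)]
        have hc := cheb ((m:ℤ)+1)
        have e1 : ((m:ℤ)+1+1) = ((m+2:ℕ):ℤ) := by push_cast; ring
        have e2 : ((m:ℤ)+1-1) = ((m:ℕ):ℤ) := by push_cast; ring
        have e3 : ((m:ℤ)+1) = ((m+1:ℕ):ℤ) := by push_cast; ring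
        rw [e1, e2, e3] at hc
        have h2u : (2:ℤ) • uu = 2 * uu := by
          rw [zsmul_eq_mul]; norm_num
        rw [h2u, uu]
        linear_combination -hc

lemma coeff_sum (n s : ℕ) (hs : 1 ≤ s) :
    ∑ j ∈ range n, Ec n j * bCoef (j+1) s = if s = n then 1 else 0 := by
  have h1 : (SF n).coeff ((s:ℕ):ℤ) = ∑ j ∈ range n, Ec n j * bCoef (j+1) s := by
    unfold SF
    rw [AddMonoidAlgebra.coeff_sum, Finset.sum_apply']
    apply Finset.sum_congr rfl
    intro j _
    rw [AddMonoidAlgebra.coeff_smul_apply, smul_eq_mul]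
    rfl
  have h2 : (SF n).coeff ((s:ℕ):ℤ) = if s = n then 1 else 0 := by
    rw [SF_eq]
    rw [AddMonoidAlgebra.coeff_sub, AddMonoidAlgebra.coeff_add, Finsupp.sub_apply, Finsupp.add_apply]
    rw [T_apply, T_apply]
    have : ((2 : LaurentPolynomial ℤ)).coeff ((s:ℕ):ℤ) = 0 := by
      have : (2 : LaurentPolynomial ℤ) = LaurentPolynomial.C 2 := by
        rw [← map_ofNat (LaurentPolynomial.C : ℤ →+* LaurentPolynomial ℤ) 2]
      rw [this, LaurentPolynomial.C_apply, if_neg (by exact_mod_cast by omega)]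
    rw [this]
    have hneg : ¬ (-(n:ℤ) = (s:ℤ)) := by omega
    rw [if_neg hneg]
    by_cases h : s = n
    · subst h; simp
    · rw [if_neg (by exact_mod_cast fun hh => h (by exact_mod_cast hh.symm)), if_neg h]
      ring
  rw [← h1, h2]

lemma Ioc_sum_eq (n s : ℕ) (h1 : 1 ≤ s) (h2 : s < n) :
    Ec n (s-1) = -(∑ j ∈ Finset.Ioc s n, Ec n (j-1) * bCoef j s) := by
  have key := coeff_sum n s h1
  rw [if_neg (by omega)] at key
  have hrange : ∑ j ∈ range n, Ec n j * bCoef (j+1) s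
      = ∑ j ∈ Finset.Ioc 0 n, Ec n (j-1) * bCoef j s := by
    have : Finset.Ioc 0 n = Finset.Ico 1 (n+1) := by
      ext x; simp [Nat.lt_succ_iff]; omega
    rw [this, Finset.sum_Ico_eq_sum_range]
    simp only [Nat.add_sub_cancel]
    apply Finset.sum_congr rfl
    intro j _
    rw [show 1 + j - 1 = j by omega, show 1 + j = j + 1 by omega]
  rw [hrange] at key
  rw [← Finset.sum_Ioc_consecutive _ (Nat.zero_le s) (le_of_lt h2)] at key
  have hsingle : ∑ j ∈ Finset.Ioc 0 s, Ec n (j-1) * bCoef j s = Ec n (s-1) := by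
    rw [Finset.sum_eq_single_of_mem s (Finset.mem_Ioc.mpr ⟨h1, le_rfl⟩)]
    · rw [bCoef_self, mul_one]
    · intro b hb hbs
      rw [bCoef_eq_zero b s (by rcases Finset.mem_Ioc.mp hb with ⟨_, h⟩; omega), mul_zero]
  rw [hsingle] at key
  linarith

lemma d_eq (n : ℕ) : ∀ k s : ℕ, n - s = k → 1 ≤ s → s ≤ n → dCoef n s = Ec n (s-1) := by
  intro k
  induction k using Nat.strong_induction_on with
  | _ k ih =>
    intro s hk h1 h2
    rcases eq_or_lt_of_le h2 with rfl | hlt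
    · rw [dCoef, if_pos le_rfl]
      unfold Ec
      rw [show s+(s-1)+1 = 2*(s-1)+2 by omega]
      rw [Nat.choose_self, Nat.choose_eq_zero_of_lt (by omega)]
      norm_num
    · rw [dCoef, if_neg (by omega), Finset.sum_attach _ (fun j => dCoef n j * bCoef j s)]
      rw [Ioc_sum_eq n s h1 hlt]
      congr 1
      apply Finset.sum_congr rfl
      intro j hj
      rcases Finset.mem_Ioc.mp hj with ⟨hsj, hjn⟩
      rw [ih (n-j) (by omega) j rfl (by omega) hjn]

/-- `d_{n,1} = n²` for every positive integer `n`. -/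
theorem stmt_5 (n : ℕ) (hn : 1 ≤ n) : dCoef n 1 = (n : ℤ) ^ 2 := by
  rw [d_eq n (n-1) 1 rfl le_rfl hn]
  simpa using Ec_zero n
end

section
/- Let p be a prime and let f(x) = 1 + Σ_{i≥1} a_i x^i be a formal power series with rational coefficients. Suppose there exist positive integers α and β such that ν_p(a_α) = -β and ν_p(a_k) > -β·⌊k/α⌋ for all k > α with a_k ≠ 0, and ν_p(a_k) ≥ 0 for k < α (f is a strict D-series at p of type (α, β)). Then for every k ≥ 1, the p-adic valuation of the smallest positive integer e such that f(x)^e has p-integral coefficients modulo x^{k+1} equals max{ β·r + ν_p(r) : 0 ≤ r ≤ ⌊k/α⌋ }, with the convention ν_p(0) = 0 contributing the term r = 0 as 0. -/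
open PowerSeries Finset
set_option linter.unusedSectionVars false
set_option maxHeartbeats 1000000

namespace StrictD
variable {p : ℕ} [hF : Fact p.Prime]

/-- `q = 0` or `v_p(q) ≥ B`. -/
def Vge (p : ℕ) (q : ℚ) (B : ℤ) : Prop := q = 0 ∨ B ≤ padicValRat p q

lemma vge_zero {B : ℤ} : Vge p 0 B := Or.inl rfl

lemma vge_mono {q : ℚ} {B C : ℤ} (h : Vge p q B) (hCB : C ≤ B) : Vge p q C :=
  h.imp id fun h' => le_trans hCB h'

lemma vge_of_ne {q : ℚ} {B : ℤ} (h : Vge p q B) (hq : q ≠ 0) : B ≤ padicValRat p q :=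
  h.resolve_left hq

lemma vge_add {q r : ℚ} {B : ℤ} (hq : Vge p q B) (hr : Vge p r B) : Vge p (q + r) B := by
  rcases hq with rfl | hq
  · simpa using hr
  rcases hr with rfl | hr
  · rw [add_zero]; exact Or.inr hq
  by_cases h : q + r = 0
  · exact Or.inl h
  · exact Or.inr (le_trans (le_min hq hr) (padicValRat.min_le_padicValRat_add (p := p) h))

lemma vge_mul {q r : ℚ} {B C : ℤ} (hq : Vge p q B) (hr : Vge p r C) :
    Vge p (q * r) (B + C) := by
  rcases hq with rfl | hq
  · exact Or.inl (by simp)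
  rcases hr with rfl | hr
  · exact Or.inl (by simp)
  by_cases h0 : q = 0
  · exact Or.inl (by simp [h0])
  by_cases h1 : r = 0
  · exact Or.inl (by simp [h1])
  exact Or.inr (by rw [padicValRat.mul h0 h1]; exact add_le_add hq hr)

lemma vge_sum {ι : Type*} {s : Finset ι} {f : ι → ℚ} {B : ℤ}
    (h : ∀ i ∈ s, Vge p (f i) B) : Vge p (∑ i ∈ s, f i) B := by
  classical
  induction s using Finset.induction_on with
  | empty => simpa using vge_zero
  | @insert a s hni ih =>
    rw [Finset.sum_insert hni]
    exact vge_add (h a (Finset.mem_insert_self a s))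
      (ih fun i hi => h i (Finset.mem_insert_of_mem hi))

lemma vge_prod {ι : Type*} {s : Finset ι} {f : ι → ℚ} {B : ι → ℤ}
    (h : ∀ i ∈ s, Vge p (f i) (B i)) : Vge p (∏ i ∈ s, f i) (∑ i ∈ s, B i) := by
  classical
  induction s using Finset.induction_on with
  | empty => exact Or.inr (by simp)
  | @insert a s hni ih =>
    rw [Finset.prod_insert hni, Finset.sum_insert hni]
    exact vge_mul (h a (Finset.mem_insert_self a s))
      (ih fun i hi => h i (Finset.mem_insert_of_mem hi))

lemma vge_pow {q : ℚ} {B : ℤ} (h : Vge p q B) (s : ℕ) : Vge p (q ^ s) (s * B) := by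
  induction s with
  | zero => exact Or.inr (by simp)
  | succ n ih =>
    have := vge_mul ih h
    rw [pow_succ]
    refine vge_mono this ?_
    push_cast; ring_nf; exact le_refl _

lemma vge_natCast (n : ℕ) : Vge p (n : ℚ) (padicValNat p n) := by
  by_cases h : n = 0
  · exact Or.inl (by simp [h])
  · exact Or.inr (by rw [padicValRat.of_nat])

lemma vge_natCast_zero (n : ℕ) : Vge p (n : ℚ) 0 :=
  vge_mono (vge_natCast n) (by positivity)

lemma vge_one : Vge p (1 : ℚ) 0 := Or.inr (by simp)

lemma vge_neg {q : ℚ} {B : ℤ} (h : Vge p q B) : Vge p (-q) B := by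
  rcases h with rfl | h
  · simpa using vge_zero
  by_cases h0 : q = 0
  · exact Or.inl (by simp [h0])
  · exact Or.inr (by rwa [padicValRat.neg])

lemma vge_sub {q r : ℚ} {B : ℤ} (hq : Vge p q B) (hr : Vge p r B) : Vge p (q - r) B := by
  rw [sub_eq_add_neg]; exact vge_add hq (vge_neg hr)

/-- If `v(q) = B` exactly and `v(r) ≥ B+1` then `q - r ≠ 0` and `v(q-r) = B`. -/
lemma sub_exact {q r : ℚ} {B : ℤ} (hq0 : q ≠ 0) (hq : padicValRat p q = B)
    (hr : Vge p r (B + 1)) : q - r ≠ 0 ∧ padicValRat p (q - r) = B := by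
  rcases hr with rfl | hr
  · simpa using ⟨hq0, hq⟩
  by_cases h0 : r = 0
  · simp [h0, hq0, hq]
  have hne : q - r ≠ 0 := by
    intro h
    have : q = r := by linarith [sub_eq_zero.mp h]
    rw [this] at hq; omega
  refine ⟨hne, ?_⟩
  have h1 : B ≤ padicValRat p (q - r) := by
    have := vge_sub (p := p) (Or.inr hq.ge) (vge_mono (Or.inr hr) (by omega))
    exact vge_of_ne this hne
  by_contra hne2
  have h2 : B + 1 ≤ padicValRat p (q - r) := by omega
  have : Vge p q (B + 1) := by
    have : q = (q - r) + r := by ring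
    rw [this]
    exact vge_add (Or.inr h2) (Or.inr hr)
  have := vge_of_ne this hq0
  omega

end StrictD
namespace StrictD
variable {p : ℕ} [hF : Fact p.Prime]

lemma padicValNat_prod {ι : Type*} {s : Finset ι} {f : ι → ℕ}
    (h : ∀ i ∈ s, f i ≠ 0) :
    padicValNat p (∏ i ∈ s, f i) = ∑ i ∈ s, padicValNat p (f i) := by
  classical
  induction s using Finset.induction_on with
  | empty => simp
  | @insert a s hni ih =>
    rw [Finset.prod_insert hni, Finset.sum_insert hni,
      padicValNat.mul (h a (mem_insert_self a s))
        (Finset.prod_ne_zero_iff.mpr fun i hi => h i (mem_insert_of_mem hi)),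
      ih fun i hi => h i (mem_insert_of_mem hi)]

lemma val_sub_eq {n t j : ℕ} (hn0 : n ≠ 0) (hdvd : p ^ t ∣ n) (hj : 0 < j)
    (hjt : j < p ^ t) : padicValNat p (n - j) = padicValNat p j := by
  have hp1 : 1 < p := hF.out.one_lt
  set v := padicValNat p j with hv
  have hvj : p ^ v ∣ j := pow_padicValNat_dvd
  have hvt : v < t := by
    by_contra h
    push_neg at h
    have : p ^ t ≤ p ^ v := Nat.pow_le_pow_right (by omega) h
    have := Nat.le_of_dvd hj hvj
    omega
  have hjn : j < n := lt_of_lt_of_le hjt (Nat.le_of_dvd (Nat.pos_of_ne_zero hn0) hdvd)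
  have hsub0 : n - j ≠ 0 := by omega
  have hd1 : p ^ v ∣ n - j :=
    Nat.dvd_sub (dvd_trans (pow_dvd_pow p hvt.le) hdvd) hvj
  have hd2 : ¬ p ^ (v + 1) ∣ n - j := by
    intro h
    have h3 : p ^ (v + 1) ∣ n := dvd_trans (pow_dvd_pow p (by omega)) hdvd
    have : p ^ (v + 1) ∣ j := by
      have : j = n - (n - j) := by omega
      rw [this]
      exact Nat.dvd_sub h3 h
    exact pow_succ_padicValNat_not_dvd (by omega) this
  have h1 : v ≤ padicValNat p (n - j) := (padicValNat_dvd_iff_le hsub0).mp hd1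
  have h2 : padicValNat p (n - j) < v + 1 := by
    by_contra h
    push_neg at h
    exact hd2 ((padicValNat_dvd_iff_le hsub0).mpr h)
  omega

lemma choose_ge {n m : ℕ} (hm : 0 < m) (hmn : m ≤ n) :
    padicValNat p n ≤ padicValNat p (n.choose m) + padicValNat p m := by
  have hn : 0 < n := lt_of_lt_of_le hm hmn
  have hid : n.choose m * m = n * (n - 1).choose (m - 1) := by
    have := Nat.add_one_mul_choose_eq (n - 1) (m - 1)
    have h1 : n - 1 + 1 = n := by omega
    have h2 : m - 1 + 1 = m := by omega
    rw [h1, h2] at this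
    omega
  have hc : n.choose m ≠ 0 := (Nat.choose_pos hmn).ne'
  have hc' : (n - 1).choose (m - 1) ≠ 0 := (Nat.choose_pos (by omega : m - 1 ≤ n - 1)).ne'
  have := congrArg (padicValNat p) hid
  rw [padicValNat.mul hc (by omega), padicValNat.mul (by omega) hc'] at this
  omega

lemma choose_exact {n r : ℕ} (hn : n ≠ 0) (hr : 0 < r)
    (hrt : r ≤ p ^ padicValNat p n) :
    padicValNat p (n.choose r) + padicValNat p r = padicValNat p n := by
  set t := padicValNat p n with ht
  have hdvd : p ^ t ∣ n := pow_padicValNat_dvd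
  have hrn : r ≤ n := le_trans hrt (Nat.le_of_dvd (Nat.pos_of_ne_zero hn) hdvd)
  -- descFactorial n r = r ! * choose n r
  have hdesc := Nat.descFactorial_eq_factorial_mul_choose n r
  have hprod : n.descFactorial r = ∏ i ∈ range r, (n - i) :=
    Nat.descFactorial_eq_prod_range n r
  have hterm : ∀ i ∈ range r, n - i ≠ 0 := fun i hi => by
    have := mem_range.mp hi; omega
  have hval1 : padicValNat p (n.descFactorial r) =
      ∑ i ∈ range r, padicValNat p (n - i) := by
    rw [hprod]; exact padicValNat_prod hterm
  have hsplit : ∑ i ∈ range r, padicValNat p (n - i) =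
      t + ∑ i ∈ Ico 1 r, padicValNat p i := by
    rw [range_eq_Ico, Finset.sum_eq_sum_Ico_succ_bot hr]
    have h0 : padicValNat p (n - 0) = t := by simp [ht]
    rw [h0]
    congr 1
    apply Finset.sum_congr rfl
    intro i hi
    have hi' := Finset.mem_Ico.mp hi
    exact val_sub_eq hn hdvd (by omega) (by omega)
  have hfac : ∀ s : ℕ, padicValNat p (s.factorial) = ∑ i ∈ Ico 1 (s + 1), padicValNat p i := by
    intro s
    induction s with
    | zero => simp
    | succ m ih =>
      have h2 : ∑ i ∈ Ico 1 (m + 1 + 1), padicValNat p i =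
          (∑ i ∈ Ico 1 (m + 1), padicValNat p i) + padicValNat p (m + 1) :=
        Finset.sum_Ico_succ_top (by omega) _
      rw [Nat.factorial_succ, padicValNat.mul (by omega) m.factorial_ne_zero, ih, h2]
      omega
  have hchoose0 : n.choose r ≠ 0 := (Nat.choose_pos hrn).ne'
  have hval2 : padicValNat p (n.descFactorial r) =
      padicValNat p (r.factorial) + padicValNat p (n.choose r) := by
    rw [hdesc, padicValNat.mul r.factorial_ne_zero hchoose0]
  have hfr : padicValNat p (r.factorial) =
      (∑ i ∈ Ico 1 r, padicValNat p i) + padicValNat p r := by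
    rw [hfac r]
    exact Finset.sum_Ico_succ_top (by omega) _
  omega

end StrictD
namespace StrictD

lemma sum_div_le (T : Finset ℕ) {α : ℕ} (hα : 0 < α) :
    ∑ j ∈ T, j / α ≤ (∑ j ∈ T, j) / α := by
  classical
  induction T using Finset.induction_on with
  | empty => simp
  | @insert a s hni ih =>
    rw [Finset.sum_insert hni, Finset.sum_insert hni]
    calc a / α + ∑ j ∈ s, j / α ≤ a / α + (∑ j ∈ s, j) / α := by omega
      _ ≤ (a + ∑ j ∈ s, j) / α := by
          rw [Nat.le_div_iff_mul_le hα, Nat.add_mul]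
          have h1 : a / α * α ≤ a := Nat.div_mul_le_self a α
          have h2 : (∑ j ∈ s, j) / α * α ≤ ∑ j ∈ s, j := Nat.div_mul_le_self _ α
          omega

/-- The set of subsets used in the recursion for `c`. -/
def idx (i : ℕ) : Finset (Finset ℕ) :=
  (Finset.Icc 1 (i - 1)).powerset.filter fun T => 2 ≤ T.card ∧ ∑ j ∈ T, j = i

noncomputable def c (a : ℕ → ℚ) : ℕ → ℚ
  | i => a i - ∑ T ∈ (idx i).attach, ∏ j ∈ (T : Finset ℕ).attach, c a j
  decreasing_by
    have hT := T.2
    simp only [idx, Finset.mem_filter, Finset.mem_powerset] at hT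
    have hj := hT.1 j.2
    have := Finset.mem_Icc.mp hj
    omega

lemma c_spec (a : ℕ → ℚ) (i : ℕ) :
    c a i = a i - ∑ T ∈ idx i, ∏ j ∈ T, c a j := by
  rw [c]
  congr 1
  calc ∑ T ∈ (idx i).attach, ∏ j ∈ (T : Finset ℕ).attach, c a ↑j
      = ∑ T ∈ (idx i).attach, (fun U : Finset ℕ => ∏ j ∈ U, c a j) ↑T := by
        refine Finset.sum_congr rfl fun T _ => ?_
        exact Finset.prod_attach _ _
    _ = ∑ T ∈ idx i, ∏ j ∈ T, c a j := Finset.sum_attach (idx i) (fun U => ∏ j ∈ U, c a j)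

lemma coeff_prod_subsets (g : ℕ → ℚ) (s : Finset ℕ) (i : ℕ) :
    coeff i (∏ j ∈ s, (1 + C (g j) * X ^ j)) =
      ∑ T ∈ s.powerset.filter (fun T => ∑ j ∈ T, j = i), ∏ j ∈ T, g j := by
  classical
  have h1 : ∏ j ∈ s, (1 + C (g j) * X ^ j) =
      ∑ T ∈ s.powerset, (C (∏ j ∈ T, g j)) * X ^ (∑ j ∈ T, j) := by
    have := Finset.prod_add (fun j => (C (g j) * X ^ j)) (fun _ => (1 : PowerSeries ℚ)) s
    calc ∏ j ∈ s, (1 + C (g j) * X ^ j)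
        = ∏ j ∈ s, (C (g j) * X ^ j + 1) := by
          refine Finset.prod_congr rfl fun j _ => add_comm _ _
      _ = ∑ T ∈ s.powerset, (∏ j ∈ T, C (g j) * X ^ j) * ∏ _j ∈ s \ T, (1 : PowerSeries ℚ) :=
          this
      _ = ∑ T ∈ s.powerset, (C (∏ j ∈ T, g j)) * X ^ (∑ j ∈ T, j) := by
          refine Finset.sum_congr rfl fun T _ => ?_
          rw [Finset.prod_const_one, mul_one, Finset.prod_mul_distrib, map_prod,
            Finset.prod_pow_eq_pow_sum]
  rw [h1, map_sum]
  rw [Finset.sum_filter]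
  refine Finset.sum_congr rfl fun T _ => ?_
  rw [coeff_C_mul, coeff_X_pow]
  by_cases h : ∑ j ∈ T, j = i
  · simp [h]
  · simp [h, Ne.symm h]
  
end StrictD

namespace StrictD

noncomputable def Qs (a : ℕ → ℚ) (N : ℕ) : PowerSeries ℚ :=
  ∏ j ∈ Finset.Icc 1 N, (1 + C (c a j) * X ^ j)

lemma coeff_Qs_zero (a : ℕ → ℚ) (N : ℕ) : coeff 0 (Qs a N) = 1 := by
  rw [Qs, coeff_prod_subsets]
  have h : (Finset.Icc 1 N).powerset.filter (fun T => ∑ j ∈ T, j = 0) = {∅} := by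
    ext T
    simp only [Finset.mem_filter, Finset.mem_powerset, Finset.mem_singleton]
    constructor
    · rintro ⟨hsub, hsum⟩
      rw [Finset.sum_eq_zero_iff] at hsum
      ext j
      simp only [Finset.notMem_empty, iff_false]
      intro hj
      have := Finset.mem_Icc.mp (hsub hj)
      have := hsum j hj
      omega
    · rintro rfl
      simp
  rw [h]
  simp

lemma coeff_Qs (a : ℕ → ℚ) (N i : ℕ) (h1 : 1 ≤ i) (hiN : i ≤ N) :
    coeff i (Qs a N) = a i := by
  classical
  rw [Qs, coeff_prod_subsets]
  have hset : (Finset.Icc 1 N).powerset.filter (fun T => ∑ j ∈ T, j = i) =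
      insert {i} (idx i) := by
    ext T
    simp only [Finset.mem_filter, Finset.mem_powerset, Finset.mem_insert, idx]
    constructor
    · rintro ⟨hsub, hsum⟩
      by_cases hc : T.card ≤ 1
      · left
        interval_cases h : T.card
        · rw [Finset.card_eq_zero.mp h] at hsum
          simp at hsum; omega
        · obtain ⟨j, rfl⟩ := Finset.card_eq_one.mp h
          rw [Finset.sum_singleton] at hsum
          rw [hsum]
      · right
        push_neg at hc
        refine ⟨?_, by omega, hsum⟩
        intro j hj
        obtain ⟨j', hj', hne⟩ := Finset.exists_mem_ne hc j
        have hpair : ({j, j'} : Finset ℕ) ⊆ T := by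
          intro x hx
          rcases Finset.mem_insert.mp hx with rfl | hx
          · exact hj
          · rwa [Finset.mem_singleton.mp hx]
        have hle : j + j' ≤ ∑ x ∈ T, x := by
          have := Finset.sum_le_sum_of_subset hpair (f := id)
          rwa [Finset.sum_pair (Ne.symm hne)] at this
        have hj1 := Finset.mem_Icc.mp (hsub hj)
        have hj'1 := Finset.mem_Icc.mp (hsub hj')
        rw [Finset.mem_Icc]
        omega
    · rintro (rfl | ⟨hsub, _, hsum⟩)
      · constructor
        · intro x hx
          rw [Finset.mem_singleton.mp hx, Finset.mem_Icc]
          omega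
        · simp
      · refine ⟨subset_trans hsub (Finset.Icc_subset_Icc_right (by omega)), hsum⟩
  rw [hset, Finset.sum_insert]
  · rw [Finset.prod_singleton]
    have := c_spec a i
    have hrw : ∑ T ∈ idx i, ∏ j ∈ T, c a j = a i - c a i := by
      rw [this]; ring
    rw [hrw]; ring
  · intro hmem
    simp only [idx, Finset.mem_filter] at hmem
    have := hmem.2.1
    simp at this

end StrictD
namespace StrictD

variable {p : ℕ} [hF : Fact p.Prime] {a : ℕ → ℚ} {α β : ℕ}

section bounds
variable (hα : 1 ≤ α) (hβ : 1 ≤ β)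
  (hval : padicValRat p (a α) = -(β : ℤ))
  (hstrict : ∀ k, α < k → a k ≠ 0 → -(β : ℤ) * (k / α : ℕ) < padicValRat p (a k))
  (hlow : ∀ k, 1 ≤ k → k < α → 0 ≤ padicValRat p (a k))
include hα hβ hval hstrict hlow

lemma vge_a : ∀ i, 1 ≤ i → Vge p (a i) (-(β * (i / α) : ℕ) : ℤ) := by
  intro i hi
  by_cases h0 : a i = 0
  · exact Or.inl h0
  rcases lt_trichotomy i α with h | h | h
  · have : i / α = 0 := Nat.div_eq_of_lt h
    rw [this]
    exact Or.inr (by simpa using hlow i hi h)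
  · subst h
    rw [Nat.div_self (by omega)]
    exact Or.inr (by rw [hval]; push_cast; omega)
  · refine Or.inr ?_
    have := hstrict i h h0
    rw [Nat.cast_mul]
    linarith

lemma c_bound : ∀ i, 1 ≤ i → Vge p (c a i) (-(β * (i / α) : ℕ) : ℤ) := by
  intro i
  induction i using Nat.strong_induction_on with
  | _ i ih =>
    intro hi
    rw [c_spec]
    refine vge_sub (vge_a hα hβ hval hstrict hlow i hi) (vge_sum fun T hT => ?_)
    simp only [idx, Finset.mem_filter, Finset.mem_powerset] at hT
    obtain ⟨hsub, hcard, hsum⟩ := hT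
    have hmem : ∀ j ∈ T, 1 ≤ j ∧ j ≤ i - 1 := fun j hj => Finset.mem_Icc.mp (hsub hj)
    have h1 : Vge p (∏ j ∈ T, c a j) (∑ j ∈ T, (-(β * (j / α) : ℕ) : ℤ)) :=
      vge_prod fun j hj => ih j (by have := hmem j hj; omega) (hmem j hj).1
    refine vge_mono h1 ?_
    have h2 : ∑ j ∈ T, (j / α) ≤ i / α := by
      have := sum_div_le T (show 0 < α by omega)
      rw [hsum] at this
      exact this
    have : ∑ j ∈ T, (-(β * (j / α) : ℕ) : ℤ) = -(β * ∑ j ∈ T, (j / α) : ℕ) := by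
      push_cast [Finset.mul_sum]
      rw [← Finset.sum_neg_distrib]
    rw [this]
    have h3 : β * (∑ j ∈ T, (j / α)) ≤ β * (i / α) := Nat.mul_le_mul_left β h2
    omega

lemma c_alpha_exact : c a α ≠ 0 ∧ padicValRat p (c a α) = -(β : ℤ) := by
  have ha0 : a α ≠ 0 := by
    intro h
    rw [h] at hval
    simp [padicValRat] at hval
    omega
  rw [c_spec]
  refine sub_exact ha0 hval (vge_sum fun T hT => ?_)
  simp only [idx, Finset.mem_filter, Finset.mem_powerset] at hT
  obtain ⟨hsub, hcard, hsum⟩ := hT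
  have h1 : Vge p (∏ j ∈ T, c a j) (∑ j ∈ T, (0 : ℤ)) := by
    refine vge_prod fun j hj => ?_
    have hj' := Finset.mem_Icc.mp (hsub hj)
    have hb := c_bound hα hβ hval hstrict hlow j (by omega)
    have : j / α = 0 := Nat.div_eq_of_lt (by omega)
    rw [this] at hb
    simpa using hb
  rw [Finset.sum_const, smul_zero] at h1
  exact vge_mono h1 (by omega)

lemma c_mult : ∀ d, 2 ≤ d → Vge p (c a (d * α)) (-(β * d : ℕ) + 1 : ℤ) := by
  intro d
  induction d using Nat.strong_induction_on with
  | _ d ih =>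
    intro hd
    rw [c_spec]
    have hda : α < d * α := by nlinarith
    refine vge_sub ?_ (vge_sum fun T hT => ?_)
    · -- bound on a (d * α)
      by_cases h0 : a (d * α) = 0
      · exact Or.inl h0
      refine Or.inr ?_
      have := hstrict (d * α) hda h0
      rw [Nat.mul_div_cancel d (by omega : 0 < α)] at this
      rw [Nat.cast_mul]
      linarith
    · simp only [idx, Finset.mem_filter, Finset.mem_powerset] at hT
      obtain ⟨hsub, hcard, hsum⟩ := hT
      have hmem : ∀ j ∈ T, 1 ≤ j := fun j hj => (Finset.mem_Icc.mp (hsub hj)).1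
      by_cases hdvd : ∀ j ∈ T, α ∣ j
      · -- all parts multiples of α; find one with j / α ≥ 2
        have hex : ∃ j₀ ∈ T, 2 ≤ j₀ / α := by
          by_contra h
          push_neg at h
          have hTsub : T ⊆ {α} := by
            intro j hj
            have h1 := hmem j hj
            have h2 := hdvd j hj
            have h3 := h j hj
            obtain ⟨q, rfl⟩ := h2
            rw [Nat.mul_div_cancel_left q (by omega : 0 < α)] at h3
            interval_cases q
            · omega
            · simp [Finset.mem_singleton, Nat.mul_one, mul_comm]
          have := Finset.card_le_card hTsub
          simp at this
          omega
        obtain ⟨j₀, hj₀T, hj₀2⟩ := hex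
        set d₀ := j₀ / α with hd₀
        have hj₀eq : j₀ = d₀ * α := by
          have := hdvd j₀ hj₀T
          rw [hd₀, Nat.div_mul_cancel this]
        have hd₀d : d₀ < d := by
          obtain ⟨j₁, hj₁T, hne⟩ := Finset.exists_mem_ne (s := T) (by omega) j₀
          have hpair : ({j₀, j₁} : Finset ℕ) ⊆ T := by
            intro x hx
            rcases Finset.mem_insert.mp hx with rfl | hx
            · exact hj₀T
            · rwa [Finset.mem_singleton.mp hx]
          have hle : j₀ + j₁ ≤ ∑ x ∈ T, x := by
            have := Finset.sum_le_sum_of_subset hpair (f := id)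
            rwa [Finset.sum_pair (Ne.symm hne)] at this
          have hj₁ := hmem j₁ hj₁T
          have : j₀ < d * α := by omega
          rw [hj₀eq] at this
          exact lt_of_mul_lt_mul_right this (by omega)
        have hrest : Vge p (∏ j ∈ T.erase j₀, c a j)
            (∑ j ∈ T.erase j₀, (-(β * (j / α) : ℕ) : ℤ)) := by
          refine vge_prod fun j hj => ?_
          exact c_bound hα hβ hval hstrict hlow j (hmem j (Finset.mem_of_mem_erase hj))
        have hmain : Vge p (c a j₀) (-(β * d₀ : ℕ) + 1 : ℤ) := by
          rw [hj₀eq]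
          exact ih d₀ hd₀d hj₀2
        have := vge_mul hmain hrest
        rw [Finset.mul_prod_erase T _ hj₀T] at this
        refine vge_mono this ?_
        have hsum2 : d₀ + ∑ j ∈ T.erase j₀, (j / α) ≤ d := by
          have h4 : ∑ j ∈ T, (j / α) ≤ (∑ j ∈ T, j) / α := sum_div_le T (by omega)
          rw [hsum, Nat.mul_div_cancel d (by omega : 0 < α)] at h4
          rw [← Finset.add_sum_erase T _ hj₀T] at h4
          exact h4
        have hcast : ∑ j ∈ T.erase j₀, (-(β * (j / α) : ℕ) : ℤ) =
            -((β : ℤ) * (∑ j ∈ T.erase j₀, (j / α) : ℕ)) := by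
          push_cast [Finset.mul_sum]
          rw [← Finset.sum_neg_distrib]
        rw [hcast]
        have h5 : β * d₀ + β * (∑ j ∈ T.erase j₀, (j / α)) ≤ β * d := by
          have : β * (d₀ + ∑ j ∈ T.erase j₀, (j / α)) ≤ β * d := Nat.mul_le_mul_left β hsum2
          nlinarith [this]
        have h6 : ((β * d₀ : ℕ) : ℤ) + (β : ℤ) * ((∑ j ∈ T.erase j₀, (j / α) : ℕ) : ℤ)
            ≤ ((β * d : ℕ) : ℤ) := by
          rw [← Nat.cast_mul]
          exact_mod_cast h5
        linarith
      · -- some part not a multiple of α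
        push_neg at hdvd
        obtain ⟨j₀, hj₀T, hj₀nd⟩ := hdvd
        have hlt : ∑ j ∈ T, (j / α) ≤ d - 1 := by
          have hstep : ∑ j ∈ T, α * (j / α) < ∑ j ∈ T, j := by
            refine Finset.sum_lt_sum (fun j _ => Nat.mul_div_le j α) ⟨j₀, hj₀T, ?_⟩
            have h1 : α * (j₀ / α) ≤ j₀ := Nat.mul_div_le j₀ α
            have h2 : α * (j₀ / α) ≠ j₀ := by
              intro h
              exact hj₀nd ⟨j₀ / α, h.symm⟩
            omega
          rw [← Finset.mul_sum, hsum] at hstep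
          have : ∑ j ∈ T, (j / α) < d := by
            have hstep' : α * (∑ j ∈ T, (j / α)) < α * d := by
              rwa [mul_comm d α] at hstep
            exact lt_of_mul_lt_mul_left hstep' (by omega)
          omega
        have h1 : Vge p (∏ j ∈ T, c a j) (∑ j ∈ T, (-(β * (j / α) : ℕ) : ℤ)) :=
          vge_prod fun j hj => c_bound hα hβ hval hstrict hlow j (hmem j hj)
        refine vge_mono h1 ?_
        have hcast : ∑ j ∈ T, (-(β * (j / α) : ℕ) : ℤ) =
            -((β : ℤ) * (∑ j ∈ T, (j / α) : ℕ)) := by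
          push_cast [Finset.mul_sum]
          rw [← Finset.sum_neg_distrib]
        rw [hcast]
        have h5 : β * (∑ j ∈ T, (j / α)) + β ≤ β * d := by
          have : β * (∑ j ∈ T, (j / α)) + β = β * ((∑ j ∈ T, (j / α)) + 1) := by ring
          rw [this]
          exact Nat.mul_le_mul_left β (by omega)
        have h6 : (β : ℤ) * ((∑ j ∈ T, (j / α) : ℕ) : ℤ) + (β : ℤ) ≤ ((β * d : ℕ) : ℤ) := by
          rw [← Nat.cast_mul]
          exact_mod_cast h5
        have hβ' : (1 : ℤ) ≤ (β : ℤ) := by exact_mod_cast hβ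
        linarith

end bounds
end StrictD
namespace StrictD

lemma coeff_factor_pow (q : ℚ) (j n m : ℕ) (hj : 1 ≤ j) :
    coeff m ((1 + C q * X ^ j) ^ n) =
      if j ∣ m then (n.choose (m / j) : ℚ) * q ^ (m / j) else 0 := by
  classical
  have hexp : (1 + C q * X ^ j) ^ n =
      ∑ s ∈ range (n + 1), C ((n.choose s : ℚ) * q ^ s) * X ^ (j * s) := by
    rw [add_comm, add_pow]
    refine Finset.sum_congr rfl fun s hs => ?_
    rw [one_pow, mul_one, mul_pow, ← map_pow, map_mul, map_natCast, pow_mul]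
    ring
  rw [hexp, map_sum]
  have hterm : ∀ s ∈ range (n + 1),
      coeff m (C ((n.choose s : ℚ) * q ^ s) * X ^ (j * s)) =
      if m = j * s then (n.choose s : ℚ) * q ^ s else 0 := fun s _ => by
    rw [coeff_C_mul, coeff_X_pow]
    by_cases h : m = j * s <;> simp [h]
  rw [Finset.sum_congr rfl hterm]
  by_cases hdvd : j ∣ m
  · obtain ⟨s₀, rfl⟩ := hdvd
    have hs₀ : (j * s₀) / j = s₀ := Nat.mul_div_cancel_left s₀ (by omega)
    rw [if_pos ⟨s₀, rfl⟩, hs₀]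
    by_cases hle : s₀ ≤ n
    · rw [Finset.sum_eq_single s₀]
      · simp
      · intro s hs hne
        rw [if_neg]
        intro h
        exact hne (Nat.eq_of_mul_eq_mul_left (by omega) h.symm)
      · intro h
        exact absurd (Finset.mem_range.mpr (by omega)) h
    · rw [Finset.sum_eq_zero, Nat.choose_eq_zero_of_lt (by omega)]
      · simp
      · intro s hs
        rw [if_neg]
        intro h
        have := Nat.eq_of_mul_eq_mul_left (show 0 < j by omega) h.symm
        rw [Finset.mem_range] at hs
        omega
  · rw [if_neg hdvd, Finset.sum_eq_zero]
    intro s _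
    rw [if_neg]
    intro h
    exact hdvd ⟨s, h⟩

/-- If two power series agree in coefficients up to `k`, so do their `n`-th powers. -/
lemma coeff_pow_congr {f g : PowerSeries ℚ} {k : ℕ}
    (h : ∀ i ≤ k, coeff i f = coeff i g) (n : ℕ) :
    ∀ i ≤ k, coeff i (f ^ n) = coeff i (g ^ n) := by
  intro i hi
  have hdvd : f - g ∣ f ^ n - g ^ n := sub_dvd_pow_sub_pow f g n
  obtain ⟨h₁, hh⟩ := hdvd
  have : coeff i (f ^ n - g ^ n) = 0 := by
    rw [hh, coeff_mul]
    refine Finset.sum_eq_zero fun x hx => ?_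
    have hx1 := Finset.HasAntidiagonal.antidiagonal.fst_le hx
    have : coeff x.1 (f - g) = 0 := by
      rw [map_sub, h x.1 (le_trans hx1 hi), sub_self]
    rw [this, zero_mul]
  rw [map_sub] at this
  linarith

/-- Products of series with `p`-integral coefficients up to `k` have `p`-integral
coefficients up to `k`. -/
lemma vge_coeff_mul {p : ℕ} [Fact p.Prime] {f g : PowerSeries ℚ} {k : ℕ}
    (hf : ∀ i ≤ k, Vge p (coeff i f) 0) (hg : ∀ i ≤ k, Vge p (coeff i g) 0) :
    ∀ i ≤ k, Vge p (coeff i (f * g)) 0 := by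
  intro i hi
  rw [coeff_mul]
  refine vge_sum fun x hx => ?_
  have h1 := Finset.HasAntidiagonal.antidiagonal.fst_le hx
  have h2 := Finset.HasAntidiagonal.antidiagonal.snd_le hx
  have := vge_mul (hf x.1 (le_trans h1 hi)) (hg x.2 (le_trans h2 hi))
  simpa using this

lemma vge_coeff_pow {p : ℕ} [Fact p.Prime] {f : PowerSeries ℚ} {k : ℕ}
    (hf : ∀ i ≤ k, Vge p (coeff i f) 0) (n : ℕ) (hn : 1 ≤ n) :
    ∀ i ≤ k, Vge p (coeff i (f ^ n)) 0 := by
  induction n with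
  | zero => omega
  | succ m ih =>
    by_cases hm : m = 0
    · subst hm; simpa using hf
    · rw [pow_succ]
      exact vge_coeff_mul (ih (by omega)) hf

end StrictD
namespace StrictD

variable {p : ℕ} [hF : Fact p.Prime] {a : ℕ → ℚ} {α β : ℕ}

lemma sum_neg_cast (S : Finset ℕ) (u w : ℕ → ℕ) (β : ℕ) :
    ∑ j ∈ S, ((u j : ℤ) * (-(β * w j : ℕ) : ℤ)) = -((β * ∑ j ∈ S, u j * w j : ℕ) : ℤ) := by
  classical
  induction S using Finset.induction_on with
  | empty => simp
  | @insert b s hni ih =>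
    rw [Finset.sum_insert hni, Finset.sum_insert hni, ih]
    push_cast
    ring

section key
variable (hα : 1 ≤ α) (hβ : 1 ≤ β)
  (hval : padicValRat p (a α) = -(β : ℤ))
  (hstrict : ∀ k, α < k → a k ≠ 0 → -(β : ℤ) * (k / α : ℕ) < padicValRat p (a k))
  (hlow : ∀ k, 1 ≤ k → k < α → 0 ≤ padicValRat p (a k))
include hα hβ hval hstrict hlow

/-- Key lemma A: each coefficient of `Qs a k ^ n` up to `k` is `p`-integral, provided
`β*W + ν_p W ≤ ν_p n` for all `1 ≤ W ≤ k/α`, and `s ≤ n` forced... here `n = p^E`. -/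
lemma keyA (k : ℕ) (E : ℕ)
    (hE : ∀ W, 1 ≤ W → W ≤ k / α → β * W + padicValNat p W ≤ E) :
    ∀ i ≤ k, Vge p (coeff i ((Qs a k) ^ (p ^ E))) 0 := by
  classical
  intro i hi
  rw [Qs, ← Finset.prod_pow, coeff_prod]
  refine vge_sum fun l hl => ?_
  rw [mem_finsuppAntidiag] at hl
  obtain ⟨hlsum, hlsupp⟩ := hl
  by_cases hddvd : ∀ j ∈ Finset.Icc 1 k, j ∣ l j
  swap
  · push_neg at hddvd
    obtain ⟨j₀, hj₀, hnd⟩ := hddvd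
    refine vge_mono (Or.inl (Finset.prod_eq_zero hj₀ ?_)) le_rfl
    rw [coeff_factor_pow _ _ _ _ (Finset.mem_Icc.mp hj₀).1, if_neg hnd]
  have hrw : ∀ j ∈ Finset.Icc 1 k,
      coeff (l j) ((1 + C (c a j) * X ^ j) ^ (p ^ E)) =
      ((p ^ E).choose (l j / j) : ℚ) * (c a j) ^ (l j / j) := by
    intro j hj
    rw [coeff_factor_pow _ _ _ _ (Finset.mem_Icc.mp hj).1, if_pos (hddvd j hj)]
  rw [Finset.prod_congr rfl hrw]
  set s : ℕ → ℕ := fun j => l j / j with hs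
  by_cases hbig : ∀ j ∈ Finset.Icc 1 k, s j ≤ p ^ E
  swap
  · push_neg at hbig
    obtain ⟨j₀, hj₀, hgt⟩ := hbig
    refine Or.inl (Finset.prod_eq_zero hj₀ ?_)
    rw [Nat.choose_eq_zero_of_lt hgt]
    simp
  set W : ℕ := ∑ j ∈ Finset.Icc 1 k, s j * (j / α) with hW
  have hlj : ∀ j ∈ Finset.Icc 1 k, s j * j = l j := fun j hj =>
    Nat.div_mul_cancel (hddvd j hj)
  have hWle : W * α ≤ k := by
    have h1 : ∀ j ∈ Finset.Icc 1 k, (s j * (j / α)) * α ≤ l j := by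
      intro j hj
      rw [← hlj j hj]
      calc s j * (j / α) * α = s j * ((j / α) * α) := by ring
        _ ≤ s j * j := Nat.mul_le_mul_left _ (Nat.div_mul_le_self j α)
    calc W * α = ∑ j ∈ Finset.Icc 1 k, (s j * (j / α)) * α := by rw [Finset.sum_mul]
      _ ≤ ∑ j ∈ Finset.Icc 1 k, l j := Finset.sum_le_sum h1
      _ = i := hlsum
      _ ≤ k := hi
  by_cases hW0 : W = 0
  · refine vge_mono (vge_prod (B := fun _ => (0 : ℤ)) fun j hj => ?_) (by simp)
    have hj1 := (Finset.mem_Icc.mp hj).1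
    have hc : Vge p ((c a j) ^ s j) 0 := by
      by_cases hsj : s j = 0
      · rw [hsj, pow_zero]; exact vge_one
      · have hzero : s j * (j / α) = 0 := by
          have : s j * (j / α) ≤ W := Finset.single_le_sum
            (f := fun j => s j * (j / α)) (fun _ _ => Nat.zero_le _) hj
          omega
        have hja : j / α = 0 := by
          rcases Nat.mul_eq_zero.mp hzero with h | h
          · omega
          · exact h
        have := c_bound hα hβ hval hstrict hlow j hj1
        rw [hja] at this
        exact vge_mono (vge_pow (by simpa using this) (s j)) (by simp)
    simpa using vge_mul (vge_natCast_zero ((p ^ E).choose (s j))) hc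
  · -- W ≥ 1
    have hWm : W ≤ k / α := Nat.le_div_iff_mul_le (by omega) |>.mpr hWle
    have hEW : β * W + padicValNat p W ≤ E := hE W (by omega) hWm
    set J : Finset ℕ := (Finset.Icc 1 k).filter (fun j => 1 ≤ s j ∧ 1 ≤ j / α) with hJ
    have hJne : J.Nonempty := by
      by_contra h
      rw [Finset.not_nonempty_iff_eq_empty] at h
      apply hW0
      rw [hW]
      refine Finset.sum_eq_zero fun j hj => ?_
      by_contra hne
      have : j ∈ J := by
        rw [hJ, Finset.mem_filter]
        have hne' : s j ≠ 0 ∧ j / α ≠ 0 := by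
          constructor <;> (intro h0; apply hne; simp [h0])
        exact ⟨hj, Nat.pos_of_ne_zero hne'.1, Nat.pos_of_ne_zero hne'.2⟩
      rw [h] at this
      exact absurd this (Finset.notMem_empty j)
    obtain ⟨j₀, hj₀J, hmin⟩ := J.exists_min_image (fun j => padicValNat p (s j)) hJne
    rw [hJ, Finset.mem_filter] at hj₀J
    obtain ⟨hj₀Icc, hsj₀, hwj₀⟩ := hj₀J
    set ν₀ : ℕ := padicValNat p (s j₀) with hν₀
    have hdvdW : p ^ ν₀ ∣ W := by
      rw [hW]
      refine Finset.dvd_sum fun j hj => ?_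
      by_cases hjJ : j ∈ J
      · have hj' := hmin j hjJ
        exact dvd_mul_of_dvd_left
          (dvd_trans (pow_dvd_pow p hj') pow_padicValNat_dvd) _
      · have : s j * (j / α) = 0 := by
          rw [hJ, Finset.mem_filter] at hjJ
          push_neg at hjJ
          rcases Nat.eq_zero_or_pos (s j) with h' | h'
          · rw [h', Nat.zero_mul]
          · have h2 := hjJ hj h'
            have h3 : j / α = 0 := Nat.lt_one_iff.mp h2
            rw [h3, Nat.mul_zero]
        rw [this]
        exact dvd_zero _
    have hν₀W : ν₀ ≤ padicValNat p W := (padicValNat_dvd_iff_le hW0).mp hdvdW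
    refine vge_mono (vge_prod
      (B := fun j => (if j = j₀ then (E : ℤ) - ν₀ else 0) + (s j : ℤ) * (-(β * (j / α) : ℕ) : ℤ))
      fun j hj => ?_) ?_
    · have hj1 := (Finset.mem_Icc.mp hj).1
      refine vge_mul ?_ (vge_pow (c_bound hα hβ hval hstrict hlow j hj1) (s j))
      by_cases hjj : j = j₀
      · rw [if_pos hjj, hjj]
        have hch := choose_ge (p := p) hsj₀ (hbig j₀ hj₀Icc)
        rw [padicValNat.prime_pow] at hch
        refine vge_mono (vge_natCast _) ?_
        have hcast : (E : ℤ) ≤ (padicValNat p ((p ^ E).choose (l j₀ / j₀)) : ℤ) + (ν₀ : ℤ) := by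
          exact_mod_cast hch
        omega
      · rw [if_neg hjj]
        exact vge_natCast_zero _
    · rw [Finset.sum_add_distrib, sum_neg_cast, ← hW,
        Finset.sum_ite_eq' (Finset.Icc 1 k) j₀ (fun _ => (E : ℤ) - ν₀), if_pos hj₀Icc]
      have h9 : (β : ℤ) * (W : ℤ) + (padicValNat p W : ℤ) ≤ (E : ℤ) := by exact_mod_cast hEW
      have h10 : (ν₀ : ℤ) ≤ (padicValNat p W : ℤ) := by exact_mod_cast hν₀W
      have h11 : ((β * W : ℕ) : ℤ) = (β : ℤ) * (W : ℤ) := by push_cast; ring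
      rw [h11]
      linarith

end key
end StrictD
namespace StrictD

variable {p : ℕ} [hF : Fact p.Prime] {a : ℕ → ℚ} {α β : ℕ}

section keyB
variable (hα : 1 ≤ α) (hβ : 1 ≤ β)
  (hval : padicValRat p (a α) = -(β : ℤ))
  (hstrict : ∀ k, α < k → a k ≠ 0 → -(β : ℤ) * (k / α : ℕ) < padicValRat p (a k))
  (hlow : ∀ k, 1 ≤ k → k < α → 0 ≤ padicValRat p (a k))
include hα hβ hval hstrict hlow

lemma keyB (k : ℕ) (hk : 1 ≤ k) (n : ℕ) (hn : 0 < n)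
    (hint : ∀ i ≤ k, Vge p (coeff i ((Qs a k) ^ n)) 0) :
    ∀ r, r ≤ k / α → β * r + padicValNat p r ≤ padicValNat p n := by
  classical
  intro r
  induction r using Nat.strong_induction_on with
  | _ r ih =>
  intro hrm
  rcases Nat.eq_zero_or_pos r with rfl | hr1
  · simp
  by_cases hdom : ∃ s, 1 ≤ s ∧ s < r ∧ β * r + padicValNat p r ≤ β * s + padicValNat p s
  · obtain ⟨s, hs1, hsr, hsle⟩ := hdom
    exact le_trans hsle (ih s hsr (by omega))
  push_neg at hdom
  set t := padicValNat p n with ht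
  by_contra hcon
  push_neg at hcon
  have hcon' : t + 1 ≤ β * r + padicValNat p r := hcon
  have htr : ∀ s, 1 ≤ s → s < r → β * s + padicValNat p s ≤ t := fun s h1 h2 =>
    ih s h2 (by omega)
  -- r ≤ p ^ t and r ≤ n
  have hrpt : r ≤ p ^ t := by
    rcases Nat.eq_zero_or_pos (r - 1) with h | h
    · have : r = 1 := by omega
      rw [this]
      exact Nat.one_le_two_pow.trans (Nat.pow_le_pow_left hF.out.two_le t)
    · have h1 : β * (r - 1) + padicValNat p (r - 1) ≤ t := htr (r - 1) (by omega) (by omega)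
      have h2a : r - 1 ≤ β * (r - 1) := Nat.le_mul_of_pos_left (r - 1) (show 0 < β by omega)
      have h2 : r - 1 ≤ t := by omega
      calc r ≤ 2 ^ (r - 1) := by
              have := Nat.lt_two_pow_self (n := r - 1)
              omega
        _ ≤ 2 ^ t := Nat.pow_le_pow_right (by omega) h2
        _ ≤ p ^ t := Nat.pow_le_pow_left hF.out.two_le t
  have hptn : p ^ t ∣ n := pow_padicValNat_dvd
  have hrn : r ≤ n := le_trans hrpt (Nat.le_of_dvd hn hptn)
  -- the coefficient at i = r * α
  have hik : r * α ≤ k := by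
    have := Nat.le_div_iff_mul_le (show 0 < α by omega) |>.mp hrm
    omega
  have hαk : α ≤ k := le_trans (Nat.le_mul_of_pos_left α hr1) hik
  have hαIcc : α ∈ Finset.Icc 1 k := Finset.mem_Icc.mpr ⟨hα, hαk⟩
  have hint' := hint (r * α) hik
  rw [Qs, ← Finset.prod_pow, coeff_prod] at hint'
  set lstar : ℕ →₀ ℕ := Finsupp.single α (r * α) with hlstar
  have hmemstar : lstar ∈ finsuppAntidiag (Finset.Icc 1 k) (r * α) := by
    rw [mem_finsuppAntidiag]
    constructor
    · rw [hlstar]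
      calc ∑ j ∈ Finset.Icc 1 k, (Finsupp.single α (r * α)) j
          = ∑ j ∈ Finset.Icc 1 k, if α = j then r * α else 0 := by
            refine Finset.sum_congr rfl fun j _ => Finsupp.single_apply
        _ = r * α := by rw [Finset.sum_ite_eq (Finset.Icc 1 k) α fun _ => r * α, if_pos hαIcc]
    · exact subset_trans Finsupp.support_single_subset (by simpa using hαIcc)
  -- value of the main term
  have hcα := c_alpha_exact hα hβ hval hstrict hlow
  have hstarval : ∏ j ∈ Finset.Icc 1 k, coeff (lstar j) ((1 + C (c a j) * X ^ j) ^ n)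
      = (n.choose r : ℚ) * (c a α) ^ r := by
    rw [Finset.prod_eq_single_of_mem α hαIcc]
    · rw [hlstar]
      have : (Finsupp.single α (r * α)) α = r * α := Finsupp.single_eq_same
      rw [this, coeff_factor_pow _ _ _ _ hα, if_pos (dvd_mul_left α r),
        (show r * α / α = r by rw [mul_comm, Nat.mul_div_cancel_left _ (show 0 < α by omega)])]
    · intro j hj hne
      have : lstar j = 0 := Finsupp.single_eq_of_ne hne
      rw [this, coeff_factor_pow _ _ _ _ (Finset.mem_Icc.mp hj).1, if_pos (Nat.dvd_zero j)]
      simp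
  have hchoose0 : n.choose r ≠ 0 := (Nat.choose_pos hrn).ne'
  have hM0 : (n.choose r : ℚ) * (c a α) ^ r ≠ 0 :=
    mul_ne_zero (Nat.cast_ne_zero.mpr hchoose0) (pow_ne_zero r hcα.1)
  have hchooseval : padicValNat p (n.choose r) + padicValNat p r = t :=
    choose_exact (by omega) hr1 hrpt
  have hMval : padicValRat p ((n.choose r : ℚ) * (c a α) ^ r) =
      (t : ℤ) - (padicValNat p r : ℤ) - (β : ℤ) * r := by
    rw [padicValRat.mul (Nat.cast_ne_zero.mpr hchoose0) (pow_ne_zero r hcα.1),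
      padicValRat.pow (c a α), hcα.2, padicValRat.of_nat (p := p) (n := n.choose r)]
    have : (padicValNat p (n.choose r) : ℤ) = (t : ℤ) - (padicValNat p r : ℤ) := by
      omega
    rw [this]
    push_cast
    ring
  -- bound for the remaining terms
  set B : ℤ := (t : ℤ) + 1 - (padicValNat p r : ℤ) - (β : ℤ) * r with hB
  have hrest : ∀ l ∈ (finsuppAntidiag (Finset.Icc 1 k) (r * α)).erase lstar,
      Vge p (∏ j ∈ Finset.Icc 1 k, coeff (l j) ((1 + C (c a j) * X ^ j) ^ n)) B := by
    intro l hl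
    rw [Finset.mem_erase, mem_finsuppAntidiag] at hl
    obtain ⟨hlne, hlsum, hlsupp⟩ := hl
    have hBle : B ≤ 0 := by
      have : ((β * r : ℕ) : ℤ) + (padicValNat p r : ℤ) ≥ (t : ℤ) + 1 := by
        exact_mod_cast hcon'
      have h2 : ((β * r : ℕ) : ℤ) = (β : ℤ) * r := by push_cast; ring
      omega
    by_cases hddvd : ∀ j ∈ Finset.Icc 1 k, j ∣ l j
    swap
    · push_neg at hddvd
      obtain ⟨j₀, hj₀, hnd⟩ := hddvd
      refine Or.inl (Finset.prod_eq_zero hj₀ ?_)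
      rw [coeff_factor_pow _ _ _ _ (Finset.mem_Icc.mp hj₀).1, if_neg hnd]
    have hrw : ∀ j ∈ Finset.Icc 1 k,
        coeff (l j) ((1 + C (c a j) * X ^ j) ^ n) =
        (n.choose (l j / j) : ℚ) * (c a j) ^ (l j / j) := by
      intro j hj
      rw [coeff_factor_pow _ _ _ _ (Finset.mem_Icc.mp hj).1, if_pos (hddvd j hj)]
    rw [Finset.prod_congr rfl hrw]
    set s : ℕ → ℕ := fun j => l j / j with hs
    by_cases hbig : ∀ j ∈ Finset.Icc 1 k, s j ≤ n
    swap
    · push_neg at hbig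
      obtain ⟨j₀, hj₀, hgt⟩ := hbig
      refine Or.inl (Finset.prod_eq_zero hj₀ ?_)
      rw [Nat.choose_eq_zero_of_lt hgt]
      simp
    set W : ℕ := ∑ j ∈ Finset.Icc 1 k, s j * (j / α) with hW
    have hlj : ∀ j ∈ Finset.Icc 1 k, s j * j = l j := fun j hj =>
      Nat.div_mul_cancel (hddvd j hj)
    have hterm : ∀ j ∈ Finset.Icc 1 k, (s j * (j / α)) * α ≤ s j * j := by
      intro j hj
      calc s j * (j / α) * α = s j * ((j / α) * α) := by ring
        _ ≤ s j * j := Nat.mul_le_mul_left _ (Nat.div_mul_le_self j α)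
    have hWle : W * α ≤ r * α := by
      calc W * α = ∑ j ∈ Finset.Icc 1 k, (s j * (j / α)) * α := by rw [Finset.sum_mul]
        _ ≤ ∑ j ∈ Finset.Icc 1 k, s j * j := Finset.sum_le_sum hterm
        _ = ∑ j ∈ Finset.Icc 1 k, l j := Finset.sum_congr rfl hlj
        _ = r * α := hlsum
    have hWr : W ≤ r := Nat.le_of_mul_le_mul_right hWle (by omega)
    by_cases hW0 : W = 0
    · -- all parts small: every factor integral
      refine vge_mono (vge_prod (B := fun _ => (0 : ℤ)) fun j hj => ?_) (by simpa using hBle)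
      have hj1 := (Finset.mem_Icc.mp hj).1
      have hc : Vge p ((c a j) ^ s j) 0 := by
        by_cases hsj : s j = 0
        · rw [hsj, pow_zero]; exact vge_one
        · have hzero : s j * (j / α) = 0 := by
            have : s j * (j / α) ≤ W := Finset.single_le_sum
              (f := fun j => s j * (j / α)) (fun _ _ => Nat.zero_le _) hj
            omega
          have hja : j / α = 0 := by
            rcases Nat.mul_eq_zero.mp hzero with h | h
            · omega
            · exact h
          have := c_bound hα hβ hval hstrict hlow j hj1
          rw [hja] at this
          exact vge_mono (vge_pow (by simpa using this) (s j)) (by simp)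
      simpa using vge_mul (vge_natCast_zero (n.choose (s j))) hc
    by_cases hWr' : W < r
    · -- middle case 1 ≤ W < r
      set J : Finset ℕ := (Finset.Icc 1 k).filter (fun j => 1 ≤ s j ∧ 1 ≤ j / α) with hJ
      have hJne : J.Nonempty := by
        by_contra h
        rw [Finset.not_nonempty_iff_eq_empty] at h
        apply hW0
        rw [hW]
        refine Finset.sum_eq_zero fun j hj => ?_
        by_contra hne
        have hne' : s j ≠ 0 ∧ j / α ≠ 0 := by
          constructor <;> (intro h0; apply hne; simp [h0])
        have : j ∈ J := by
          rw [hJ, Finset.mem_filter]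
          exact ⟨hj, Nat.pos_of_ne_zero hne'.1, Nat.pos_of_ne_zero hne'.2⟩
        rw [h] at this
        exact absurd this (Finset.notMem_empty j)
      obtain ⟨j₀, hj₀J, hmin⟩ := J.exists_min_image (fun j => padicValNat p (s j)) hJne
      rw [hJ, Finset.mem_filter] at hj₀J
      obtain ⟨hj₀Icc, hsj₀, hwj₀⟩ := hj₀J
      set ν₀ : ℕ := padicValNat p (s j₀) with hν₀
      have hdvdW : p ^ ν₀ ∣ W := by
        rw [hW]
        refine Finset.dvd_sum fun j hj => ?_
        by_cases hjJ : j ∈ J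
        · have hj' := hmin j hjJ
          exact dvd_mul_of_dvd_left
            (dvd_trans (pow_dvd_pow p hj') pow_padicValNat_dvd) _
        · have : s j * (j / α) = 0 := by
            rw [hJ, Finset.mem_filter] at hjJ
            push_neg at hjJ
            rcases Nat.eq_zero_or_pos (s j) with h' | h'
            · rw [h', Nat.zero_mul]
            · have h2 := hjJ hj h'
              have h3 : j / α = 0 := Nat.lt_one_iff.mp h2
              rw [h3, Nat.mul_zero]
          rw [this]
          exact dvd_zero _
      have hν₀W : ν₀ ≤ padicValNat p W := (padicValNat_dvd_iff_le hW0).mp hdvdW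
      have hWdom : β * W + padicValNat p W + 1 ≤ β * r + padicValNat p r := by
        have := hdom W (by omega) hWr'
        omega
      refine vge_mono (vge_prod
        (B := fun j => (if j = j₀ then (t : ℤ) - ν₀ else 0) +
          (s j : ℤ) * (-(β * (j / α) : ℕ) : ℤ))
        fun j hj => ?_) ?_
      · have hj1 := (Finset.mem_Icc.mp hj).1
        refine vge_mul ?_ (vge_pow (c_bound hα hβ hval hstrict hlow j hj1) (s j))
        by_cases hjj : j = j₀
        · rw [if_pos hjj, hjj]
          have hch := choose_ge (p := p) hsj₀ (hbig j₀ hj₀Icc)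
          refine vge_mono (vge_natCast _) ?_
          have hcast : (t : ℤ) ≤ (padicValNat p (n.choose (l j₀ / j₀)) : ℤ) + (ν₀ : ℤ) := by
            exact_mod_cast hch
          omega
        · rw [if_neg hjj]
          exact vge_natCast_zero _
      · rw [Finset.sum_add_distrib, sum_neg_cast, ← hW,
          Finset.sum_ite_eq' (Finset.Icc 1 k) j₀ (fun _ => (t : ℤ) - ν₀), if_pos hj₀Icc]
        have h9 : ((β * W : ℕ) : ℤ) + (padicValNat p W : ℤ) + 1 ≤
            ((β * r : ℕ) : ℤ) + (padicValNat p r : ℤ) := by exact_mod_cast hWdom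
        have h10 : (ν₀ : ℤ) ≤ (padicValNat p W : ℤ) := by exact_mod_cast hν₀W
        have h11 : ((β * r : ℕ) : ℤ) = (β : ℤ) * r := by push_cast; ring
        rw [hB]
        omega
    · -- case W = r : all contributing parts are multiples of α
      have hWr2 : W = r := by omega
      have hdall : ∀ j ∈ Finset.Icc 1 k, 1 ≤ s j → (j / α) * α = j := by
        have hsum_eq : ∑ j ∈ Finset.Icc 1 k, (s j * (j / α)) * α =
            ∑ j ∈ Finset.Icc 1 k, s j * j := by
          have h1 : ∑ j ∈ Finset.Icc 1 k, (s j * (j / α)) * α = W * α := by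
            rw [Finset.sum_mul]
          have h2 : ∑ j ∈ Finset.Icc 1 k, s j * j = r * α := by
            rw [Finset.sum_congr rfl hlj]; exact hlsum
          rw [h1, h2, hWr2]
        have heach := (Finset.sum_eq_sum_iff_of_le hterm).mp hsum_eq
        intro j hj hsj
        have h4 : s j * ((j / α) * α) = s j * j := by
          calc s j * ((j / α) * α) = s j * (j / α) * α := by ring
            _ = s j * j := heach j hj
        exact Nat.eq_of_mul_eq_mul_left (by omega) h4
      by_cases honly : ∀ j ∈ Finset.Icc 1 k, 1 ≤ s j → j = α
      · -- then l = lstar, contradiction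
        exfalso
        apply hlne
        have hlj0 : ∀ j ∈ Finset.Icc 1 k, j ≠ α → l j = 0 := by
          intro j hj hne
          rcases Nat.eq_zero_or_pos (s j) with h' | h'
          · rw [← hlj j hj, h', Nat.zero_mul]
          · exact absurd (honly j hj h') hne
        have hlα : l α = r * α := by
          have := hlsum
          rw [Finset.sum_eq_single_of_mem α hαIcc (fun j hj hne => hlj0 j hj hne)] at this
          exact this
        ext j
        rw [hlstar, Finsupp.single_apply]
        by_cases hje : α = j
        · rw [if_pos hje, ← hje, hlα]
        · rw [if_neg hje]
          by_cases hjIcc : j ∈ Finset.Icc 1 k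
          · exact hlj0 j hjIcc (fun h => hje h.symm)
          · by_contra hne
            exact hjIcc (hlsupp (Finsupp.mem_support_iff.mpr hne))
      · push_neg at honly
        obtain ⟨j₀, hj₀Icc, hsj₀, hj₀α⟩ := honly
        have hj₀d : (j₀ / α) * α = j₀ := hdall j₀ hj₀Icc hsj₀
        set d₀ : ℕ := j₀ / α with hd₀
        have hd₀2 : 2 ≤ d₀ := by
          have hj1 := (Finset.mem_Icc.mp hj₀Icc).1
          by_contra hcc
          push_neg at hcc
          interval_cases d₀
          · rw [Nat.zero_mul] at hj₀d
            omega
          · rw [one_mul] at hj₀d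
            exact hj₀α hj₀d.symm
        set ν₀ : ℕ := padicValNat p (s j₀) with hν₀
        have hsν₀ : ν₀ + 1 ≤ s j₀ := by
          have h1 : p ^ ν₀ ∣ s j₀ := pow_padicValNat_dvd
          have h2 : p ^ ν₀ ≤ s j₀ := Nat.le_of_dvd (by omega) h1
          have h3 : ν₀ < p ^ ν₀ := Nat.lt_pow_self (n := ν₀) hF.out.one_lt
          omega
        -- split off the factor j₀
        rw [← Finset.mul_prod_erase _ _ hj₀Icc]
        have hfac : Vge p ((n.choose (s j₀) : ℚ) * (c a j₀) ^ (s j₀))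
            (((t : ℤ) - ν₀) + (s j₀ : ℤ) * ((-(β * d₀ : ℕ) : ℤ) + 1)) := by
          refine vge_mul ?_ ?_
          · have hch := choose_ge (p := p) hsj₀ (hbig j₀ hj₀Icc)
            refine vge_mono (vge_natCast _) ?_
            have hcast : (t : ℤ) ≤ (padicValNat p (n.choose (l j₀ / j₀)) : ℤ) + (ν₀ : ℤ) := by
              exact_mod_cast hch
            omega
          · have := c_mult hα hβ hval hstrict hlow d₀ hd₀2
            rw [show d₀ * α = j₀ from hj₀d] at this
            exact vge_pow this (s j₀)
        have hrest2 : Vge p (∏ j ∈ (Finset.Icc 1 k).erase j₀,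
            (n.choose (s j) : ℚ) * (c a j) ^ (s j))
            (-((β * ∑ j ∈ (Finset.Icc 1 k).erase j₀, s j * (j / α) : ℕ) : ℤ)) := by
          rw [← sum_neg_cast]
          refine vge_prod fun j hj => ?_
          have hj1 := (Finset.mem_Icc.mp (Finset.mem_of_mem_erase hj)).1
          have := vge_mul (vge_natCast_zero (n.choose (s j)))
            (vge_pow (c_bound hα hβ hval hstrict hlow j hj1) (s j))
          simpa using this
        refine vge_mono (vge_mul hfac hrest2) ?_
        -- arithmetic
        have hWsplit : s j₀ * d₀ + ∑ j ∈ (Finset.Icc 1 k).erase j₀, s j * (j / α) = W := by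
          rw [hW, ← Finset.add_sum_erase _ _ hj₀Icc]
        set We : ℕ := ∑ j ∈ (Finset.Icc 1 k).erase j₀, s j * (j / α) with hWe
        have hsplit2 : (s j₀ : ℤ) * ((-(β * d₀ : ℕ) : ℤ) + 1) =
            -((β * d₀ * s j₀ : ℕ) : ℤ) + (s j₀ : ℤ) := by push_cast; ring
        rw [hsplit2]
        have c1 : β * d₀ * s j₀ + β * We = β * W := by
          rw [← hWsplit]
          ring
        have c2 : β * W ≤ β * r := Nat.mul_le_mul_left β hWr
        rw [hB]
        omega
  -- assemble the contradiction
  rw [← Finset.add_sum_erase _ _ hmemstar, hstarval] at hint'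
  have hBneg : B ≤ 0 := by
    have h2 : ((β * r : ℕ) : ℤ) + (padicValNat p r : ℤ) ≥ (t : ℤ) + 1 := by
      exact_mod_cast hcon'
    have h3 : ((β * r : ℕ) : ℤ) = (β : ℤ) * r := by push_cast; ring
    rw [hB]
    omega
  have hMbound : Vge p ((n.choose r : ℚ) * (c a α) ^ r) B := by
    have heq : (n.choose r : ℚ) * (c a α) ^ r =
        ((n.choose r : ℚ) * (c a α) ^ r +
          ∑ l ∈ (finsuppAntidiag (Finset.Icc 1 k) (r * α)).erase lstar,
            ∏ j ∈ Finset.Icc 1 k, coeff (l j) ((1 + C (c a j) * X ^ j) ^ n)) -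
          ∑ l ∈ (finsuppAntidiag (Finset.Icc 1 k) (r * α)).erase lstar,
            ∏ j ∈ Finset.Icc 1 k, coeff (l j) ((1 + C (c a j) * X ^ j) ^ n) := by
      ring
    rw [heq]
    exact vge_sub (vge_mono hint' hBneg) (vge_sum hrest)
  have := vge_of_ne hMbound hM0
  rw [hMval] at this
  rw [hB] at this
  omega

end keyB
end StrictD
namespace StrictD

variable {p : ℕ} [hF : Fact p.Prime] {a : ℕ → ℚ} {α β : ℕ}

lemma vge_zero_nonneg {q : ℚ} (h : Vge p q 0) : 0 ≤ padicValRat p q := by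
  rcases h with rfl | h
  · simp [padicValRat]
  · exact h

lemma mk_eq_Qs (ha0 : a 0 = 1) (k : ℕ) :
    ∀ i ≤ k, coeff i (PowerSeries.mk a) = coeff i (Qs a k) := by
  intro i hi
  rcases Nat.eq_zero_or_pos i with rfl | hi1
  · rw [coeff_Qs_zero, coeff_mk, ha0]
  · rw [coeff_Qs a k i hi1 hi, coeff_mk]

end StrictD

open StrictD in
/-- Strict D-series theorem: if `f = 1 + ∑_{i≥1} a_i x^i ∈ ℚ[[x]]` is a strict D-series at the
prime `p` of type `(α, β)` (i.e. `ν_p(a_α) = -β`, `ν_p(a_k) > -β⌊k/α⌋` for `k > α` with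
`a_k ≠ 0`, and `ν_p(a_k) ≥ 0` for `1 ≤ k < α`), then for every `k ≥ 1` the smallest positive
integer `e` such that `f^e` has `p`-integral coefficients mod `x^{k+1}` satisfies
`ν_p(e) = max{β r + ν_p(r) : 0 ≤ r ≤ ⌊k/α⌋}`. -/
theorem stmt_6 (p : ℕ) (hp : p.Prime) (a : ℕ → ℚ) (ha0 : a 0 = 1)
    (α β : ℕ) (hα : 1 ≤ α) (hβ : 1 ≤ β)
    (hval : padicValRat p (a α) = -(β : ℤ))
    (hstrict : ∀ k, α < k → a k ≠ 0 → -(β : ℤ) * (k / α : ℕ) < padicValRat p (a k))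
    (hlow : ∀ k, 1 ≤ k → k < α → 0 ≤ padicValRat p (a k))
    (k : ℕ) (hk : 1 ≤ k) (e : ℕ)
    (he : IsLeast {n : ℕ | 0 < n ∧ ∀ i ≤ k,
      0 ≤ padicValRat p (PowerSeries.coeff i ((PowerSeries.mk a) ^ n))} e) :
    padicValNat p e =
      (Finset.range (k / α + 1)).sup (fun r => β * r + padicValNat p r) := by
  haveI : Fact p.Prime := ⟨hp⟩
  classical
  obtain ⟨⟨he0, heint⟩, hmin⟩ := he
  set E : ℕ := (Finset.range (k / α + 1)).sup (fun r => β * r + padicValNat p r) with hE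
  have htrans : ∀ n : ℕ, ∀ i ≤ k,
      coeff i ((PowerSeries.mk a) ^ n) = coeff i ((Qs a k) ^ n) :=
    fun n => coeff_pow_congr (mk_eq_Qs ha0 k) n
  -- upper bound: E ≤ padicValNat p e
  have hup : E ≤ padicValNat p e := by
    have hint : ∀ i ≤ k, Vge p (coeff i ((Qs a k) ^ e)) 0 := by
      intro i hi
      rw [← htrans e i hi]
      exact Or.inr (heint i hi)
    have hB := keyB hα hβ hval hstrict hlow k hk e he0 hint
    rw [hE]
    refine Finset.sup_le fun r hr => ?_
    exact hB r (Nat.lt_succ_iff.mp (Finset.mem_range.mp hr))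
  -- lower bound
  have hlow2 : padicValNat p e ≤ E := by
    by_contra hgt
    push_neg at hgt
    have hdvd : p ^ (E + 1) ∣ e := (padicValNat_dvd_iff_le (by omega)).mpr (by omega)
    obtain ⟨q, hq⟩ := hdvd
    have hq0 : 0 < q := by
      rcases Nat.eq_zero_or_pos q with rfl | h
      · rw [Nat.mul_zero] at hq; omega
      · exact h
    set n₀ : ℕ := p ^ E * q with hn₀
    have hn₀pos : 0 < n₀ := Nat.mul_pos (pow_pos hp.pos E) hq0
    have hEprop : ∀ W, 1 ≤ W → W ≤ k / α → β * W + padicValNat p W ≤ E := by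
      intro W h1 h2
      rw [hE]
      exact Finset.le_sup (f := fun r => β * r + padicValNat p r)
        (Finset.mem_range.mpr (by omega))
    have hA := keyA hα hβ hval hstrict hlow k E hEprop
    have hint₀ : ∀ i ≤ k, 0 ≤ padicValRat p (coeff i ((PowerSeries.mk a) ^ n₀)) := by
      intro i hi
      rw [htrans n₀ i hi]
      refine vge_zero_nonneg ?_
      have := vge_coeff_pow hA q hq0 i hi
      rwa [← pow_mul] at this
    have hle := hmin ⟨hn₀pos, hint₀⟩
    have hlt : n₀ < e := by
      have hp2 := hp.two_le
      calc n₀ < 2 * n₀ := by omega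
        _ ≤ p * n₀ := Nat.mul_le_mul_right n₀ hp2
        _ = e := by rw [hq, hn₀]; ring
    omega
  omega
end

section
/- Let f = 1 + Σ_{i≥1} a_i x^i ∈ Q[[x]] and let p be a prime. Then p divides the denominator of some coefficient a_i with 1 ≤ i ≤ k (in lowest terms) if and only if ν_p(e_k(f)) > 0, where e_k(f) is the smallest positive integer e such that f^e ∈ Z[[x]] mod x^{k+1}. -/
open PowerSeries

section Aux

variable {p : ℕ}

private lemma den_one' (hp : p.Prime) : ¬ p ∣ (1 : ℚ).den := by
  simp [Rat.den_ofNat, hp.one_lt.ne']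

private lemma den_add' (hp : p.Prime) {x y : ℚ} (hx : ¬ p ∣ x.den) (hy : ¬ p ∣ y.den) :
    ¬ p ∣ (x + y).den := by
  intro h
  rcases (Nat.Prime.dvd_mul hp).mp (h.trans (Rat.add_den_dvd x y)) with h' | h'
  exacts [hx h', hy h']

private lemma den_mul' (hp : p.Prime) {x y : ℚ} (hx : ¬ p ∣ x.den) (hy : ¬ p ∣ y.den) :
    ¬ p ∣ (x * y).den := by
  intro h
  rcases (Nat.Prime.dvd_mul hp).mp (h.trans (Rat.mul_den_dvd x y)) with h' | h'
  exacts [hx h', hy h']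

private lemma den_sum' (hp : p.Prime) {α : Type*} {s : Finset α} {f : α → ℚ}
    (h : ∀ x ∈ s, ¬ p ∣ (f x).den) : ¬ p ∣ (∑ x ∈ s, f x).den := by
  classical
  induction s using Finset.induction_on with
  | empty => simpa using hp.one_lt.ne'
  | insert _ _ hx ih =>
      rw [Finset.sum_insert hx]
      exact den_add' hp (h _ (Finset.mem_insert_self _ _))
        (ih fun x hxs => h x (Finset.mem_insert_of_mem hxs))

private lemma den_div' (hp : p.Prime) {x : ℚ} {m : ℕ} (hm0 : 0 < m)
    (hx : ¬ p ∣ x.den) (hm : ¬ p ∣ m) : ¬ p ∣ (x / (m : ℚ)).den := by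
  intro h
  have h1 : (x / (m : ℚ)).den ∣ x.den * m := by
    have := Rat.mul_den_dvd x ((m : ℚ)⁻¹)
    rwa [Rat.inv_natCast_den_of_pos hm0, ← div_eq_mul_inv] at this
  rcases (Nat.Prime.dvd_mul hp).mp (h.trans h1) with h' | h'
  exacts [hx h', hm h']

/-- If `h₀ = 0` and all coefficients of `h` below index `j` are `p`-integral, then for
`s ≥ 2` the `j`-th coefficient of `h ^ s` is `p`-integral. -/
private lemma lemA (hp : p.Prime) (h : PowerSeries ℚ) (h0 : PowerSeries.coeff 0 h = 0) :
    ∀ j : ℕ, (∀ i < j, ¬ p ∣ (PowerSeries.coeff i h).den) →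
      ∀ s, 2 ≤ s → ¬ p ∣ (PowerSeries.coeff j (h ^ s)).den := by
  intro j
  induction j using Nat.strong_induction_on with
  | _ j IH =>
    intro hlt s hs
    induction s, hs using Nat.le_induction with
    | base =>
        rw [pow_two, PowerSeries.coeff_mul]
        refine den_sum' hp fun x hx => ?_
        have hxy : x.1 + x.2 = j := Finset.HasAntidiagonal.mem_antidiagonal.mp hx
        rcases Nat.eq_zero_or_pos x.1 with h1 | h1
        · simp only [h1, h0, zero_mul]
          simpa using hp.one_lt.ne'
        rcases Nat.eq_zero_or_pos x.2 with h2 | h2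
        · simp only [h2, h0, mul_zero]
          simpa using hp.one_lt.ne'
        exact den_mul' hp (hlt _ (by omega)) (hlt _ (by omega))
    | succ s hs _ =>
        rw [pow_succ, PowerSeries.coeff_mul]
        refine den_sum' hp fun x hx => ?_
        have hxy : x.1 + x.2 = j := Finset.HasAntidiagonal.mem_antidiagonal.mp hx
        rcases Nat.eq_zero_or_pos x.1 with h1 | h1
        · have : PowerSeries.coeff 0 (h ^ s) = 0 := by
            rw [PowerSeries.coeff_zero_eq_constantCoeff, map_pow,
              ← PowerSeries.coeff_zero_eq_constantCoeff, h0]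
            exact zero_pow (by omega)
          simp only [h1, this, zero_mul]
          simpa using hp.one_lt.ne'
        rcases Nat.eq_zero_or_pos x.2 with h2 | h2
        · simp only [h2, h0, mul_zero]
          simpa using hp.one_lt.ne'
        exact den_mul' hp
          (IH _ (by omega) (fun i hi => hlt _ (by omega)) s hs)
          (hlt _ (by omega))

/-- Key lemma: if `g₀ = 1`, `p ∤ m` and `g ^ m` is `p`-integral up to `k`, then `g` is
`p`-integral up to `k`. -/
private lemma lemL (hp : p.Prime) (k : ℕ) (g : PowerSeries ℚ)
    (hg0 : PowerSeries.coeff 0 g = 1) {m : ℕ} (hm0 : 0 < m) (hm : ¬ p ∣ m)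
    (hgm : ∀ i ≤ k, ¬ p ∣ (PowerSeries.coeff i (g ^ m)).den) :
    ∀ j ≤ k, ¬ p ∣ (PowerSeries.coeff j g).den := by
  intro j
  induction j using Nat.strong_induction_on with
  | _ j IH =>
    intro hjk
    rcases Nat.eq_zero_or_pos j with hj | hj
    · subst hj; rw [hg0]; simpa using hp.one_lt.ne'
    set h : PowerSeries ℚ := g - 1 with hdef
    have hcoeff : ∀ i, 0 < i → PowerSeries.coeff i h = PowerSeries.coeff i g := by
      intro i hi
      simp [hdef, PowerSeries.coeff_one, hi.ne']
    have hh0 : PowerSeries.coeff 0 h = 0 := by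
      rw [hdef, map_sub, hg0, PowerSeries.coeff_one]; simp
    have hhlt : ∀ i < j, ¬ p ∣ (PowerSeries.coeff i h).den := by
      intro i hi
      rcases Nat.eq_zero_or_pos i with h1 | h1
      · subst h1; rw [hh0]; simpa using hp.one_lt.ne'
      · rw [hcoeff i h1]; exact IH i hi (by omega)
    have key : PowerSeries.coeff j (g ^ m)
        = ∑ s ∈ Finset.range (m + 1),
            PowerSeries.coeff j (h ^ s) * (m.choose s : ℚ) := by
      have hg : g = h + 1 := by rw [hdef]; ring
      conv_lhs => rw [hg]
      rw [add_pow, map_sum]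
      refine Finset.sum_congr rfl fun s _ => ?_
      rw [one_pow, mul_one, ← map_natCast (PowerSeries.C (R := ℚ)) (m.choose s),
        PowerSeries.coeff_mul_C]
    have h1mem : (1 : ℕ) ∈ Finset.range (m + 1) := Finset.mem_range.mpr (by omega)
    rw [← Finset.sum_erase_add _ _ h1mem, pow_one, Nat.choose_one_right] at key
    have hrest : ¬ p ∣ (∑ s ∈ (Finset.range (m + 1)).erase 1,
        PowerSeries.coeff j (h ^ s) * (m.choose s : ℚ)).den := by
      refine den_sum' hp fun s hsmem => ?_
      have hs1 : s ≠ 1 := (Finset.mem_erase.mp hsmem).1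
      rcases Nat.eq_zero_or_pos s with h1 | h1
      · subst h1
        rw [pow_zero, PowerSeries.coeff_one, if_neg hj.ne', zero_mul]
        simpa using hp.one_lt.ne'
      · have hs2 : 2 ≤ s := by omega
        refine den_mul' hp (lemA hp h hh0 j hhlt s hs2) ?_
        simpa using hp.one_lt.ne'
    have hmj : ¬ p ∣ (PowerSeries.coeff j h * (m : ℚ)).den := by
      have heq : PowerSeries.coeff j h * (m : ℚ)
          = PowerSeries.coeff j (g ^ m)
            + (-(∑ s ∈ (Finset.range (m + 1)).erase 1,
                PowerSeries.coeff j (h ^ s) * (m.choose s : ℚ))) := by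
        rw [key]; ring
      rw [heq]
      refine den_add' hp (hgm j hjk) ?_
      rwa [Rat.neg_den]
    have hhj : ¬ p ∣ (PowerSeries.coeff j h).den := by
      have heq : PowerSeries.coeff j h
          = (PowerSeries.coeff j h * (m : ℚ)) / (m : ℚ) := by
        field_simp
      rw [heq]
      exact den_div' hp hm0 hmj hm
    rwa [hcoeff j hj] at hhj

/-- `p`-integrality up to `k` is preserved by powers. -/
private lemma lemM (hp : p.Prime) (k : ℕ) (g : PowerSeries ℚ)
    (hg : ∀ i ≤ k, ¬ p ∣ (PowerSeries.coeff i g).den) :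
    ∀ n, ∀ i ≤ k, ¬ p ∣ (PowerSeries.coeff i (g ^ n)).den := by
  intro n
  induction n with
  | zero =>
      intro i _
      rw [pow_zero, PowerSeries.coeff_one]
      split <;> simpa using hp.one_lt.ne'
  | succ n ih =>
      intro i hi
      rw [pow_succ, PowerSeries.coeff_mul]
      refine den_sum' hp fun x hx => ?_
      have hxy : x.1 + x.2 = i := Finset.HasAntidiagonal.mem_antidiagonal.mp hx
      exact den_mul' hp (ih _ (by omega)) (hg _ (by omega))

end Aux

/-- For `f = 1 + ∑_{i≥1} a_i x^i ∈ ℚ[[x]]` and a prime `p`: `p` divides the denominator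
(in lowest terms) of some `a_i`, `1 ≤ i ≤ k`, if and only if `ν_p(e_k(f)) > 0`, where
`e_k(f)` is the smallest positive integer `e` with `f^e ∈ ℤ[[x]] mod x^{k+1}`. -/
theorem stmt_7 (p : ℕ) (hp : p.Prime) (a : ℕ → ℚ) (ha0 : a 0 = 1) (k : ℕ) (hk : 1 ≤ k)
    (e : ℕ)
    (he : IsLeast {n : ℕ | 0 < n ∧ ∀ i ≤ k,
      (PowerSeries.coeff i ((PowerSeries.mk a) ^ n)).den = 1} e) :
    (∃ i, 1 ≤ i ∧ i ≤ k ∧ p ∣ (a i).den) ↔ 0 < padicValNat p e := by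
  obtain ⟨⟨hepos, hecoef⟩, hleast⟩ := he
  haveI : Fact p.Prime := ⟨hp⟩
  have hiff : 0 < padicValNat p e ↔ p ∣ e := by
    rw [pos_iff_ne_zero, ← dvd_iff_padicValNat_ne_zero hepos.ne']
  rw [hiff]
  have hf0 : PowerSeries.coeff 0 (PowerSeries.mk a) = 1 := by
    rw [PowerSeries.coeff_mk, ha0]
  constructor
  · rintro ⟨i, hi1, hik, hdvd⟩
    by_contra hpe
    have hint : ∀ i ≤ k, ¬ p ∣ (PowerSeries.coeff i ((PowerSeries.mk a) ^ e)).den := by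
      intro i hi
      rw [hecoef i hi]
      simpa using hp.one_lt.ne'
    have := lemL hp k (PowerSeries.mk a) hf0 hepos hpe hint i hik
    rw [PowerSeries.coeff_mk] at this
    exact this hdvd
  · intro hpe
    by_contra hno
    push_neg at hno
    have hfint : ∀ i ≤ k, ¬ p ∣ (PowerSeries.coeff i (PowerSeries.mk a)).den := by
      intro i hi
      rw [PowerSeries.coeff_mk]
      rcases Nat.eq_zero_or_pos i with h1 | h1
      · subst h1; rw [ha0]; simpa using hp.one_lt.ne'
      · exact hno i h1 hi
    obtain ⟨e', rfl⟩ := hpe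
    have he'pos : 0 < e' := by
      rcases Nat.eq_zero_or_pos e' with h | h
      · subst h; simp at hepos
      · exact h
    have hin : e' ∈ {n : ℕ | 0 < n ∧ ∀ i ≤ k,
        (PowerSeries.coeff i ((PowerSeries.mk a) ^ n)).den = 1} := by
      refine ⟨he'pos, fun i hi => ?_⟩
      rw [Nat.eq_one_iff_not_exists_prime_dvd]
      intro q hq
      by_cases hqp : q = p
      · subst hqp
        exact lemM hp k (PowerSeries.mk a) hfint e' i hi
      · have hq0 : PowerSeries.coeff 0 ((PowerSeries.mk a) ^ e') = 1 := by
          rw [PowerSeries.coeff_zero_eq_constantCoeff, map_pow,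
            ← PowerSeries.coeff_zero_eq_constantCoeff, hf0, one_pow]
        have hqnp : ¬ q ∣ p := fun hd =>
          hqp ((Nat.prime_dvd_prime_iff_eq hq hp).mp hd)
        have hint : ∀ i ≤ k,
            ¬ q ∣ (PowerSeries.coeff i (((PowerSeries.mk a) ^ e') ^ p)).den := by
          intro i hi
          rw [← pow_mul, mul_comm e' p, hecoef i hi]
          simpa using hq.one_lt.ne'
        exact lemL hq k ((PowerSeries.mk a) ^ e') hq0 hp.pos hqnp hint i hi
    have hle := hleast hin
    have : e' < p * e' := lt_mul_of_one_lt_left he'pos hp.one_lt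
    omega
end

section
/- Let f = 1 + Σ_{i≥1} a_i x^i ∈ Q[[x]] with f(0) = 1, and for k ≥ 1 let e_k(f) be the smallest positive integer e with f^e ≡ integer coefficients mod x^{k+1}. Define b_1 = a_1 and, for k ≥ 2, let b_k be the coefficient of x^k in f^{D(b_1)⋯D(b_{k-1})}, where D(q) denotes the denominator of the rational number q in lowest terms (D(0) = 1). Then e_t(f) = D(b_1)·D(b_2)⋯D(b_t) for every t ≥ 1. -/
open PowerSeries Finset

/-- `bSeq f k` is the rational `b_k`: `b_1 = a_1` and, for `k ≥ 2`, `b_k` is the coefficient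
of `x^k` in `f^{D(b_1)⋯D(b_{k-1})}`, where `D(q)` is the denominator of `q` in lowest terms. -/
noncomputable def bSeq (f : PowerSeries ℚ) : ℕ → ℚ
  | 0 => 0
  | k + 1 =>
    PowerSeries.coeff (R := ℚ) (k + 1)
      (f ^ (∏ i ∈ (Finset.range k).attach, (bSeq f (i.1 + 1)).den))
  termination_by k => k
  decreasing_by
    have := Finset.mem_range.mp i.2
    omega

private def IsIntQ (q : ℚ) : Prop := ∃ z : ℤ, (z : ℚ) = q

private lemma isIntQ_iff {q : ℚ} : q.den = 1 ↔ IsIntQ q := by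
  constructor
  · intro h
    exact ⟨q.num, (Rat.den_eq_one_iff q).mp h⟩
  · rintro ⟨z, rfl⟩
    exact Rat.den_intCast z

private lemma IsIntQ.add {a b : ℚ} (ha : IsIntQ a) (hb : IsIntQ b) : IsIntQ (a + b) := by
  obtain ⟨x, rfl⟩ := ha; obtain ⟨y, rfl⟩ := hb; exact ⟨x + y, by push_cast; ring⟩

private lemma IsIntQ.mul {a b : ℚ} (ha : IsIntQ a) (hb : IsIntQ b) : IsIntQ (a * b) := by
  obtain ⟨x, rfl⟩ := ha; obtain ⟨y, rfl⟩ := hb; exact ⟨x * y, by push_cast; ring⟩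

private lemma IsIntQ.sum {s : Finset ℕ} {g : ℕ → ℚ} (h : ∀ i ∈ s, IsIntQ (g i)) :
    IsIntQ (∑ i ∈ s, g i) := by
  classical
  induction s using Finset.induction with
  | empty => exact ⟨0, by simp⟩
  | insert x s hx ih =>
    rw [Finset.sum_insert hx]
    exact (h _ (Finset.mem_insert_self _ _)).add
      (ih fun i hi => h i (Finset.mem_insert_of_mem hi))

/-- den divides m if m • b is an integer -/
private lemma den_dvd_of_isIntQ {b : ℚ} {m : ℕ} (h : IsIntQ ((m : ℚ) * b)) : b.den ∣ m := by
  obtain ⟨z, hz⟩ := h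
  have h1 : (z : ℚ) * b.den = (m : ℚ) * b.num := by
    rw [hz, mul_assoc, Rat.mul_den_eq_num]
  have h2 : z * (b.den : ℤ) = (m : ℤ) * b.num := by exact_mod_cast h1
  have hdvd : (b.den : ℤ) ∣ (m : ℤ) * b.num := ⟨z, by linarith⟩
  have hcop : IsCoprime (b.den : ℤ) b.num := by
    rw [Int.isCoprime_iff_gcd_eq_one, Int.gcd, Int.natAbs_natCast]
    exact Nat.coprime_comm.mp b.reduced
  have := hcop.dvd_of_dvd_mul_right hdvd
  exact_mod_cast this

private lemma isIntQ_smul_of_den_dvd {b : ℚ} {m : ℕ} (h : b.den ∣ m) : IsIntQ ((m : ℚ) * b) := by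
  obtain ⟨s, rfl⟩ := h
  refine ⟨s * b.num, ?_⟩
  push_cast
  rw [mul_comm (b.den : ℚ) (s : ℚ), mul_assoc, mul_comm (b.den:ℚ) b, Rat.mul_den_eq_num]

private lemma bSeq_succ (f : PowerSeries ℚ) (k : ℕ) :
    bSeq f (k + 1) = PowerSeries.coeff (R := ℚ) (k + 1) (f ^ ∏ i ∈ Finset.Icc 1 k, (bSeq f i).den) := by
  rw [bSeq]
  congr 2
  rw [Finset.prod_attach (Finset.range k) (fun i => (bSeq f (i + 1)).den)]
  induction k with
  | zero => simp
  | succ n ih =>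
    rw [Finset.prod_range_succ, ih, ← Finset.prod_Icc_succ_top (by omega : 1 ≤ n + 1)]

private lemma constCoeff_pow (f : PowerSeries ℚ) (hf0 : PowerSeries.constantCoeff (R := ℚ) f = 1)
    (n : ℕ) : PowerSeries.coeff (R := ℚ) 0 (f ^ n) = 1 := by
  rw [PowerSeries.coeff_zero_eq_constantCoeff, map_pow, hf0, one_pow]

/-- The key congruence: coeff (k+1) (g^m) ≡ m * coeff (k+1) g  (mod ℤ). -/
private lemma coeff_pow_congr (g : PowerSeries ℚ) (hg0 : PowerSeries.constantCoeff (R := ℚ) g = 1)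
    (k : ℕ) (hint : ∀ m i, i ≤ k → IsIntQ (PowerSeries.coeff (R := ℚ) i (g ^ m))) :
    ∀ m : ℕ, IsIntQ (PowerSeries.coeff (R := ℚ) (k + 1) (g ^ m)
      - (m : ℚ) * PowerSeries.coeff (R := ℚ) (k + 1) g) := by
  intro m
  induction m with
  | zero => simp; exact ⟨0, by simp⟩
  | succ m ih =>
    have hexp : PowerSeries.coeff (R := ℚ) (k + 1) (g ^ (m + 1)) =
        ∑ j ∈ Finset.range (k + 2),
          PowerSeries.coeff (R := ℚ) j g * PowerSeries.coeff (R := ℚ) (k + 1 - j) (g ^ m) := by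
      rw [pow_succ, mul_comm, PowerSeries.coeff_mul,
        Finset.Nat.sum_antidiagonal_eq_sum_range_succ_mk]
    have hsplit : PowerSeries.coeff (R := ℚ) (k + 1) (g ^ (m + 1)) =
        PowerSeries.coeff (R := ℚ) (k + 1) (g ^ m) + PowerSeries.coeff (R := ℚ) (k + 1) g
        + ∑ j ∈ Finset.range k,
            PowerSeries.coeff (R := ℚ) (j + 1) g * PowerSeries.coeff (R := ℚ) (k - j) (g ^ m) := by
      rw [hexp, Finset.sum_range_succ, Finset.sum_range_succ']
      simp only [Nat.sub_self, PowerSeries.coeff_zero_eq_constantCoeff, map_pow, hg0, one_pow,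
        mul_one, Nat.sub_zero, hg0, one_mul]
      have : ∀ j ∈ Finset.range k, PowerSeries.coeff (R := ℚ) (j + 1) g *
          PowerSeries.coeff (R := ℚ) (k + 1 - (j + 1)) (g ^ m) =
          PowerSeries.coeff (R := ℚ) (j + 1) g * PowerSeries.coeff (R := ℚ) (k - j) (g ^ m) := by
        intro j hj
        have : k + 1 - (j + 1) = k - j := by omega
        rw [this]
      rw [Finset.sum_congr rfl this]
      ring
    have hmid : IsIntQ (∑ j ∈ Finset.range k,
        PowerSeries.coeff (R := ℚ) (j + 1) g * PowerSeries.coeff (R := ℚ) (k - j) (g ^ m)) := by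
      refine IsIntQ.sum fun j hj => ?_
      have hj' := Finset.mem_range.mp hj
      have h1 : IsIntQ (PowerSeries.coeff (R := ℚ) (j + 1) g) := by
        have := hint 1 (j + 1) (by omega)
        rwa [pow_one] at this
      exact h1.mul (hint m (k - j) (by omega))
    have heq : PowerSeries.coeff (R := ℚ) (k + 1) (g ^ (m + 1))
        - ((m + 1 : ℕ) : ℚ) * PowerSeries.coeff (R := ℚ) (k + 1) g =
        (PowerSeries.coeff (R := ℚ) (k + 1) (g ^ m) - (m : ℚ) * PowerSeries.coeff (R := ℚ) (k + 1) g)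
        + ∑ j ∈ Finset.range k,
            PowerSeries.coeff (R := ℚ) (j + 1) g * PowerSeries.coeff (R := ℚ) (k - j) (g ^ m) := by
      rw [hsplit]; push_cast; ring
    rw [heq]
    exact ih.add hmid

/-- Main induction: for n > 0, f^n has integer coefficients up to k iff E_k ∣ n. -/
private lemma key (f : PowerSeries ℚ) (hf0 : PowerSeries.constantCoeff (R := ℚ) f = 1) :
    ∀ k : ℕ, ∀ n : ℕ, 0 < n →
      ((∀ i ≤ k, (PowerSeries.coeff (R := ℚ) i (f ^ n)).den = 1) ↔
        (∏ i ∈ Finset.Icc 1 k, (bSeq f i).den) ∣ n) := by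
  intro k
  induction k with
  | zero =>
    intro n hn
    simp only [Finset.Icc_self, Nat.le_zero]
    constructor
    · intro _; simp
    · intro _ i hi
      subst hi
      rw [constCoeff_pow f hf0 n]
      rfl
  | succ k ih =>
    intro n hn
    set E := ∏ i ∈ Finset.Icc 1 k, (bSeq f i).den with hE
    have hEpos : 0 < E := Finset.prod_pos fun i _ => (bSeq f i).pos
    set g := f ^ E with hg
    have hg0 : PowerSeries.constantCoeff (R := ℚ) g = 1 := by
      rw [hg, map_pow, hf0, one_pow]
    set b := bSeq f (k + 1) with hb
    have hbcoeff : b = PowerSeries.coeff (R := ℚ) (k + 1) g := bSeq_succ f k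
    -- g^m has integer coefficients up to k for any m
    have hint : ∀ m i, i ≤ k → IsIntQ (PowerSeries.coeff (R := ℚ) i (g ^ m)) := by
      intro m i hi
      rcases Nat.eq_zero_or_pos m with rfl | hm
      · rcases Nat.eq_zero_or_pos i with rfl | hipos
        · exact ⟨1, by simp⟩
        · exact ⟨0, by simp [PowerSeries.coeff_one, Nat.pos_iff_ne_zero.mp hipos]⟩
      · rw [hg, ← pow_mul]
        exact isIntQ_iff.mp <| ((ih (E * m) (by positivity)).mpr ⟨m, rfl⟩) i hi
    have hcong := coeff_pow_congr g hg0 k hint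
    have hprod : ∏ i ∈ Finset.Icc 1 (k + 1), (bSeq f i).den = E * b.den := by
      rw [Finset.prod_Icc_succ_top (by omega : 1 ≤ k + 1), hE]
    rw [hprod]
    constructor
    · intro h
      have hEn : E ∣ n := (ih n hn).mp (fun i hi => h i (by omega))
      obtain ⟨m, rfl⟩ := hEn
      have hcoeff : PowerSeries.coeff (R := ℚ) (k + 1) (f ^ (E * m)) =
          PowerSeries.coeff (R := ℚ) (k + 1) (g ^ m) := by rw [hg, ← pow_mul]
      have h1 : IsIntQ (PowerSeries.coeff (R := ℚ) (k + 1) (g ^ m)) := by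
        rw [← hcoeff]
        exact isIntQ_iff.mp (h (k + 1) le_rfl)
      have h2 : IsIntQ ((m : ℚ) * b) := by
        have := hcong m
        rw [← hbcoeff] at this
        have : IsIntQ (PowerSeries.coeff (R := ℚ) (k + 1) (g ^ m)
            - (PowerSeries.coeff (R := ℚ) (k + 1) (g ^ m) - (m : ℚ) * b)) := by
          obtain ⟨x, hx⟩ := h1; obtain ⟨y, hy⟩ := this
          exact ⟨x - y, by push_cast; rw [hx, hy]⟩
        simpa using this
      exact mul_dvd_mul_left E (den_dvd_of_isIntQ h2)
    · rintro ⟨s, rfl⟩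
      intro i hi
      rcases Nat.lt_or_ge i (k + 1) with hik | hik
      · exact (ih (E * b.den * s) hn).mpr ⟨b.den * s, by ring⟩ i (by omega)
      · have hi' : i = k + 1 := by omega
        subst hi'
        have hcoeff : PowerSeries.coeff (R := ℚ) (k + 1) (f ^ (E * b.den * s)) =
            PowerSeries.coeff (R := ℚ) (k + 1) (g ^ (b.den * s)) := by
          rw [hg, ← pow_mul, mul_assoc]
        rw [hcoeff]
        have hmb : IsIntQ (((b.den * s : ℕ) : ℚ) * b) :=
          isIntQ_smul_of_den_dvd ⟨s, rfl⟩
        have := hcong (b.den * s)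
        rw [← hbcoeff] at this
        apply isIntQ_iff.mpr
        obtain ⟨x, hx⟩ := this; obtain ⟨y, hy⟩ := hmb
        exact ⟨x + y, by push_cast; rw [hx, hy]; ring⟩

/-- For `f = 1 + ∑ a_i x^i ∈ ℚ[[x]]`, the smallest positive integer `e` with
`f^e ∈ ℤ[[x]] mod x^{t+1}` equals `D(b_1) D(b_2) ⋯ D(b_t)`. -/
theorem stmt_8 (f : PowerSeries ℚ) (hf0 : PowerSeries.constantCoeff (R := ℚ) f = 1)
    (t : ℕ) (ht : 1 ≤ t) :
    IsLeast {n : ℕ | 0 < n ∧ ∀ i ≤ t, (PowerSeries.coeff (R := ℚ) i (f ^ n)).den = 1}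
      (∏ i ∈ Finset.Icc 1 t, (bSeq f i).den) := by
  set E := ∏ i ∈ Finset.Icc 1 t, (bSeq f i).den with hE
  have hEpos : 0 < E := Finset.prod_pos fun i _ => (bSeq f i).pos
  constructor
  · exact ⟨hEpos, (key f hf0 t E hEpos).mpr dvd_rfl⟩
  · rintro n ⟨hn, h⟩
    exact Nat.le_of_dvd hn ((key f hf0 t n hn).mp h)
end

section
/- Let p = 2q + 1 be an odd prime and m = 2t. Suppose θ_p(y) = 1 + Σ_{j=1}^{q-1} m_j y^j + (1/p) y^q ∈ Q[[y]] mod y^{t+1} with all m_j integers satisfying ν_p(m_j) = 0. Then θ_p(y)^h has p-integral coefficients mod y^{t+1} if and only if ν_p(h) ≥ max{ s + ν_p(s) : 0 ≤ s ≤ ⌊m/(p-1)⌋ } (with the s = 0 term interpreted as 0). -/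
open PowerSeries Finset

/-- Lower bound: `ν_p(h) ≤ ν_p(C(h,s)) + ν_p(s)`. -/
lemma aux_choose_lb {p : ℕ} [hp : Fact p.Prime] {h s : ℕ} (hh : 0 < h) (hs : 0 < s)
    (hsh : s ≤ h) :
    padicValNat p h ≤ padicValNat p (h.choose s) + padicValNat p s := by
  have key := Nat.Prime.emultiplicity_le_emultiplicity_choose_add (hp.out) h s
  rw [← padicValNat_eq_emultiplicity hh.ne', ← padicValNat_eq_emultiplicity (Nat.choose_pos hsh).ne',
    ← padicValNat_eq_emultiplicity hs.ne'] at key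
  exact_mod_cast key

/-- Exact Kummer valuation: if `1 ≤ s ≤ p^{ν_p(h)}`, then
`ν_p(C(h,s)) = ν_p(h) - ν_p(s)`. -/
lemma aux_choose_exact {p : ℕ} [hp : Fact p.Prime] {h s : ℕ} (hh : 0 < h) (hs : 0 < s)
    (hsv : s ≤ p ^ padicValNat p h) :
    padicValNat p (h.choose s) = padicValNat p h - padicValNat p s := by
  set v := padicValNat p h with hv
  set w := padicValNat p s with hw
  have hp1 : 1 < p := hp.out.one_lt
  have hpv : p ^ v ∣ h := pow_padicValNat_dvd
  have hsh : s ≤ h := hsv.trans (Nat.le_of_dvd hh hpv)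
  have hwv : w ≤ v := by
    have h1 : p ^ w ≤ s := Nat.le_of_dvd hs pow_padicValNat_dvd
    exact (Nat.pow_le_pow_iff_right hp1).mp (h1.trans hsv)
  have hvlog : v ≤ Nat.log p h := Nat.le_log_of_pow_le hp1 (Nat.le_of_dvd hh hpv)
  rw [padicValNat_choose (b := Nat.log p h + 1) hsh (Nat.lt_succ_self _)]
  have hfil : ((Finset.Ico 1 (Nat.log p h + 1)).filter
      fun i => p ^ i ≤ s % p ^ i + (h - s) % p ^ i) = Finset.Ico (w + 1) (v + 1) := by
    ext i
    simp only [Finset.mem_filter, Finset.mem_Ico]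
    constructor
    · rintro ⟨⟨h1i, hib⟩, hcarry⟩
      have hpi : 0 < p ^ i := pow_pos hp.out.pos _
      constructor
      · by_contra hiw
        push_neg at hiw
        have hiw' : i ≤ w := by omega
        have d1 : p ^ i ∣ s := (pow_dvd_pow p hiw').trans pow_padicValNat_dvd
        have d2 : p ^ i ∣ h := (pow_dvd_pow p (hiw'.trans hwv)).trans hpv
        have d3 : p ^ i ∣ h - s := Nat.dvd_sub d2 d1
        rw [Nat.mod_eq_zero_of_dvd d1, Nat.mod_eq_zero_of_dvd d3]
          at hcarry
        omega
      · by_contra hvi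
        push_neg at hvi
        have hvi' : v < i := by omega
        have hsp : s < p ^ i := lt_of_le_of_lt hsv (Nat.pow_lt_pow_right hp1 hvi')
        have hsmod : s % p ^ i = s := Nat.mod_eq_of_lt hsp
        have hdm : p ^ v ∣ h % p ^ i :=
          (Nat.dvd_mod_iff (pow_dvd_pow p hvi'.le)).mpr hpv
        have h2 : h % p ^ i ≠ 0 := by
          intro h0
          have : p ^ i ∣ h := Nat.dvd_of_mod_eq_zero h0
          have : i ≤ v := (padicValNat_dvd_iff_le hh.ne').mp this
          omega
        have h3 : p ^ v ≤ h % p ^ i := Nat.le_of_dvd (Nat.pos_of_ne_zero h2) hdm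
        have hs3 : s ≤ h % p ^ i := hsv.trans h3
        have hmlt : h % p ^ i < p ^ i := Nat.mod_lt _ hpi
        have key : (h - s) % p ^ i = h % p ^ i - s := by
          have hd := Nat.div_add_mod h (p ^ i)
          have h4 : h - s = (h % p ^ i - s) + p ^ i * (h / p ^ i) := by omega
          rw [h4, Nat.add_mul_mod_self_left,
            Nat.mod_eq_of_lt (lt_of_le_of_lt (Nat.sub_le _ _) hmlt)]
        rw [hsmod, key] at hcarry
        omega
    · rintro ⟨hwi, hiv⟩
      have hpi : 0 < p ^ i := pow_pos hp.out.pos _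
      have hiv' : i ≤ v := by omega
      refine ⟨⟨by omega, by omega⟩, ?_⟩
      have d2 : p ^ i ∣ h := (pow_dvd_pow p hiv').trans hpv
      have hnd : ¬ p ^ i ∣ s := by
        intro hd
        have : i ≤ w := (padicValNat_dvd_iff_le hs.ne').mp hd
        omega
      have hsum : (s % p ^ i + (h - s) % p ^ i) % p ^ i = 0 := by
        rw [← Nat.add_mod, Nat.add_sub_cancel' hsh, Nat.mod_eq_zero_of_dvd d2]
      have h5 : s % p ^ i ≠ 0 := fun h0 => hnd (Nat.dvd_of_mod_eq_zero h0)
      have h6 : 0 < s % p ^ i + (h - s) % p ^ i :=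
        (Nat.pos_of_ne_zero h5).trans_le (Nat.le_add_right _ _)
      exact Nat.le_of_dvd h6 (Nat.dvd_of_mod_eq_zero hsum)
  rw [hfil, Nat.card_Ico]
  omega

section auxlemmas

variable {p : ℕ} [hp : Fact p.Prime]

lemma aux_val_sum {ι : Type*} (F : Finset ι) (f : ι → ℚ)
    (hf : ∀ x ∈ F, 0 ≤ padicValRat p (f x)) : 0 ≤ padicValRat p (∑ x ∈ F, f x) := by
  classical
  induction F using Finset.induction with
  | empty => simp
  | @insert a F ha ih =>
    rw [Finset.sum_insert ha]
    by_cases h0 : f a + ∑ x ∈ F, f x = 0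
    · rw [h0]; simp
    · refine le_trans (le_min (hf a (Finset.mem_insert_self a F)) ?_)
        (padicValRat.min_le_padicValRat_add (p := p) h0)
      exact ih fun x hx => hf x (Finset.mem_insert_of_mem hx)

lemma aux_val_add_lt {a b : ℚ} (hb : 0 ≤ padicValRat p b) (ha : padicValRat p a < 0) :
    padicValRat p (a + b) = padicValRat p a := by
  have ha0 : a ≠ 0 := by rintro rfl; simp at ha
  by_cases hb0 : b = 0
  · simp [hb0]
  have hne : padicValRat p a ≠ padicValRat p b := by omega
  have hab : a + b ≠ 0 := by
    intro h0
    have hba : b = -a := by linarith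
    rw [hba, padicValRat.neg] at hb
    omega
  rw [padicValRat.add_eq_min hab ha0 hb0 hne, min_eq_left (by omega)]

lemma aux_term_val {h s : ℕ} (hsh : s ≤ h) :
    padicValRat p ((h.choose s : ℚ) * ((1 : ℚ)/p)^s) =
      (padicValNat p (h.choose s) : ℤ) - s := by
  have hp1 : 1 < p := hp.out.one_lt
  have hch : ((h.choose s : ℚ)) ≠ 0 := Nat.cast_ne_zero.mpr (Nat.choose_pos hsh).ne'
  have hpp : ((p : ℚ)) ≠ 0 := Nat.cast_ne_zero.mpr (by omega)
  have h1p : ((1 : ℚ)/p) ≠ 0 := by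
    rw [one_div]; exact inv_ne_zero hpp
  rw [padicValRat.mul hch (pow_ne_zero _ h1p), padicValRat.pow ((1 : ℚ)/p), one_div,
    padicValRat.inv, padicValRat.self hp1, padicValRat.of_nat]
  ring

lemma aux_term_nonneg {h s : ℕ} (hh : 0 < h)
    (hle : s + padicValNat p s ≤ padicValNat p h) (z : ℤ) :
    0 ≤ padicValRat p ((h.choose s : ℚ) * ((1 : ℚ)/p)^s * (z : ℚ)) := by
  by_cases hz0 : z = 0
  · simp [hz0]
  by_cases hsh : s ≤ h
  swap
  · push_neg at hsh
    simp [Nat.choose_eq_zero_of_lt hsh]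
  rcases Nat.eq_zero_or_pos s with hs0 | hs0
  · subst hs0
    simp only [Nat.choose_zero_right, Nat.cast_one, pow_zero, one_mul, mul_one]
    rw [padicValRat.of_int]
    exact Int.natCast_nonneg _
  have hz0' : ((z : ℚ)) ≠ 0 := Int.cast_ne_zero.mpr hz0
  have hch : ((h.choose s : ℚ)) ≠ 0 := Nat.cast_ne_zero.mpr (Nat.choose_pos hsh).ne'
  have hpp : ((p : ℚ)) ≠ 0 := Nat.cast_ne_zero.mpr (by have := hp.out.one_lt; omega)
  have h1p : ((1 : ℚ)/p) ≠ 0 := by rw [one_div]; exact inv_ne_zero hpp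
  rw [padicValRat.mul (mul_ne_zero hch (pow_ne_zero _ h1p)) hz0', aux_term_val hsh,
    padicValRat.of_int]
  have hlb := aux_choose_lb (p := p) hh hs0 hsh
  have h2 : (0:ℤ) ≤ (padicValInt p z : ℤ) := Int.natCast_nonneg _
  omega

end auxlemmas

/-- Let `p = 2q + 1` be an odd prime, `m = 2t`, and
`θ_p(y) = 1 + ∑_{j=1}^{q-1} m_j y^j + (1/p) y^q mod y^{t+1}` with the `m_j` integers of
`p`-adic valuation `0`.  Then `θ_p(y)^h` has `p`-integral coefficients mod `y^{t+1}` iff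
`ν_p(h) ≥ max{s + ν_p(s) : 0 ≤ s ≤ ⌊m/(p-1)⌋}`. -/
theorem stmt_9 (p q t m : ℕ) (hp : p.Prime) (hpq : p = 2 * q + 1) (hq : 1 ≤ q)
    (hm : m = 2 * t) (ht : 1 ≤ t)
    (c : ℕ → ℚ) (hc0 : c 0 = 1)
    (hcj : ∀ j, 1 ≤ j → j ≤ q - 1 → ∃ z : ℤ, c j = (z : ℚ) ∧ ¬ (p : ℤ) ∣ z)
    (hcq : c q = 1 / p)
    (hctop : ∀ j, q < j → c j = 0)
    (h : ℕ) (hh : 0 < h) :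
    (∀ i ≤ t, 0 ≤ padicValRat p (PowerSeries.coeff i ((PowerSeries.mk c) ^ h))) ↔
      (Finset.range (m / (p - 1) + 1)).sup (fun s => s + padicValNat p s) ≤
        padicValNat p h := by
  haveI : Fact p.Prime := ⟨hp⟩
  have hp1 : 1 < p := hp.one_lt
  set v := padicValNat p h with hv
  -- the divisor bound `m / (p - 1) = t / q`
  have hSq : m / (p - 1) = t / q := by
    rw [hm, hpq]
    have : 2 * q + 1 - 1 = 2 * q := by omega
    rw [this, Nat.mul_div_mul_left t q (by omega)]
  set S := m / (p - 1) with hS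
  -- the `integer part' of the series
  obtain ⟨g, hg0, hgmk⟩ : ∃ g : ℕ → ℤ, g 0 = 1 ∧ PowerSeries.mk c =
      (PowerSeries.C (R := ℚ) (1/p)) * PowerSeries.X ^ q +
        PowerSeries.map (Int.castRingHom ℚ) (PowerSeries.mk g) := by
    refine ⟨fun j => if hj : 1 ≤ j ∧ j ≤ q - 1 then (hcj j hj.1 hj.2).choose
      else if j = 0 then 1 else 0, by norm_num, ?_⟩
    ext i
    rw [map_add, PowerSeries.coeff_mk, PowerSeries.coeff_map, PowerSeries.coeff_mk,
      PowerSeries.coeff_C_mul, PowerSeries.coeff_X_pow]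
    by_cases hiq : i = q
    · subst hiq
      rw [if_pos rfl, dif_neg (by omega), if_neg (by omega), hcq]
      norm_num
    rw [if_neg hiq]
    by_cases hi0 : i = 0
    · subst hi0
      rw [dif_neg (by omega), if_pos rfl, hc0]
      norm_num
    by_cases hile : 1 ≤ i ∧ i ≤ q - 1
    · rw [dif_pos hile, mul_zero, zero_add, eq_intCast]
      exact (hcj i hile.1 hile.2).choose_spec.1
    · rw [dif_neg hile, if_neg hi0, hctop i (by omega)]
      norm_num
  set A : PowerSeries ℚ := PowerSeries.map (Int.castRingHom ℚ) (PowerSeries.mk g) with hA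
  -- the coefficients of powers of `A` are integers
  have hAz : ∀ n i : ℕ, (PowerSeries.coeff i) (A ^ n) =
      (((PowerSeries.coeff (R := ℤ) i) ((PowerSeries.mk g) ^ n) : ℤ) : ℚ) := by
    intro n i
    rw [hA, ← map_pow, PowerSeries.coeff_map]
    rfl
  -- the constant coefficient of powers of `A` is `1`
  have hA0 : ∀ n : ℕ, (PowerSeries.coeff 0) (A ^ n) = 1 := by
    intro n
    rw [PowerSeries.coeff_zero_eq_constantCoeff_apply, map_pow]
    have : PowerSeries.constantCoeff A = 1 := by
      rw [hA, ← PowerSeries.coeff_zero_eq_constantCoeff_apply, PowerSeries.coeff_map,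
        PowerSeries.coeff_mk, hg0]
      norm_num
    rw [this, one_pow]
  -- the coefficient formula
  have hcoeff : ∀ i : ℕ, (PowerSeries.coeff i) ((PowerSeries.mk c) ^ h) =
      ∑ s ∈ Finset.range (h + 1), (if q * s ≤ i then
        ((h.choose s : ℚ) * ((1 : ℚ)/p) ^ s *
          ((PowerSeries.coeff (i - q * s)) (A ^ (h - s)))) else 0) := by
    intro i
    rw [hgmk, add_pow, map_sum]
    refine Finset.sum_congr rfl fun s hs => ?_
    have hterm : (PowerSeries.C (R := ℚ) (1/p) * PowerSeries.X ^ q) ^ s * A ^ (h - s)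
        * ((h.choose s : ℕ) : PowerSeries ℚ) =
        PowerSeries.C (((1 : ℚ)/p) ^ s * (h.choose s : ℚ)) *
          (A ^ (h - s) * PowerSeries.X ^ (q * s)) := by
      have hc' : (((h.choose s : ℕ) : PowerSeries ℚ)) = PowerSeries.C ((h.choose s : ℚ)) := by
        simp
      rw [hc', mul_pow, ← map_pow, ← pow_mul, map_mul, mul_comm q s, pow_mul]
      ring
    rw [hterm, PowerSeries.coeff_C_mul, PowerSeries.coeff_mul_X_pow']
    split_ifs with hqs
    · ring
    · ring
  constructor
  · -- necessity
    intro hint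
    by_contra hMv
    push_neg at hMv
    rw [Finset.lt_sup_iff] at hMv
    obtain ⟨s1, hs1mem, hs1⟩ := hMv
    have hex : ∃ s, v < s + padicValNat p s := ⟨s1, hs1⟩
    set s0 := Nat.find hex with hs0def
    have hPs0 : v < s0 + padicValNat p s0 := Nat.find_spec hex
    have hs0S : s0 ≤ S := le_trans (Nat.find_le hs1) (by
      have := Finset.mem_range.mp hs1mem; omega)
    have hs0pv : s0 ≤ p ^ v := Nat.find_le (by
      rw [padicValNat.prime_pow]
      have : 1 ≤ p ^ v := Nat.one_le_pow _ _ (by omega)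
      omega)
    have hs0pos : 0 < s0 := by
      rcases Nat.eq_zero_or_pos s0 with h0 | h0
      · rw [h0] at hPs0; simp [padicValNat.zero] at hPs0
      · exact h0
    have hs0h : s0 ≤ h := hs0pv.trans (Nat.le_of_dvd hh pow_padicValNat_dvd)
    have hw0v : padicValNat p s0 ≤ v := by
      have h1 : p ^ padicValNat p s0 ≤ s0 := Nat.le_of_dvd hs0pos pow_padicValNat_dvd
      exact (Nat.pow_le_pow_iff_right hp1).mp (h1.trans hs0pv)
    have hqi : q * s0 ≤ t := by
      have h1 : q * s0 ≤ q * (t / q) := Nat.mul_le_mul_left q (by omega)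
      have h2 : q * (t / q) ≤ t := Nat.mul_div_le t q
      omega
    have hkey := hint (q * s0) hqi
    rw [hcoeff] at hkey
    have hmem : s0 ∈ Finset.range (h + 1) := Finset.mem_range.mpr (by omega)
    rw [← Finset.add_sum_erase _ _ hmem] at hkey
    have hT : (if q * s0 ≤ q * s0 then
        ((h.choose s0 : ℚ) * ((1 : ℚ)/p) ^ s0 *
          ((PowerSeries.coeff (q * s0 - q * s0)) (A ^ (h - s0)))) else 0) =
        (h.choose s0 : ℚ) * ((1 : ℚ)/p) ^ s0 := by
      rw [if_pos le_rfl, Nat.sub_self, hA0, mul_one]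
    rw [hT] at hkey
    have hrest : 0 ≤ padicValRat p (∑ s ∈ (Finset.range (h + 1)).erase s0,
        (if q * s ≤ q * s0 then
          ((h.choose s : ℚ) * ((1 : ℚ)/p) ^ s *
            ((PowerSeries.coeff (q * s0 - q * s)) (A ^ (h - s)))) else 0)) := by
      refine aux_val_sum _ _ fun s hs => ?_
      obtain ⟨hsne, hsr⟩ := Finset.mem_erase.mp hs
      split_ifs with hqs
      · have hss0 : s < s0 := by
          by_contra hge
          push_neg at hge
          have h1 : s0 + 1 ≤ s := by omega
          have h2 : q * (s0 + 1) ≤ q * s := Nat.mul_le_mul_left q h1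
          have h3 : q * (s0 + 1) = q * s0 + q := by ring
          omega
        have hle : s + padicValNat p s ≤ v := by
          rcases Nat.eq_zero_or_pos s with h0 | h0
          · rw [h0]; simp [padicValNat.zero]
          · have := Nat.find_min hex hss0
            omega
        rw [hAz]
        exact aux_term_nonneg hh hle _
      · simp
    have hTval : padicValRat p ((h.choose s0 : ℚ) * ((1 : ℚ)/p) ^ s0) < 0 := by
      rw [aux_term_val hs0h, aux_choose_exact hh hs0pos hs0pv]
      have : ((v - padicValNat p s0 : ℕ) : ℤ) = (v : ℤ) - padicValNat p s0 := by
        omega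
      rw [this]
      omega
    rw [aux_val_add_lt hrest hTval] at hkey
    omega
  · -- sufficiency
    intro hMv i hi
    rw [hcoeff]
    refine aux_val_sum _ _ fun s hs => ?_
    split_ifs with hqs
    · have hle : s + padicValNat p s ≤ v := by
        rcases Nat.eq_zero_or_pos s with h0 | h0
        · rw [h0]; simp [padicValNat.zero]
        · have hsS : s ≤ S := by
            rw [hSq, Nat.le_div_iff_mul_le (show 0 < q by omega), Nat.mul_comm]
            omega
          refine le_trans ?_ hMv
          exact Finset.le_sup (f := fun s => s + padicValNat p s)
            (Finset.mem_range.mpr (by omega))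
      rw [hAz]
      exact aux_term_nonneg hh hle _
    · simp
end

section
/- Let t ≥ 1 and consider f(y) = (1 + (1/4)y)^{1/2} ∈ Q[[y]], i.e., the binomial series Σ_{j≥0} C(1/2, j) (1/4)^j y^j. Then the smallest positive integer h such that f^h has 2-integral coefficients modulo y^{t+1} has 2-adic valuation equal to max{ r + ν_2(r) : 0 ≤ r ≤ 2t } (with the r = 0 term interpreted as 0). -/
open PowerSeries Finset

noncomputable def Faux (s : ℚ) : PowerSeries ℚ :=
  PowerSeries.mk (fun j => Ring.choose s j * ((1 : ℚ)/4) ^ j)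

lemma Faux_mul (r s : ℚ) : Faux r * Faux s = Faux (r + s) := by
  ext i
  rw [Faux, Faux, Faux, coeff_mul, coeff_mk, Ring.add_choose_eq i (Commute.all r s),
    Finset.sum_mul]
  refine Finset.sum_congr rfl fun p hp => ?_
  rw [coeff_mk, coeff_mk]
  rw [Finset.HasAntidiagonal.mem_antidiagonal] at hp
  rw [← hp, pow_add]
  ring

lemma Faux_zero : Faux 0 = 1 := by
  ext i
  rw [Faux, coeff_mk, coeff_one, Ring.choose_zero_ite]
  by_cases hi : i = 0 <;> simp [hi]

lemma Faux_pow (n : ℕ) : (Faux (1/2)) ^ n = Faux (n / 2) := by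
  induction n with
  | zero => simp [Faux_zero]
  | succ n ih =>
    rw [pow_succ, ih, Faux_mul]
    norm_num
    ring_nf

lemma descPoch_smeval (i : ℕ) (x : ℚ) :
    (descPochhammer ℤ i).smeval x = ∏ k ∈ range i, (x - k) := by
  induction i with
  | zero => simp [descPochhammer, Polynomial.smeval_one]
  | succ i ih =>
    rw [descPochhammer_succ_right, Polynomial.smeval_mul, ih, prod_range_succ]
    congr 1
    rw [Polynomial.smeval_sub, Polynomial.smeval_X, Polynomial.smeval_natCast]
    simp

lemma choose_eq (i : ℕ) (x : ℚ) :
    Ring.choose x i = (∏ k ∈ range i, (x - k)) / i.factorial := by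
  have h := Ring.descPochhammer_eq_factorial_smul_choose x i
  rw [descPoch_smeval] at h
  rw [h]
  field_simp
  rw [nsmul_eq_mul]; ring

lemma coeff_formula (n i : ℕ) :
    PowerSeries.coeff i
        ((PowerSeries.mk (fun j => Ring.choose ((1 : ℚ)/2) j * ((1 : ℚ)/4) ^ j)) ^ n)
      = ((∏ k ∈ range i, ((n : ℤ) - 2 * k) : ℤ) : ℚ) / (8 ^ i * i.factorial) := by
  have h0 : PowerSeries.mk (fun j => Ring.choose ((1 : ℚ)/2) j * ((1 : ℚ)/4) ^ j)
      = Faux (1/2) := rfl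
  rw [h0, Faux_pow, Faux, coeff_mk, choose_eq]
  have hprod : (∏ k ∈ range i, ((n : ℚ)/2 - k))
      = (1/2)^i * ∏ k ∈ range i, ((n : ℚ) - 2 * k) := by
    rw [← Finset.card_range i, ← prod_const (b := (1/2 : ℚ)), Finset.card_range,
      ← prod_mul_distrib]
    refine prod_congr rfl fun k _ => ?_
    ring
  push_cast
  rw [hprod]
  field_simp
  rw [show (8:ℚ) = 2 * 4 by norm_num, mul_pow]
  simp only [mul_assoc, ← mul_pow]; norm_num
  rw [mul_comm _ ((2:ℚ)^i), ← mul_assoc, ← mul_pow]; norm_num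

lemma v2_sub {a b : ℕ} (hb : 0 < b) (hba : b < a)
    (hv : padicValNat 2 b < padicValNat 2 a) :
    padicValNat 2 (a - b) = padicValNat 2 b := by
  set v := padicValNat 2 b with hvdef
  obtain ⟨b', hb'⟩ : (2:ℕ) ^ v ∣ b := pow_padicValNat_dvd
  obtain ⟨a', ha'⟩ : (2:ℕ) ^ (v+1) ∣ a :=
    (padicValNat_dvd_iff (p := 2) (v+1) a).mpr (Or.inr hv)
  have hb'odd : ¬ 2 ∣ b' := by
    rintro ⟨c, hc⟩
    have h1 : (2:ℕ) ^ (v+1) ∣ b := ⟨c, by rw [hb', hc, pow_succ]; ring⟩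
    have := (padicValNat_dvd_iff (p := 2) (v+1) b).mp h1
    omega
  have hb'pos : 0 < b' := by
    rcases Nat.eq_zero_or_pos b' with h | h
    · simp [h] at hb'; omega
    · exact h
  have hlt : b' < 2 * a' := by
    have h2 : (0:ℕ) < 2 ^ v := by positivity
    have := hba
    rw [ha', hb', pow_succ] at this
    calc b' ≤ 2^v * b' / 2^v := by rw [Nat.mul_div_cancel_left _ h2]
    _ < 2 * a' := by
        rw [Nat.mul_div_cancel_left _ h2] at *
        nlinarith [this]
  have hkey : a - b = 2 ^ v * (2 * a' - b') := by
    rw [ha', hb', pow_succ, Nat.mul_sub]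
    ring_nf
  have hcodd : ¬ 2 ∣ (2 * a' - b') := by
    rintro ⟨c, hc⟩
    exact hb'odd ⟨a' - c, by omega⟩
  rw [hkey, padicValNat.mul (by positivity) (by omega), padicValNat.prime_pow,
    padicValNat.eq_zero_of_not_dvd hcodd]
  omega

lemma key_val (n j : ℕ) (hn : 2 * j < n)
    (hv : ∀ k, 1 ≤ k → k ≤ j → 1 + padicValNat 2 k < padicValNat 2 n) :
    padicValInt 2 (∏ k ∈ range (j + 1), ((n : ℤ) - 2 * k)) =
      padicValNat 2 n + j + padicValNat 2 j.factorial := by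
  induction j with
  | zero => simp [padicValInt.of_nat]
  | succ j ih =>
    have hn' : 2 * j < n := by omega
    have hv' : ∀ k, 1 ≤ k → k ≤ j → 1 + padicValNat 2 k < padicValNat 2 n :=
      fun k h1 h2 => hv k h1 (by omega)
    have hprodne : (∏ k ∈ range (j + 1), ((n : ℤ) - 2 * k)) ≠ 0 := by
      refine prod_ne_zero_iff.mpr fun k hk => ?_
      rw [mem_range] at hk
      have : (2 * k : ℤ) < n := by exact_mod_cast (by omega : 2 * k < n)
      omega
    have hfacne : ((n : ℤ) - 2 * (j + 1)) ≠ 0 := by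
      have : (2 * (j+1) : ℤ) < n := by exact_mod_cast hn
      omega
    rw [prod_range_succ]
    push_cast
    rw [padicValInt.mul hprodne (by exact hfacne), ih hn' hv']
    have hcast : ((n : ℤ) - 2 * ((j:ℤ) + 1)) = ((n - 2 * (j + 1) : ℕ) : ℤ) := by
      have : 2 * (j + 1) ≤ n := by omega
      push_cast [this]
      ring
    have hval2 : padicValNat 2 (2 * (j + 1)) = 1 + padicValNat 2 (j + 1) := by
      rw [padicValNat.mul (by omega) (by omega), padicValNat.self (by omega)]
    have hfac : padicValInt 2 ((n : ℤ) - 2 * ((j:ℤ) + 1)) = 1 + padicValNat 2 (j + 1) := by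
      push_cast at hcast
      rw [hcast, padicValInt.of_nat,
        v2_sub (by omega) (by omega) (by rw [hval2]; exact hv (j+1) (by omega) le_rfl)]
      exact hval2
    push_cast at hfac ⊢
    rw [hfac, Nat.factorial_succ, padicValNat.mul (by omega) (Nat.factorial_ne_zero j)]
    ring

lemma v2_lt_self {k : ℕ} (hk : 0 < k) : padicValNat 2 k < k :=
  lt_of_lt_of_le Nat.lt_two_pow_self (Nat.le_of_dvd hk pow_padicValNat_dvd)

lemma prod_range_add_one (m : ℕ) : ∏ k ∈ range m, (k + 1) = m.factorial := by
  induction m with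
  | zero => simp
  | succ m ih => rw [prod_range_succ, ih, Nat.factorial_succ]; ring

lemma prod_id_factorial (m : ℕ) : ∏ k ∈ range m, (m - k) = m.factorial := by
  have h1 : ∏ k ∈ range m, (m - k) = ∏ k ∈ range m, (m - 1 - k + 1) := by
    refine prod_congr rfl fun k hk => ?_
    rw [mem_range] at hk; omega
  rw [h1, prod_range_reflect (fun j => j + 1) m, prod_range_add_one]

lemma prod_even (m : ℕ) :
    (∏ k ∈ range m, ((2 * m : ℤ) - 2 * k)) = 2 ^ m * m.factorial := by
  have h1 : ∀ k ∈ range m, ((2 * m : ℤ) - 2 * k) = ((2 * (m - k) : ℕ) : ℤ) := by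
    intro k hk; rw [mem_range] at hk; push_cast [Nat.le_of_lt hk]; ring
  rw [prod_congr rfl h1, ← Nat.cast_prod, prod_mul_distrib, prod_const, card_range,
    prod_id_factorial]
  push_cast; ring

lemma val_coeff (n i : ℕ) (hP : (∏ k ∈ range i, ((n : ℤ) - 2 * k)) ≠ 0) :
    padicValRat 2 (PowerSeries.coeff i
      ((PowerSeries.mk (fun j => Ring.choose ((1 : ℚ)/2) j * ((1 : ℚ)/4) ^ j)) ^ n))
      = (padicValInt 2 (∏ k ∈ range i, ((n : ℤ) - 2 * k)) : ℤ)
        - (3 * i + padicValNat 2 i.factorial) := by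
  rw [coeff_formula]
  have h1 : ((∏ k ∈ range i, ((n : ℤ) - 2 * k) : ℤ) : ℚ) ≠ 0 := Int.cast_ne_zero.mpr hP
  have h2 : ((8:ℚ) ^ i * i.factorial) ≠ 0 := by positivity
  rw [padicValRat.div h1 h2, padicValRat.of_int,
    padicValRat.mul (by positivity) (by exact_mod_cast Nat.factorial_ne_zero i)]
  have h3 : padicValRat 2 ((8:ℚ) ^ i) = 3 * i := by
    rw [show (8:ℚ) = 2^3 by norm_num, ← pow_mul, padicValRat.pow (q := 2)]
    have : padicValRat 2 (2:ℚ) = 1 := by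
      exact_mod_cast padicValRat.self (p := 2) (by norm_num)
    rw [this]
    push_cast; ring
  have h4 : padicValRat 2 ((i.factorial : ℚ)) = padicValNat 2 i.factorial := by
    exact_mod_cast padicValRat.of_nat (n := i.factorial) (p := 2)
  rw [h3, h4]

lemma cond_iff (n i : ℕ) (hP : (∏ k ∈ range i, ((n : ℤ) - 2 * k)) ≠ 0) :
    (0 ≤ padicValRat 2 (PowerSeries.coeff i
      ((PowerSeries.mk (fun j => Ring.choose ((1 : ℚ)/2) j * ((1 : ℚ)/4) ^ j)) ^ n)))
    ↔ 3 * i + padicValNat 2 i.factorial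
        ≤ padicValInt 2 (∏ k ∈ range i, ((n : ℤ) - 2 * k)) := by
  rw [val_coeff n i hP]
  omega

lemma prod_ne (n j : ℕ) (hn : 2 * j < n) :
    (∏ k ∈ range (j + 1), ((n : ℤ) - 2 * k)) ≠ 0 := by
  refine prod_ne_zero_iff.mpr fun k hk => ?_
  rw [mem_range] at hk
  have : (2 * k : ℤ) < n := by exact_mod_cast (by omega : 2 * k < n)
  omega

/-- Let `f(y) = (1 + y/4)^{1/2} = ∑_j C(1/2, j) (1/4)^j y^j ∈ ℚ[[y]]`.  For `t ≥ 1`, the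
smallest positive integer `h` such that `f^h` has `2`-integral coefficients mod `y^{t+1}`
has `2`-adic valuation `max{r + ν_2(r) : 0 ≤ r ≤ 2t}`. -/
theorem stmt_10 (t : ℕ) (ht : 1 ≤ t) (h : ℕ)
    (hh : IsLeast {n : ℕ | 0 < n ∧ ∀ i ≤ t,
      0 ≤ padicValRat 2 (PowerSeries.coeff i
        ((PowerSeries.mk (fun j => Ring.choose ((1 : ℚ)/2) j * ((1 : ℚ)/4) ^ j)) ^ n))} h) :
    padicValNat 2 h = (Finset.range (2 * t + 1)).sup (fun r => r + padicValNat 2 r) := by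
  set M := (Finset.range (2 * t + 1)).sup (fun r => r + padicValNat 2 r) with hMdef
  have hM : ∀ r, r ≤ 2 * t → r + padicValNat 2 r ≤ M := fun r hr =>
    Finset.le_sup (f := fun r => r + padicValNat 2 r) (mem_range.mpr (by omega))
  have hv2t : 1 ≤ padicValNat 2 (2 * t) :=
    one_le_padicValNat_of_dvd (by omega) ⟨t, rfl⟩
  have hMge : 2 * t + 1 ≤ M := le_trans (by omega) (hM (2 * t) le_rfl)
  have hMlt : M < 2 ^ M := (Nat.lt_two_pow_self (n := M))
  -- claim 1 : 2^M is in the set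
  have hmem : (2 ^ M) ∈ {n : ℕ | 0 < n ∧ ∀ i ≤ t,
      0 ≤ padicValRat 2 (PowerSeries.coeff i
        ((PowerSeries.mk (fun j => Ring.choose ((1 : ℚ)/2) j * ((1 : ℚ)/4) ^ j)) ^ n))} := by
    refine ⟨by positivity, fun i hi => ?_⟩
    rcases Nat.eq_zero_or_pos i with rfl | hipos
    · rw [cond_iff _ _ (by simp)]
      simp
    · obtain ⟨j, rfl⟩ : ∃ j, i = j + 1 := ⟨i - 1, by omega⟩
      have hn : 2 * j < 2 ^ M := by omega
      have hv : ∀ k, 1 ≤ k → k ≤ j → 1 + padicValNat 2 k < padicValNat 2 (2 ^ M) := by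
        intro k hk1 hk2
        rw [padicValNat.prime_pow]
        have := v2_lt_self (k := k) (by omega)
        omega
      rw [cond_iff _ _ (prod_ne _ j hn), key_val _ j hn hv, padicValNat.prime_pow]
      have hfs : padicValNat 2 (j+1).factorial
          = padicValNat 2 (j+1) + padicValNat 2 j.factorial := by
        rw [Nat.factorial_succ, padicValNat.mul (by omega) (Nat.factorial_ne_zero j)]
      have hr : 2 * (j + 1) + padicValNat 2 (2 * (j + 1)) ≤ M := hM _ (by omega)
      have hv2 : padicValNat 2 (2 * (j + 1)) = 1 + padicValNat 2 (j + 1) := by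
        rw [padicValNat.mul (by omega) (by omega), padicValNat.self (by omega)]
      omega
  obtain ⟨⟨hpos, hcond⟩, hlb⟩ := hh
  have hcond' : ∀ i ≤ t, (∏ k ∈ range i, ((h : ℤ) - 2 * k)) ≠ 0 →
      3 * i + padicValNat 2 i.factorial
        ≤ padicValInt 2 (∏ k ∈ range i, ((h : ℤ) - 2 * k)) :=
    fun i hi hP => (cond_iff h i hP).mp (hcond i hi)
  -- (a) ν h ≥ 3
  have hP1 : (∏ k ∈ range 1, ((h : ℤ) - 2 * k)) = (h : ℤ) := by simp
  have hnu3 : 3 ≤ padicValNat 2 h := by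
    have := hcond' 1 ht (by rw [hP1]; exact_mod_cast hpos.ne')
    rw [hP1, padicValInt.of_nat] at this
    simpa using this
  -- (b) h > 2t
  have h2t : 2 * t < h := by
    by_contra hle
    push_neg at hle
    obtain ⟨m, rfl⟩ : 2 ∣ h := dvd_of_one_le_padicValNat (by omega)
    have hm1 : 1 ≤ m := by omega
    have hmt : m ≤ t := by omega
    have hval : padicValInt 2 (∏ k ∈ range m, ((2 * m : ℤ) - 2 * k))
        = m + padicValNat 2 m.factorial := by
      rw [prod_even]
      have : ((2:ℤ) ^ m * m.factorial) = ((2 ^ m * m.factorial : ℕ) : ℤ) := by push_cast; ring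
      rw [this, padicValInt.of_nat,
        padicValNat.mul (by positivity) (Nat.factorial_ne_zero m), padicValNat.prime_pow]
    have hcast : (∏ k ∈ range m, (((2 * m : ℕ) : ℤ) - 2 * k))
        = (∏ k ∈ range m, ((2 * m : ℤ) - 2 * k)) := by push_cast; rfl
    have := hcond' m hmt (by rw [hcast, prod_even]; positivity)
    rw [hcast, hval] at this
    omega
  -- (c) induction
  have key : ∀ i, 1 ≤ i → i ≤ t → 2 * i + 1 + padicValNat 2 i ≤ padicValNat 2 h := by
    intro i h1
    induction i, h1 using Nat.le_induction with
    | base => intro _; simpa using hnu3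
    | succ i hi ih =>
      intro hit
      have IH := ih (by omega)
      have hn : 2 * i < h := by omega
      have hv : ∀ k, 1 ≤ k → k ≤ i → 1 + padicValNat 2 k < padicValNat 2 h := by
        intro k hk1 hk2
        have := v2_lt_self (k := k) (by omega)
        omega
      have hc := hcond' (i + 1) hit (prod_ne h i hn)
      rw [key_val h i hn hv] at hc
      have hfs : padicValNat 2 (i+1).factorial
          = padicValNat 2 (i+1) + padicValNat 2 i.factorial := by
        rw [Nat.factorial_succ, padicValNat.mul (by omega) (Nat.factorial_ne_zero i)]
      omega
  -- (d) M ≤ ν h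
  have hsup : M ≤ padicValNat 2 h := by
    refine Finset.sup_le fun r hr => ?_
    rw [mem_range] at hr
    rcases Nat.eq_zero_or_pos r with rfl | hr1
    · simp
    rcases Nat.even_or_odd r with ⟨i, hi⟩ | hodd
    · have hi' : r = 2 * i := by omega
      have h1i : 1 ≤ i := by omega
      have hit : i ≤ t := by omega
      have hνr : padicValNat 2 r = 1 + padicValNat 2 i := by
        rw [hi', padicValNat.mul (by omega) (by omega), padicValNat.self (by omega)]
      have := key i h1i hit
      omega
    · have hmod : r % 2 = 1 := Nat.odd_iff.mp hodd
      have hν0 : padicValNat 2 r = 0 := padicValNat.eq_zero_of_not_dvd (by omega)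
      have hr2 : r + 1 ≤ 2 * t := by omega
      set i := (r + 1) / 2 with hidef
      have hri : r + 1 = 2 * i := by omega
      have h1i : 1 ≤ i := by omega
      have hit : i ≤ t := by omega
      have := key i h1i hit
      omega
  have hle : h ≤ 2 ^ M := hlb hmem
  have hge : 2 ^ M ≤ h :=
    le_trans (Nat.pow_le_pow_right (by omega) hsup) (Nat.le_of_dvd hpos pow_padicValNat_dvd)
  have heq : h = 2 ^ M := le_antisymm hle hge
  rw [heq, padicValNat.prime_pow]
end

section
/- Let p be an odd prime, q = (p-1)/2, and m = 2t with t ≥ 1. Suppose f(y) = 1 + Σ_{j=1}^{q-1} m_j y^j + (1/p) y^q mod y^{t+1} where m_j ∈ Z with ν_p(m_j) = 0. Then f is a strict D-series at p of type (q, 1): ν_p of the coefficient of y^q is -1, and for every k > q with nonzero coefficient c_k of y^k in f (here c_k = 0 for q < k ≤ t), ν_p(c_k) > -⌊k/q⌋. Consequently ν_p(e_t(f)) = max{ r + ν_p(r) : 0 ≤ r ≤ ⌊t/q⌋ } = max{ r + ν_p(r) : 0 ≤ r ≤ ⌊m/(p-1)⌋ }. -/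
open PowerSeries Finset

namespace Stmt17Aux

/-- `x` is `p`-integral. -/
def Pint (p : ℕ) (x : ℚ) : Prop := ∃ d : ℤ, ¬(p : ℤ) ∣ d ∧ ∃ z : ℤ, x * d = z

variable {p : ℕ}

lemma not_dvd_one (hp : p.Prime) : ¬ (p : ℤ) ∣ (1 : ℤ) := by
  rw [show ((1 : ℤ)) = ((1 : ℕ) : ℤ) from rfl, Int.natCast_dvd_natCast, Nat.dvd_one]
  exact hp.ne_one

lemma pint_int (hp : p.Prime) (z : ℤ) : Pint p z :=
  ⟨1, not_dvd_one hp, z, by push_cast; ring⟩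

lemma pint_zero (hp : p.Prime) : Pint p 0 := by simpa using pint_int hp 0

lemma pint_add (hp : p.Prime) {x y : ℚ} (hx : Pint p x) (hy : Pint p y) : Pint p (x + y) := by
  obtain ⟨d1, hd1, z1, hz1⟩ := hx
  obtain ⟨d2, hd2, z2, hz2⟩ := hy
  refine ⟨d1 * d2, ?_, z1 * d2 + z2 * d1, ?_⟩
  · intro h
    rcases (Int.Prime.dvd_mul' hp h) with h | h
    exacts [hd1 h, hd2 h]
  · push_cast
    push_cast at hz1 hz2
    linear_combination d2 * hz1 + d1 * hz2

lemma pint_mul (hp : p.Prime) {x y : ℚ} (hx : Pint p x) (hy : Pint p y) : Pint p (x * y) := by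
  obtain ⟨d1, hd1, z1, hz1⟩ := hx
  obtain ⟨d2, hd2, z2, hz2⟩ := hy
  refine ⟨d1 * d2, ?_, z1 * z2, ?_⟩
  · intro h
    rcases (Int.Prime.dvd_mul' hp h) with h | h
    exacts [hd1 h, hd2 h]
  · push_cast
    push_cast at hz1 hz2
    linear_combination y * d2 * hz1 + z1 * hz2

lemma pint_neg {x : ℚ} (hx : Pint p x) : Pint p (-x) := by
  obtain ⟨d, hd, z, hz⟩ := hx
  exact ⟨d, hd, -z, by push_cast; linear_combination -hz⟩

lemma pint_sub (hp : p.Prime) {x y : ℚ} (hx : Pint p x) (hy : Pint p y) : Pint p (x - y) := by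
  simpa [sub_eq_add_neg] using pint_add hp hx (pint_neg hy)

lemma pint_sum (hp : p.Prime) {α : Type*} (s : Finset α) (f : α → ℚ)
    (h : ∀ a ∈ s, Pint p (f a)) : Pint p (∑ a ∈ s, f a) :=
  Finset.sum_induction f (Pint p) (fun _ _ => pint_add hp) (pint_zero hp) h

lemma pint_iff (hp : p.Prime) (x : ℚ) : Pint p x ↔ 0 ≤ padicValRat p x := by
  haveI := Fact.mk hp
  constructor
  · rintro ⟨d, hd, z, hz⟩
    rcases eq_or_ne x 0 with rfl | hx
    · simp
    have hd0 : d ≠ 0 := fun h => hd (h ▸ dvd_zero _)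
    have hz0 : z ≠ 0 := by
      rintro rfl
      rcases mul_eq_zero.1 (by exact_mod_cast hz) with h | h
      · exact hx h
      · exact hd0 (by exact_mod_cast h)
    have hx' : x = (z : ℚ) / (d : ℚ) := by
      rw [eq_div_iff (by exact_mod_cast hd0)]; exact hz
    rw [hx', padicValRat.div (p := p) (by exact_mod_cast hz0) (by exact_mod_cast hd0),
      padicValRat.of_int, padicValRat.of_int, padicValInt.eq_zero_of_not_dvd hd]
    simp
  · intro h
    rcases eq_or_ne x 0 with rfl | hx
    · exact pint_zero hp
    have hden : ¬ (p ∣ x.den) := by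
      intro hpd
      have hnum : ¬ (p : ℤ) ∣ x.num := by
        intro hn
        have h1 : p ∣ x.num.natAbs := by simpa using Int.natAbs_dvd_natAbs.mpr hn
        have hg : p ∣ 1 := x.reduced ▸ Nat.dvd_gcd h1 hpd
        exact hp.ne_one (Nat.dvd_one.mp hg)
      have h1 : padicValInt p x.num = 0 := padicValInt.eq_zero_of_not_dvd hnum
      have h2 : 1 ≤ padicValNat p x.den :=
        one_le_padicValNat_of_dvd x.pos.ne' hpd
      rw [padicValRat, h1] at h
      omega
    refine ⟨(x.den : ℤ), by exact_mod_cast hden ∘ Int.natCast_dvd_natCast.mp, x.num, ?_⟩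
    push_cast
    exact Rat.mul_den_eq_num x

lemma pint_nat_div_pow (hp : p.Prime) {N r : ℕ} (h : Pint p ((N : ℚ) / (p : ℚ) ^ r)) :
    p ^ r ∣ N := by
  obtain ⟨d, hd, z, hz⟩ := h
  have hppos : ((p : ℚ)) ^ r ≠ 0 := pow_ne_zero _ (by exact_mod_cast hp.pos.ne')
  have key : (N : ℤ) * d = z * (p : ℤ) ^ r := by
    have : (N : ℚ) * d = z * (p : ℚ) ^ r := by
      field_simp at hz
      linear_combination hz
    exact_mod_cast this
  have : (p : ℤ) ^ r ∣ (N : ℤ) * d := ⟨z, by linarith [key]⟩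
  have hdvd : (p : ℤ) ^ r ∣ (N : ℤ) :=
    (Nat.prime_iff_prime_int.mp hp).pow_dvd_of_dvd_mul_right _ hd this
  exact_mod_cast hdvd


lemma val_sub (hp : p.Prime) {n i a : ℕ} (hn0 : 0 < n) (hn : p ^ a ∣ n) (hi0 : 0 < i)
    (hia : i < p ^ a) : padicValNat p (n - i) = padicValNat p i := by
  haveI := Fact.mk hp
  set b := padicValNat p i with hb
  have hpb : p ^ b ∣ i := pow_padicValNat_dvd
  have hba : b < a := by
    have h1 : p ^ b ≤ i := Nat.le_of_dvd hi0 hpb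
    exact (Nat.pow_lt_pow_iff_right hp.one_lt).mp (lt_of_le_of_lt h1 hia)
  have hpan : p ^ a ≤ n := Nat.le_of_dvd hn0 hn
  have hin : i ≤ n := le_of_lt (lt_of_lt_of_le hia hpan)
  have hni0 : n - i ≠ 0 := by omega
  have hd1 : p ^ b ∣ n - i :=
    Nat.dvd_sub ((pow_dvd_pow p hba.le).trans hn) hpb
  have hd2 : ¬ p ^ (b + 1) ∣ n - i := by
    intro hc
    have h1 : p ^ (b + 1) ∣ i := by
      have : i = n - (n - i) := by omega
      rw [this]
      exact Nat.dvd_sub ((pow_dvd_pow p hba).trans hn) hc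
    have := (padicValNat_dvd_iff_le hi0.ne').mp h1
    omega
  have h1 : b ≤ padicValNat p (n - i) := (padicValNat_dvd_iff_le hni0).mp hd1
  have h2 : padicValNat p (n - i) < b + 1 := by
    by_contra hc
    exact hd2 ((padicValNat_dvd_iff_le hni0).mpr (by omega))
  omega

lemma choose_sub_one_val_zero (hp : p.Prime) {n a : ℕ} (hn0 : 0 < n) (hn : p ^ a ∣ n) :
    ∀ k, k < p ^ a → padicValNat p ((n - 1).choose k) = 0 := by
  haveI := Fact.mk hp
  intro k
  induction k with
  | zero => intro _; simp
  | succ k ih =>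
    intro hk
    have hk' : k < p ^ a := by omega
    have hpan : p ^ a ≤ n := Nat.le_of_dvd hn0 hn
    have hkn : k + 1 ≤ n - 1 := by omega
    have hid := Nat.choose_succ_right_eq (n - 1) k
    have hne1 : (n - 1).choose (k + 1) ≠ 0 := (Nat.choose_pos hkn).ne'
    have hne2 : (n - 1).choose k ≠ 0 := (Nat.choose_pos (by omega)).ne'
    have hsub : n - 1 - k = n - (k + 1) := by omega
    have hvs : padicValNat p (n - (k + 1)) = padicValNat p (k + 1) :=
      val_sub hp hn0 hn (by omega) hk
    have := congrArg (padicValNat p) hid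
    rw [padicValNat.mul hne1 (by omega), padicValNat.mul hne2 (by omega), hsub, hvs, ih hk'] at this
    omega

lemma val_choose (hp : p.Prime) {n r : ℕ} (hn0 : 0 < n) (hr1 : 1 ≤ r)
    (hra : r ≤ p ^ padicValNat p n) :
    padicValNat p (n.choose r) + padicValNat p r = padicValNat p n := by
  haveI := Fact.mk hp
  set a := padicValNat p n with ha
  have hn : p ^ a ∣ n := pow_padicValNat_dvd
  have hpan : p ^ a ≤ n := Nat.le_of_dvd hn0 hn
  have hrn : r ≤ n := hra.trans hpan
  have hid : n * (n - 1).choose (r - 1) = n.choose r * r := by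
    have := Nat.add_one_mul_choose_eq (n - 1) (r - 1)
    simpa [Nat.succ_eq_add_one, Nat.sub_add_cancel hn0, Nat.sub_add_cancel hr1] using this
  have hne1 : (n - 1).choose (r - 1) ≠ 0 := (Nat.choose_pos (by omega)).ne'
  have hne2 : n.choose r ≠ 0 := (Nat.choose_pos hrn).ne'
  have hv0 : padicValNat p ((n - 1).choose (r - 1)) = 0 :=
    choose_sub_one_val_zero hp hn0 hn (r - 1) (by omega)
  have := congrArg (padicValNat p) hid
  rw [padicValNat.mul hn0.ne' hne1, padicValNat.mul hne2 (by omega), hv0] at this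
  omega


lemma isInt_coeff_pow {A : PowerSeries ℚ} (hA : ∀ j, ∃ z : ℤ, coeff (R := ℚ) j A = (z : ℚ)) (s : ℕ) :
    ∀ j, ∃ z : ℤ, coeff (R := ℚ) j (A ^ s) = (z : ℚ) := by
  have hmem : ∀ x : ℚ, (∃ z : ℤ, x = (z : ℚ)) ↔ x ∈ (Int.castRingHom ℚ).range := by
    intro x
    constructor
    · rintro ⟨z, rfl⟩; exact ⟨z, rfl⟩
    · rintro ⟨z, rfl⟩; exact ⟨z, rfl⟩
  induction s with
  | zero =>
    intro j
    rcases eq_or_ne j 0 with rfl | hj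
    · exact ⟨1, by simp⟩
    · exact ⟨0, by simp [coeff_one, hj]⟩
  | succ s ih =>
    intro j
    rw [pow_succ, coeff_mul, hmem]
    apply Subring.sum_mem
    intro x hx
    exact Subring.mul_mem _ ((hmem _).mp (ih x.1)) ((hmem _).mp (hA x.2))

lemma coeff_add_pow (q' : ℕ) (A : PowerSeries ℚ) (x : ℚ) (n i : ℕ) :
    coeff (R := ℚ) i ((A + PowerSeries.C (R := ℚ) x * X ^ q') ^ n) =
      ∑ r ∈ range (n + 1), (n.choose r : ℚ) * x ^ r *
        (if q' * r ≤ i then coeff (R := ℚ) (i - q' * r) (A ^ (n - r)) else 0) := by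
  rw [add_comm A, add_pow, map_sum]
  refine Finset.sum_congr rfl fun r hr => ?_
  have h1 : (PowerSeries.C (R := ℚ) x * X ^ q') ^ r = PowerSeries.C (R := ℚ) (x ^ r) * X ^ (q' * r) := by
    rw [mul_pow, ← map_pow, ← pow_mul]
  have h2 : PowerSeries.C (R := ℚ) (x ^ r) * X ^ (q' * r) * A ^ (n - r) * (n.choose r : PowerSeries ℚ) =
      PowerSeries.C (R := ℚ) ((n.choose r : ℚ) * x ^ r) * (X ^ (q' * r) * A ^ (n - r)) := by
    rw [← map_natCast (PowerSeries.C (R := ℚ)) (n.choose r), map_mul]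
    ring
  rw [h1, h2, coeff_C_mul, coeff_X_pow_mul', mul_ite, mul_zero]

end Stmt17Aux

/-- Let `p` be an odd prime, `q = (p-1)/2`, `m = 2t`, and
`f = 1 + ∑_{j=1}^{q-1} m_j y^j + (1/p) y^q mod y^{t+1}` with `m_j ∈ ℤ`, `ν_p(m_j) = 0`.
Then `f` is a strict D-series at `p` of type `(q, 1)`: the coefficient of `y^q` has
`ν_p = -1` and all coefficients of `y^k` with `q < k ≤ t` vanish; consequently
`ν_p(e_t(f)) = max{r + ν_p(r) : 0 ≤ r ≤ ⌊t/q⌋} = max{r + ν_p(r) : 0 ≤ r ≤ ⌊m/(p-1)⌋}`. -/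
theorem stmt_17 (p q t m : ℕ) (hp : p.Prime) (hpodd : Odd p) (hq : q = (p - 1) / 2)
    (hm : m = 2 * t) (ht : 1 ≤ t)
    (c : ℕ → ℚ) (hc0 : c 0 = 1)
    (hcj : ∀ j, 1 ≤ j → j ≤ q - 1 → ∃ z : ℤ, c j = (z : ℚ) ∧ ¬ (p : ℤ) ∣ z)
    (hcq : c q = 1 / p)
    (hctop : ∀ j, q < j → c j = 0) :
    padicValRat p (c q) = -1 ∧
    (∀ k, q < k → k ≤ t → c k = 0) ∧
    (∀ e, IsLeast {n : ℕ | 0 < n ∧ ∀ i ≤ t,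
        0 ≤ padicValRat p (PowerSeries.coeff (R := ℚ) i ((PowerSeries.mk c) ^ n))} e →
      padicValNat p e = (Finset.range (t / q + 1)).sup (fun r => r + padicValNat p r)) ∧
    (Finset.range (t / q + 1)).sup (fun r => r + padicValNat p r) =
      (Finset.range (m / (p - 1) + 1)).sup (fun r => r + padicValNat p r) := by
  classical
  haveI := Fact.mk hp
  obtain ⟨kk, hkk⟩ := hpodd
  have hp2 : p ≠ 2 := by omega
  have hp3 : 3 ≤ p := by
    have := hp.two_le; omega
  have hq1 : 1 ≤ q := by omega
  have hp2q : p - 1 = 2 * q := by omega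
  set K := t / q with hKdef
  set M := (Finset.range (K + 1)).sup (fun r => r + padicValNat p r) with hMdef
  have hMge : ∀ r, r ≤ K → r + padicValNat p r ≤ M := by
    intro r hr
    exact Finset.le_sup (f := fun r => r + padicValNat p r) (mem_range.mpr (by omega))
  have hKM : K ≤ M := le_trans (Nat.le_add_right K _) (hMge K le_rfl)
  have hpne : (p : ℚ) ≠ 0 := by exact_mod_cast hp.pos.ne'
  -- the integral part A
  set a : ℕ → ℚ := fun j => if j = q then 0 else c j with hadef
  set A := PowerSeries.mk a with hAdef
  have hfA : PowerSeries.mk c = A + PowerSeries.C (R := ℚ) (1/p) * X ^ q := by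
    ext i
    rw [map_add, coeff_mk, hAdef, coeff_mk, coeff_C_mul, coeff_X_pow]
    by_cases hiq : i = q
    · simp [hadef, hiq, hcq]
    · simp [hadef, hiq]
  have haInt : ∀ j, ∃ z : ℤ, coeff (R := ℚ) j A = (z : ℚ) := by
    intro j
    rw [hAdef, coeff_mk]
    by_cases hjq : j = q
    · exact ⟨0, by simp [hadef, hjq]⟩
    rcases lt_or_gt_of_ne hjq with hlt | hgt
    · rcases Nat.eq_zero_or_pos j with rfl | hj0
      · exact ⟨1, by simp [hadef, hjq, hc0]⟩
      · obtain ⟨z, hz, _⟩ := hcj j hj0 (by omega)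
        exact ⟨z, by simp [hadef, hjq, hz]⟩
    · exact ⟨0, by simp [hadef, hjq, hctop j hgt]⟩
  have hA0 : ∀ s : ℕ, coeff (R := ℚ) 0 (A ^ s) = 1 := by
    intro s
    have h0 : constantCoeff (R := ℚ) A = 1 := by
      rw [hAdef]
      have : constantCoeff (R := ℚ) (PowerSeries.mk a) = a 0 := by
        rw [← coeff_zero_eq_constantCoeff_apply, coeff_mk]
      rw [this]
      have h0q : ¬ (0 = q) := by omega
      simp [hadef, h0q, hc0]
    rw [coeff_zero_eq_constantCoeff_apply, map_pow, h0, one_pow]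
  have hcoeff : ∀ n i : ℕ, coeff (R := ℚ) i ((PowerSeries.mk c) ^ n) =
      ∑ r ∈ range (n+1), (n.choose r : ℚ) * (1/p)^r *
        (if q * r ≤ i then coeff (R := ℚ) (i - q*r) (A^(n-r)) else 0) := by
    intro n i
    rw [hfA]
    exact Stmt17Aux.coeff_add_pow q A (1/p) n i
  have hterm_int : ∀ N r : ℕ, p ^ r ∣ N → ∃ z : ℤ, (N : ℚ) * (1/p)^r = (z : ℚ) := by
    rintro N r ⟨u, rfl⟩
    refine ⟨u, ?_⟩
    push_cast
    rw [mul_comm _ (u:ℚ), mul_assoc, ← mul_pow, mul_one_div_cancel hpne, one_pow, mul_one]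
  have hvalchoose_pM : ∀ r, 1 ≤ r → r ≤ K → p ^ r ∣ (p ^ M).choose r := by
    intro r h1 hrK
    have hrpM : r ≤ p ^ M :=
      le_trans (hrK.trans hKM) (le_of_lt (Nat.lt_pow_self (n := M) hp.one_lt))
    have hval := Stmt17Aux.val_choose hp (pow_pos hp.pos M) h1
      (by rwa [padicValNat.prime_pow])
    rw [padicValNat.prime_pow] at hval
    have h2 := hMge r hrK
    have h3 : r ≤ padicValNat p ((p^M).choose r) := by omega
    exact (pow_dvd_pow p h3).trans pow_padicValNat_dvd
  -- membership of p^M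
  have hmem_pM : 0 < p ^ M ∧ ∀ i ≤ t,
      0 ≤ padicValRat p (coeff (R := ℚ) i ((PowerSeries.mk c) ^ (p ^ M))) := by
    refine ⟨pow_pos hp.pos M, fun i hi => ?_⟩
    rw [← Stmt17Aux.pint_iff hp, hcoeff]
    apply Stmt17Aux.pint_sum hp
    intro r _
    by_cases hqr : q * r ≤ i
    · rw [if_pos hqr]
      obtain ⟨z, hz⟩ := Stmt17Aux.isInt_coeff_pow haInt (p^M - r) (i - q*r)
      rw [hz]
      refine Stmt17Aux.pint_mul hp ?_ (Stmt17Aux.pint_int hp z)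
      rcases Nat.eq_zero_or_pos r with rfl | hr1
      · have : ((p^M).choose 0 : ℚ) * (1/p)^0 = ((1:ℤ) : ℚ) := by simp
        rw [this]
        exact Stmt17Aux.pint_int hp 1
      · have hrK : r ≤ K := by
          have h5 : r * q ≤ t := by
            rw [mul_comm]; exact le_trans hqr hi
          rw [hKdef]
          exact (Nat.le_div_iff_mul_le hq1).mpr h5
        obtain ⟨z2, hz2⟩ := hterm_int _ r (hvalchoose_pM r hr1 hrK)
        rw [hz2]
        exact Stmt17Aux.pint_int hp z2
    · rw [if_neg hqr, mul_zero]
      exact Stmt17Aux.pint_zero hp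
  -- lower bound
  have hlow : ∀ n, (0 < n ∧ ∀ i ≤ t,
      0 ≤ padicValRat p (coeff (R := ℚ) i ((PowerSeries.mk c) ^ n))) → p ^ M ≤ n := by
    rintro n ⟨hn0, hint⟩
    have hdvd : ∀ r, r ≤ K → p ^ r ∣ n.choose r := by
      intro r
      induction r using Nat.strong_induction_on with
      | _ r ih =>
        intro hrK
        rcases Nat.eq_zero_or_pos r with rfl | hr1
        · simp
        rcases le_or_gt r n with hrn | hnr
        swap
        · rw [Nat.choose_eq_zero_of_lt hnr]; exact dvd_zero _
        have hqrt : q * r ≤ t := by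
          calc q * r ≤ q * K := Nat.mul_le_mul_left q hrK
            _ = (t / q) * q := by rw [hKdef, mul_comm]
            _ ≤ t := Nat.div_mul_le_self t q
        have hPint := (Stmt17Aux.pint_iff hp _).mpr (hint (q*r) hqrt)
        rw [hcoeff] at hPint
        have hrmem : r ∈ range (n+1) := mem_range.mpr (by omega)
        rw [← Finset.add_sum_erase _ _ hrmem] at hPint
        have hothers : Stmt17Aux.Pint p (∑ s ∈ (range (n+1)).erase r,
            (n.choose s : ℚ) * (1/p)^s *
            (if q * s ≤ q*r then coeff (R := ℚ) (q*r - q*s) (A^(n-s)) else 0)) := by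
          apply Stmt17Aux.pint_sum hp
          intro s hs
          obtain ⟨hsne, _⟩ := Finset.mem_erase.mp hs
          by_cases hqs : q * s ≤ q * r
          · have hsr : s < r := by
              have := Nat.le_of_mul_le_mul_left hqs hq1
              omega
            rw [if_pos hqs]
            obtain ⟨z, hz⟩ := Stmt17Aux.isInt_coeff_pow haInt (n - s) (q*r - q*s)
            rw [hz]
            refine Stmt17Aux.pint_mul hp ?_ (Stmt17Aux.pint_int hp z)
            rcases Nat.eq_zero_or_pos s with rfl | hs1
            · have : (n.choose 0 : ℚ) * (1/p)^0 = ((1:ℤ) : ℚ) := by simp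
              rw [this]
              exact Stmt17Aux.pint_int hp 1
            · obtain ⟨z2, hz2⟩ := hterm_int _ s (ih s hsr (by omega))
              rw [hz2]
              exact Stmt17Aux.pint_int hp z2
          · rw [if_neg hqs, mul_zero]
            exact Stmt17Aux.pint_zero hp
        have hterm : Stmt17Aux.Pint p ((n.choose r : ℚ) * (1/p)^r *
            (if q * r ≤ q*r then coeff (R := ℚ) (q*r - q*r) (A^(n-r)) else 0)) := by
          have h2 := Stmt17Aux.pint_sub hp hPint hothers
          simpa using h2
        rw [if_pos le_rfl, Nat.sub_self, hA0, mul_one] at hterm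
        apply Stmt17Aux.pint_nat_div_pow hp
        have heq : ((n.choose r : ℕ) : ℚ) / (p:ℚ)^r = (n.choose r : ℚ) * (1/p)^r := by
          rw [one_div_pow, mul_one_div]
        rwa [heq]
    set av := padicValNat p n with hav
    have hnge : M ≤ av := by
      by_contra hcon
      push_neg at hcon
      have hPex : ∃ r, r ≤ K ∧ av < r + padicValNat p r := by
        by_contra hno
        push_neg at hno
        have : M ≤ av := Finset.sup_le fun r hrm => hno r (by
          have := mem_range.mp hrm; omega)
        omega
      have hspec := Nat.find_spec hPex
      have hmin : ∀ m, m < Nat.find hPex → ¬ (m ≤ K ∧ av < m + padicValNat p m) :=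
        fun m hm => Nat.find_min hPex hm
      set rs := Nat.find hPex with hrs
      obtain ⟨hrsK, hrsv⟩ := hspec
      have hrs1 : 1 ≤ rs := by
        rcases Nat.eq_zero_or_pos rs with h | h
        · rw [h] at hrsv; simp at hrsv
        · exact h
      have hrsle : rs ≤ p ^ av := by
        by_contra hgt
        push_neg at hgt
        refine hmin (p ^ av) hgt ⟨by omega, ?_⟩
        rw [padicValNat.prime_pow]
        have h6 : 1 ≤ p ^ av := Nat.one_le_pow _ _ hp.pos
        omega
      have hval := Stmt17Aux.val_choose hp hn0 hrs1 (by rwa [← hav])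
      have hd := hdvd rs hrsK
      have hch : n.choose rs ≠ 0 :=
        (Nat.choose_pos (le_trans hrsle (Nat.le_of_dvd hn0 pow_padicValNat_dvd))).ne'
      have h3 : rs ≤ padicValNat p (n.choose rs) := (padicValNat_dvd_iff_le hch).mp hd
      omega
    calc p ^ M ≤ p ^ av := Nat.pow_le_pow_right hp.pos hnge
      _ ≤ n := Nat.le_of_dvd hn0 pow_padicValNat_dvd
  refine ⟨?_, fun k hk _ => hctop k hk, ?_, ?_⟩
  · rw [hcq, one_div, padicValRat.inv, padicValRat.self hp.one_lt]
  · rintro e ⟨⟨he0, heint⟩, hlb⟩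
    have h1 : e ≤ p ^ M := hlb hmem_pM
    have h2 : p ^ M ≤ e := hlow e ⟨he0, heint⟩
    have he : e = p ^ M := le_antisymm h1 h2
    rw [he, padicValNat.prime_pow]
  · have hdiv : m / (p - 1) = t / q := by
      rw [hm, hp2q, Nat.mul_div_mul_left t q (by norm_num : 0 < 2)]
    rw [hdiv]
end

section
/- Let p be a prime, h and b positive integers, and suppose F ∈ Q[[y]] with F(0) = 1 satisfies: F^h = ψ^p(1+u)/(1+u) for some u ∈ Z[[y]] with u(0) = 0 (mod y^{t+1}), and F^b ∈ Z[[y]] mod y^{t+1}, where ψ^p acts on power series by y ↦ P(y) for some P ∈ Z[y] with P(0) = 0. If moreover for every w ∈ Q[[y]] with w(0) = 0 the condition ψ^p(1+w)/(1+w) ∈ Z_(p)[[y]] mod y^{t+1} implies w ∈ Z_(p)[[y]] mod y^{t+1}, then ν_p(h) ≤ ν_p(b) whenever ν_p(h) equals the minimal p-valuation among exponents e with F^e of the form ψ^p(1+v)/(1+v), v integral. -/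
open PowerSeries

section Aux

lemma val_of_nondvd_den {p : ℕ} (hp : p.Prime) {r : ℚ} (h : ¬ (p ∣ r.den)) :
    0 ≤ padicValRat p r := by
  rw [padicValRat_def p r, padicValNat.eq_zero_of_not_dvd h]
  simp [padicValInt]

lemma nondvd_den_of_val {p : ℕ} (hp : p.Prime) {r : ℚ} (h : 0 ≤ padicValRat p r) :
    ¬ (p ∣ r.den) := by
  intro hdvd
  have hr : r ≠ 0 := by
    rintro rfl
    simp at hdvd
    exact hp.one_lt.ne' hdvd
  have : Fact p.Prime := ⟨hp⟩
  have hnum : ¬ (p ∣ r.num.natAbs) := fun hd =>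
    hp.one_lt.ne' (Nat.Coprime.eq_one_of_dvd (r.reduced.coprime_dvd_left hd) hdvd)
  have h1 : padicValInt p r.num = 0 := padicValNat.eq_zero_of_not_dvd hnum
  have h2 : 1 ≤ padicValNat p r.den := one_le_padicValNat_of_dvd r.den_nz hdvd
  rw [padicValRat_def p r, h1] at h
  omega

def Rloc (q : ℕ) (hq : q.Prime) : Subring ℚ where
  carrier := {r : ℚ | ¬ (q ∣ r.den)}
  zero_mem' := by simp [hq.one_lt.ne']
  one_mem' := by simp [hq.one_lt.ne']
  add_mem' := by
    intro a b ha hb hd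
    rcases (Nat.Prime.dvd_mul hq).1 (hd.trans (Rat.add_den_dvd a b)) with h | h
    exacts [ha h, hb h]
  mul_mem' := by
    intro a b ha hb hd
    rcases (Nat.Prime.dvd_mul hq).1 (hd.trans (Rat.mul_den_dvd a b)) with h | h
    exacts [ha h, hb h]
  neg_mem' := by intro a ha; simpa using ha

lemma mem_Rloc {q : ℕ} {hq : q.Prime} {r : ℚ} : r ∈ Rloc q hq ↔ ¬ (q ∣ r.den) := Iff.rfl

lemma coeff_mul_congr {t : ℕ} {f f' g g' : PowerSeries ℚ}
    (hf : ∀ i ≤ t, coeff i f = coeff i f') (hg : ∀ i ≤ t, coeff i g = coeff i g') :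
    ∀ i ≤ t, coeff i (f * g) = coeff i (f' * g') := by
  intro i hi
  rw [coeff_mul, coeff_mul]
  refine Finset.sum_congr rfl ?_
  intro x hx
  rw [Finset.HasAntidiagonal.mem_antidiagonal] at hx
  rw [hf x.1 (le_trans (by omega) hi), hg x.2 (le_trans (by omega) hi)]

lemma coeff_pow_congr_s19 {t : ℕ} {f f' : PowerSeries ℚ}
    (hf : ∀ i ≤ t, coeff i f = coeff i f') (n : ℕ) :
    ∀ i ≤ t, coeff i (f ^ n) = coeff i (f' ^ n) := by
  induction n with
  | zero => simp
  | succ n ih =>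
    intro i hi
    rw [pow_succ, pow_succ]
    exact coeff_mul_congr ih hf i hi

lemma coeff_mul_mem {t : ℕ} (R : Subring ℚ) {f g : PowerSeries ℚ}
    (hf : ∀ i ≤ t, coeff i f ∈ R) (hg : ∀ i ≤ t, coeff i g ∈ R) :
    ∀ i ≤ t, coeff i (f * g) ∈ R := by
  intro i hi
  rw [coeff_mul]
  refine Subring.sum_mem R ?_
  intro x hx
  rw [Finset.HasAntidiagonal.mem_antidiagonal] at hx
  exact R.mul_mem (hf x.1 (le_trans (by omega) hi)) (hg x.2 (le_trans (by omega) hi))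

lemma coeff_pow_mem {t : ℕ} (R : Subring ℚ) {f : PowerSeries ℚ}
    (hf : ∀ i ≤ t, coeff i f ∈ R) (n : ℕ) :
    ∀ i ≤ t, coeff i (f ^ n) ∈ R := by
  induction n with
  | zero =>
    intro i hi
    rw [pow_zero, coeff_one]
    split
    exacts [R.one_mem, R.zero_mem]
  | succ n ih =>
    intro i hi
    rw [pow_succ]
    exact coeff_mul_mem R ih hf i hi

end Aux

section Psi
variable {P : Polynomial ℤ} (hP0 : P.coeff 0 = 0)
  {Ψ : PowerSeries ℚ →+* PowerSeries ℚ}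
  (hΨ : Ψ PowerSeries.X = ((P.map (Int.castRingHom ℚ) : Polynomial ℚ) : PowerSeries ℚ))

include hP0 hΨ

lemma X_dvd_ΨX : (X : PowerSeries ℚ) ∣ Ψ X := by
  rw [hΨ, X_dvd_iff, ← coeff_zero_eq_constantCoeff_apply, Polynomial.coeff_coe,
    Polynomial.coeff_map, hP0]
  simp

omit hP0 hΨ in
lemma Ψ_C (r : ℚ) : Ψ (C r) = C r := by
  have : Ψ.comp (C) = C := Subsingleton.elim _ _
  exact congrFun (congrArg DFunLike.coe this) r

lemma constantCoeff_Ψ (f : PowerSeries ℚ) :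
    constantCoeff (Ψ f) = constantCoeff f := by
  obtain ⟨g, hg⟩ : (X : PowerSeries ℚ) ∣ (f - C (constantCoeff f)) := by
    rw [X_dvd_iff]; simp
  have hf : f = C (constantCoeff f) + X * g := by rw [← hg]; ring
  obtain ⟨k, hk⟩ := X_dvd_ΨX hP0 hΨ
  rw [hf, map_add, map_mul, Ψ_C, hk, map_add, map_mul]
  simp

lemma coeff_Ψ_congr {t : ℕ} {f g : PowerSeries ℚ}
    (hfg : ∀ i ≤ t, coeff i f = coeff i g) :
    ∀ i ≤ t, coeff i (Ψ f) = coeff i (Ψ g) := by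
  intro i hi
  obtain ⟨d, hd⟩ : (X : PowerSeries ℚ) ^ (t + 1) ∣ (f - g) := by
    rw [X_pow_dvd_iff]
    intro m hm
    rw [map_sub, hfg m (by omega), sub_self]
  have hdd : (X : PowerSeries ℚ) ^ (t + 1) ∣ (Ψ f - Ψ g) := by
    have := pow_dvd_pow_of_dvd (X_dvd_ΨX hP0 hΨ) (t + 1)
    rw [← map_sub, hd, map_mul, map_pow]
    exact Dvd.dvd.mul_right this _
  have h0 : coeff i (Ψ f - Ψ g) = 0 := by
    rw [X_pow_dvd_iff] at hdd
    exact hdd i (by omega)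
  rw [map_sub, sub_eq_zero] at h0
  exact h0

end Psi

section Root

lemma coeff_mul_lowzero {m : ℕ} {E D : PowerSeries ℚ} (hD : ∀ j < m, coeff j D = 0) :
    coeff m (E * D) = coeff 0 E * coeff m D := by
  rw [coeff_mul]
  rw [Finset.sum_eq_single ((0 : ℕ), m)]
  · intro x hx hne
    rw [Finset.HasAntidiagonal.mem_antidiagonal] at hx
    have hx2 : x.2 < m := by
      rcases Nat.lt_or_ge x.2 m with hlt | hge
      · exact hlt
      · exfalso; apply hne
        have h2 : x.2 = m := by omega
        have h1 : x.1 = 0 := by omega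
        exact Prod.ext h1 h2
    rw [hD x.2 hx2, mul_zero]
  · intro hx
    simp [Finset.mem_antidiagonal] at hx

/-- truncation below `m` -/
noncomputable def truncW (m : ℕ) (V : PowerSeries ℚ) : PowerSeries ℚ :=
  PowerSeries.mk fun j => if j < m then coeff j V else 0

lemma key_coeff_pow (n : ℕ) (V : PowerSeries ℚ) (hV : constantCoeff V = 1)
    (m : ℕ) (hm : 0 < m) :
    coeff m (V ^ n) = coeff m ((truncW m V) ^ n) + n * coeff m V := by
  set W := truncW m V with hW
  have hD : ∀ j < m, coeff j (V - W) = 0 := by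
    intro j hj
    simp [hW, truncW, coeff_mk, hj]
  have hgeom : V ^ n - W ^ n = (∑ i ∈ Finset.range n, V ^ i * W ^ (n - 1 - i)) * (V - W) :=
    (geom_sum₂_mul V W n).symm
  have hWc : constantCoeff W = 1 := by
    rw [← coeff_zero_eq_constantCoeff_apply, hW]
    simp only [truncW, coeff_mk, if_pos hm]
    rw [coeff_zero_eq_constantCoeff_apply, hV]
  have h1 : coeff m (V ^ n - W ^ n) = (n : ℚ) * coeff m V := by
    rw [hgeom, coeff_mul_lowzero hD]
    have hc0 : coeff 0 (∑ i ∈ Finset.range n, V ^ i * W ^ (n - 1 - i)) = n := by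
      rw [map_sum]
      have : ∀ i ∈ Finset.range n, coeff 0 (V ^ i * W ^ (n - 1 - i)) = 1 := by
        intro i _
        rw [coeff_zero_eq_constantCoeff_apply, map_mul, map_pow, map_pow, hV, hWc]
        simp
      rw [Finset.sum_congr rfl this]
      simp
    have hcm : coeff m (V - W) = coeff m V := by
      simp [hW, truncW, map_sub, coeff_mk]
    rw [hc0, hcm]
  rw [map_sub] at h1
  linarith

noncomputable def rootC (n : ℕ) (A : PowerSeries ℚ) : ℕ → ℚ
  | 0 => 1
  | m + 1 =>
      (coeff (m + 1) A -
        coeff (m + 1) ((PowerSeries.mk fun j => if hj : j < m + 1 then rootC n A j else 0) ^ n)) / n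
  decreasing_by exact hj

lemma truncW_rootC (n : ℕ) (A : PowerSeries ℚ) (m : ℕ) :
    truncW m (PowerSeries.mk (rootC n A)) =
      PowerSeries.mk fun j => if hj : j < m then rootC n A j else 0 := by
  apply PowerSeries.ext
  intro j
  by_cases hj : j < m <;> simp [truncW, coeff_mk, hj]

lemma rootC_pow (n : ℕ) (hn : n ≠ 0) (A : PowerSeries ℚ) (hA : constantCoeff A = 1) :
    (PowerSeries.mk (rootC n A)) ^ n = A := by
  apply PowerSeries.ext
  intro m
  match m with
  | 0 =>
    have hV : constantCoeff (PowerSeries.mk (rootC n A)) = 1 := by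
      rw [← coeff_zero_eq_constantCoeff_apply, coeff_mk, rootC]
    have h0 : coeff 0 ((PowerSeries.mk (rootC n A)) ^ n) = 1 := by
      rw [coeff_zero_eq_constantCoeff_apply, map_pow, hV, one_pow]
    rw [h0, coeff_zero_eq_constantCoeff_apply, hA]
  | m + 1 =>
    have hV : constantCoeff (PowerSeries.mk (rootC n A)) = 1 := by
      rw [← coeff_zero_eq_constantCoeff_apply, coeff_mk, rootC]
    rw [key_coeff_pow n _ hV (m + 1) (Nat.succ_pos m), truncW_rootC, coeff_mk]
    show coeff (m+1) _ + (n:ℚ) * rootC n A (m+1) = _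
    rw [rootC]
    have hn' : (n : ℚ) ≠ 0 := Nat.cast_ne_zero.mpr hn
    field_simp
    ring

lemma pow_coeff_unique {t n : ℕ} (hn : n ≠ 0) {G H : PowerSeries ℚ}
    (hG : constantCoeff G = 1) (hH : constantCoeff H = 1)
    (hpow : ∀ i ≤ t, coeff i (G ^ n) = coeff i (H ^ n)) :
    ∀ i ≤ t, coeff i G = coeff i H := by
  intro i
  induction i using Nat.strong_induction_on with
  | _ i ih =>
    intro hi
    match i with
    | 0 =>
      rw [coeff_zero_eq_constantCoeff_apply, coeff_zero_eq_constantCoeff_apply, hG, hH]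
    | m + 1 =>
      have hWeq : truncW (m + 1) G = truncW (m + 1) H := by
        apply PowerSeries.ext
        intro j
        simp only [truncW, coeff_mk]
        split
        · next hj => exact ih j hj (by omega)
        · rfl
      have h1 := key_coeff_pow n G hG (m + 1) (Nat.succ_pos m)
      have h2 := key_coeff_pow n H hH (m + 1) (Nat.succ_pos m)
      have h3 := hpow (m + 1) hi
      rw [h1, h2, hWeq] at h3
      have hn' : (n : ℚ) ≠ 0 := Nat.cast_ne_zero.mpr hn
      exact mul_left_cancel₀ hn' (add_left_cancel h3)

lemma rootC_mem {t n : ℕ} (R : Subring ℚ) {A : PowerSeries ℚ}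
    (hA : ∀ i ≤ t, coeff i A ∈ R) (hninv : ((n : ℚ))⁻¹ ∈ R) :
    ∀ i ≤ t, rootC n A i ∈ R := by
  intro i
  induction i using Nat.strong_induction_on with
  | _ i ih =>
    intro hi
    match i with
    | 0 => rw [rootC]; exact R.one_mem
    | m + 1 =>
      rw [rootC]
      have hWmem : ∀ j ≤ m + 1,
          coeff j (PowerSeries.mk fun j => if hj : j < m + 1 then rootC n A j else 0) ∈ R := by
        intro j hj
        rw [coeff_mk]
        split
        · next hjj => exact ih j hjj (by omega)
        · exact R.zero_mem
      have := coeff_pow_mem R hWmem n (m + 1) le_rfl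
      rw [div_eq_mul_inv]
      exact R.mul_mem (R.sub_mem (hA (m + 1) hi) this) hninv

end Root
/-- Abstract form of the J-order argument of Theorem 2.5.  Let `Ψ : ℚ[[y]] →+* ℚ[[y]]` be the
ring endomorphism `ψ^p` acting by `y ↦ P(y)` for a polynomial `P ∈ ℤ[y]` with `P(0) = 0`.
Suppose `F(0) = 1`, `F^h = Ψ(1+u)/(1+u) mod y^{t+1}` for some integral `u` with `u(0) = 0`,
`F^b` has integer coefficients mod `y^{t+1}`, the key lemma holds (integrality of
`Ψ(1+w)/(1+w)` forces `p`-integrality of `w`), and `ν_p(h)` is minimal among exponents `e`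
with `F^e` of the form `Ψ(1+v)/(1+v)`, `v` integral.  Then `ν_p(h) ≤ ν_p(b)`. -/
theorem stmt_19 (p t : ℕ) (hp : p.Prime) (h b : ℕ) (hhpos : 0 < h) (hbpos : 0 < b)
    (F : PowerSeries ℚ) (hF0 : PowerSeries.constantCoeff F = 1)
    (P : Polynomial ℤ) (hP0 : P.coeff 0 = 0)
    (Ψ : PowerSeries ℚ →+* PowerSeries ℚ)
    (hΨ : Ψ PowerSeries.X = ((P.map (Int.castRingHom ℚ) : Polynomial ℚ) : PowerSeries ℚ))
    (S : Set ℕ)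
    (hS : S = {e : ℕ | 0 < e ∧ ∃ v : PowerSeries ℚ,
      PowerSeries.constantCoeff v = 0 ∧ (∀ i ≤ t, (PowerSeries.coeff i v).den = 1) ∧
      ∀ i ≤ t, PowerSeries.coeff i (F ^ e) =
        PowerSeries.coeff i (Ψ (1 + v) * (1 + v)⁻¹)})
    (hhS : h ∈ S)
    (hb : ∀ i ≤ t, (PowerSeries.coeff i (F ^ b)).den = 1)
    (hkey : ∀ w : PowerSeries ℚ, PowerSeries.constantCoeff w = 0 →
      (∀ i ≤ t, 0 ≤ padicValRat p (PowerSeries.coeff i (Ψ (1 + w) * (1 + w)⁻¹))) →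
      ∀ i ≤ t, 0 ≤ padicValRat p (PowerSeries.coeff i w))
    (hmin : ∀ e ∈ S, padicValNat p h ≤ padicValNat p e) :
    padicValNat p h ≤ padicValNat p b := by
  have hfact : Fact p.Prime := ⟨hp⟩
  subst hS
  obtain ⟨hposh, u, hu0, huden, hueq⟩ := hhS
  set α := padicValNat p h with hα
  set β := padicValNat p b with hβ
  by_cases hle : α ≤ β
  · exact hle
  push_neg at hle
  exfalso
  -- decompositions
  have hdvh : p ^ α ∣ h := pow_padicValNat_dvd
  have hdvb : p ^ β ∣ b := pow_padicValNat_dvd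
  set h' := h / p ^ α with hh'def
  set b' := b / p ^ β with hb'def
  have hh : h = p ^ α * h' := (Nat.mul_div_cancel' hdvh).symm
  have hbb : b = p ^ β * b' := (Nat.mul_div_cancel' hdvb).symm
  have hh'0 : h' ≠ 0 := by
    intro h0; rw [h0, mul_zero] at hh; omega
  have hb'0 : b' ≠ 0 := by
    intro h0; rw [h0, mul_zero] at hbb; omega
  have hpnh' : ¬ p ∣ h' := by
    intro hd
    have : p ^ (α + 1) ∣ h := by
      rw [hh, pow_succ]
      exact Nat.mul_dvd_mul dvd_rfl hd
    exact pow_succ_padicValNat_not_dvd hhpos.ne' this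
  set n := p ^ (α - β) with hndef
  have hn0 : n ≠ 0 := pow_ne_zero _ hp.pos.ne'
  set e := b * h' with hedef
  have hepos : 0 < e := Nat.mul_pos hbpos (Nat.pos_of_ne_zero hh'0)
  have hvale : padicValNat p e = β := by
    rw [hedef, padicValNat.mul hbpos.ne' hh'0, padicValNat.eq_zero_of_not_dvd hpnh']
    omega
  have hexp : n * e = h * b' := by
    rw [hndef, hedef, hh, hbb]
    rw [show p ^ (α - β) * (p ^ β * b' * h') = (p ^ (α - β) * p ^ β) * (b' * h') by ring]
    rw [← pow_add, Nat.sub_add_cancel (le_of_lt hle)]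
    ring
  -- the series
  set u' : PowerSeries ℚ := 1 + u with hu'def
  have hu'0 : constantCoeff u' = 1 := by
    rw [hu'def, map_add, map_one, hu0, add_zero]
  set A := u' ^ b' with hAdef
  have hA0 : constantCoeff A = 1 := by rw [hAdef, map_pow, hu'0, one_pow]
  set V := PowerSeries.mk (rootC n A) with hVdef
  have hVn : V ^ n = A := rootC_pow n hn0 A hA0
  have hV0 : constantCoeff V = 1 := by
    rw [hVdef, ← coeff_zero_eq_constantCoeff_apply, coeff_mk, rootC]
  set v := V - 1 with hvdef
  have h1v : 1 + v = V := by rw [hvdef]; ring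
  have hv0 : constantCoeff v = 0 := by
    rw [hvdef, map_sub, hV0, map_one, sub_self]
  -- inverse computations
  have hinvpow : ∀ (G : PowerSeries ℚ), constantCoeff G = 1 → ∀ k : ℕ,
      (G⁻¹) ^ k = (G ^ k)⁻¹ := by
    intro G hG k
    have hGk : constantCoeff (G ^ k) ≠ 0 := by
      rw [map_pow, hG, one_pow]; exact one_ne_zero
    rw [PowerSeries.eq_inv_iff_mul_eq_one hGk, ← mul_pow,
      PowerSeries.inv_mul_cancel G (by rw [hG]; exact one_ne_zero), one_pow]
  have hΨinv : ∀ (G : PowerSeries ℚ), constantCoeff G = 1 → Ψ G⁻¹ = (Ψ G)⁻¹ := by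
    intro G hG
    have hΨG : constantCoeff (Ψ G) ≠ 0 := by
      rw [constantCoeff_Ψ hP0 hΨ, hG]; exact one_ne_zero
    rw [PowerSeries.eq_inv_iff_mul_eq_one hΨG, ← map_mul,
      PowerSeries.inv_mul_cancel G (by rw [hG]; exact one_ne_zero), map_one]
  have hformpow : ∀ (G : PowerSeries ℚ), constantCoeff G = 1 → ∀ k : ℕ,
      (Ψ G * G⁻¹) ^ k = Ψ (G ^ k) * (G ^ k)⁻¹ := by
    intro G hG k
    rw [mul_pow, ← map_pow, hinvpow G hG k]
  -- coefficient chain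
  have hchain : ∀ i ≤ t, coeff i ((Ψ V * V⁻¹) ^ n) = coeff i ((F ^ e) ^ n) := by
    intro i hi
    rw [hformpow V hV0 n, hVn]
    have h1 : ∀ i ≤ t, coeff i (Ψ A * A⁻¹) = coeff i (F ^ (h * b')) := by
      have h2 : ∀ i ≤ t, coeff i ((Ψ u' * u'⁻¹) ^ b') = coeff i (F ^ (h * b')) := by
        have := coeff_pow_congr_s19 (f := Ψ u' * u'⁻¹) (f' := F ^ h)
          (fun i hi => (hueq i hi).symm) b'
        intro i hi
        rw [this i hi, ← pow_mul]
      intro i hi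
      rw [← h2 i hi, hformpow u' hu'0 b']
    rw [h1 i hi, ← hexp, mul_comm n e, pow_mul]
  have hconstL : constantCoeff (Ψ V * V⁻¹) = 1 := by
    rw [map_mul, constantCoeff_Ψ hP0 hΨ, hV0, PowerSeries.constantCoeff_inv, hV0]
    norm_num
  have hconstR : constantCoeff (F ^ e) = 1 := by rw [map_pow, hF0, one_pow]
  have heq : ∀ i ≤ t, coeff i (Ψ V * V⁻¹) = coeff i (F ^ e) :=
    pow_coeff_unique hn0 hconstL hconstR hchain
  -- integrality of F^e
  have hFeden : ∀ i ≤ t, (coeff i (F ^ e)).den = 1 := by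
    intro i hi
    rw [Nat.eq_one_iff_not_exists_prime_dvd]
    intro q hq
    have hmem : coeff i (F ^ e) ∈ Rloc q hq := by
      have hFb : ∀ j ≤ t, coeff j (F ^ b) ∈ Rloc q hq := by
        intro j hj
        rw [mem_Rloc, hb j hj]
        exact fun hd => hq.one_lt.ne' (Nat.dvd_one.mp hd)
      have : ∀ j ≤ t, coeff j ((F ^ b) ^ h') ∈ Rloc q hq := coeff_pow_mem _ hFb h'
      rw [hedef, pow_mul]
      exact this i hi
    exact hmem
  -- p-integrality of v via hkey
  have hvp : ∀ i ≤ t, 0 ≤ padicValRat p (coeff i v) := by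
    apply hkey v hv0
    intro i hi
    rw [h1v]
    rw [heq i hi]
    refine val_of_nondvd_den hp ?_
    rw [hFeden i hi]
    exact fun hd => hp.one_lt.ne' (Nat.dvd_one.mp hd)
  -- q-integrality of v for q ≠ p
  have hvq : ∀ q (hq : q.Prime), q ≠ p → ∀ i ≤ t, coeff i v ∈ Rloc q hq := by
    intro q hq hqp i hi
    have hninv : ((n : ℚ))⁻¹ ∈ Rloc q hq := by
      rw [mem_Rloc, Rat.inv_natCast_den_of_pos (Nat.pos_of_ne_zero hn0)]
      intro hd
      exact hqp ((Nat.prime_dvd_prime_iff_eq hq hp).mp (hq.dvd_of_dvd_pow hd))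
    have hu'mem : ∀ j ≤ t, coeff j u' ∈ Rloc q hq := by
      intro j hj
      rw [hu'def, map_add]
      refine Subring.add_mem _ ?_ ?_
      · rw [coeff_one]
        split
        exacts [Subring.one_mem _, Subring.zero_mem _]
      · rw [mem_Rloc, huden j hj]
        exact fun hd => hq.one_lt.ne' (Nat.dvd_one.mp hd)
    have hAmem : ∀ j ≤ t, coeff j A ∈ Rloc q hq := by
      rw [hAdef]
      exact coeff_pow_mem _ hu'mem b'
    have hrc : rootC n A i ∈ Rloc q hq := rootC_mem _ hAmem hninv i hi
    rw [hvdef, map_sub]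
    refine Subring.sub_mem _ ?_ ?_
    · rw [hVdef, coeff_mk]; exact hrc
    · rw [coeff_one]
      split
      exacts [Subring.one_mem _, Subring.zero_mem _]
  -- conclude integrality of v
  have hvden : ∀ i ≤ t, (coeff i v).den = 1 := by
    intro i hi
    rw [Nat.eq_one_iff_not_exists_prime_dvd]
    intro q hq
    by_cases hqp : q = p
    · subst hqp
      exact nondvd_den_of_val hq (hvp i hi)
    · exact hvq q hq hqp i hi
  -- e is in S
  have heS : 0 < e ∧ ∃ w : PowerSeries ℚ,
      PowerSeries.constantCoeff w = 0 ∧ (∀ i ≤ t, (PowerSeries.coeff i w).den = 1) ∧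
      ∀ i ≤ t, PowerSeries.coeff i (F ^ e) =
        PowerSeries.coeff i (Ψ (1 + w) * (1 + w)⁻¹) := by
    refine ⟨hepos, v, hv0, hvden, ?_⟩
    intro i hi
    rw [h1v]
    exact (heq i hi).symm
  have := hmin e heS
  rw [hvale] at this
  omega
end
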